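/- arXiv:2502.06520 — 3 statements merged into one kernel-verified Lean document; each statement's English description precedes it below -/
import Mathlib

section
/- Let Δ be a simplicial complex with a gradient vector field V. Then for all q ∈ ℕ, the composition of the Morse boundary operators vanishes: ∂_{q−1}^V ∘ ∂_q^V = 0. -/
open scoped Classical

/-- A finite abstract simplicial complex on a linearly ordered vertex type:
a finite nonempty collection of finite subsets closed under taking subsets. -/
structure SComplex (V : Type*) [LinearOrder V] where
  faces : Finset (Finset V)
  nonempty' : faces.Nonempty
  downClosed : ∀ σ ∈ faces, ∀ τ ⊆ σ, τ ∈ faces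

variable {V : Type*} [LinearOrder V]

/-- `Vf` is a discrete vector field on `Δ`: a collection of pairs `(α, β)` of simplices
with `α ⊊ β`, `dim β = dim α + 1`, such that each simplex is in at most one pair. -/
def IsDVF (Δ : SComplex V) (Vf : Finset (Finset V × Finset V)) : Prop :=
  (∀ p ∈ Vf, p.1 ∈ Δ.faces ∧ p.2 ∈ Δ.faces ∧ p.1 ⊂ p.2 ∧ p.2.card = p.1.card + 1) ∧
    ∀ p ∈ Vf, ∀ q ∈ Vf, p ≠ q → p.1 ≠ q.1 ∧ p.1 ≠ q.2 ∧ p.2 ≠ q.1 ∧ p.2 ≠ q.2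

/-- The incidence number `⟨σ, τ⟩`: it is `(-1)^i` if `τ = σ \ {x_i}` where
`x_0 < x_1 < …` are the vertices of `σ`, and `0` otherwise. -/
noncomputable def incidence (σ τ : Finset V) : ℤ :=
  if τ ⊆ σ ∧ (σ \ τ).card = 1 then
    (-1) ^ (σ.filter fun y => ∃ x ∈ σ \ τ, y < x).card
  else 0

/-- A `Vf`-trajectory `β₀, α₁, β₁, …, α_r, β_r` from the `q`-simplex `s` to the
`q`-simplex `t`.  Here the field `α i` denotes `α_{i+1}` and `β i` denotes `β_i`
of the usual description. -/
structure Traj (Δ : SComplex V) (Vf : Finset (Finset V × Finset V)) (q : ℕ)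
    (s t : Finset V) where
  r : ℕ
  β : Fin (r + 1) → Finset V
  α : Fin r → Finset V
  βmem : ∀ i, β i ∈ Δ.faces
  αmem : ∀ i, α i ∈ Δ.faces
  βcard : ∀ i, (β i).card = q + 1
  αcard : ∀ i, (α i).card = q
  first : β 0 = s
  last : β (Fin.last r) = t
  sub : ∀ i : Fin r, α i ⊂ β i.castSucc
  vpair : ∀ i : Fin r, (α i, β i.succ) ∈ Vf
  αne : ∀ i : Fin r, ∀ h : (i : ℕ) + 1 < r, α ⟨(i : ℕ) + 1, h⟩ ≠ α i
  βne : ∀ i : Fin r, β i.succ ≠ β i.castSucc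

/-- A `Vf`-trajectory `β₀, α₁, β₁, …, α_r, β_r, α_{r+1}` from the `q`-simplex `s`
to the `(q-1)`-simplex `t`.  Here `α i` denotes `α_{i+1}` and `β i` denotes `β_i`. -/
structure TrajD (Δ : SComplex V) (Vf : Finset (Finset V × Finset V)) (q : ℕ)
    (s t : Finset V) where
  r : ℕ
  β : Fin (r + 1) → Finset V
  α : Fin (r + 1) → Finset V
  βmem : ∀ i, β i ∈ Δ.faces
  αmem : ∀ i, α i ∈ Δ.faces
  βcard : ∀ i, (β i).card = q + 1
  αcard : ∀ i, (α i).card = q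
  first : β 0 = s
  last : α (Fin.last r) = t
  sub : ∀ i : Fin (r + 1), α i ⊂ β i
  vpair : ∀ i : Fin r, (α i.castSucc, β i.succ) ∈ Vf
  αne : ∀ i : Fin r, α i.succ ≠ α i.castSucc
  βne : ∀ i : Fin r, β i.succ ≠ β i.castSucc

/-- A co-`Vf`-trajectory `β₀, τ₁, β₁, …, τ_r, β_r` from the `q`-simplex `s` to the
`q`-simplex `t`.  Here `γ i` denotes `τ_{i+1}` and `β i` denotes `β_i`. -/
structure CoTraj (Δ : SComplex V) (Vf : Finset (Finset V × Finset V)) (q : ℕ)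
    (s t : Finset V) where
  r : ℕ
  β : Fin (r + 1) → Finset V
  γ : Fin r → Finset V
  βmem : ∀ i, β i ∈ Δ.faces
  γmem : ∀ i, γ i ∈ Δ.faces
  βcard : ∀ i, (β i).card = q + 1
  γcard : ∀ i, (γ i).card = q + 2
  first : β 0 = s
  last : β (Fin.last r) = t
  sub : ∀ i : Fin r, β i.castSucc ⊂ γ i
  vpair : ∀ i : Fin r, (β i.succ, γ i) ∈ Vf
  βne : ∀ i : Fin r, β i.castSucc ≠ β i.succ

/-- A co-`Vf`-trajectory `β₀, τ₁, β₁, …, τ_r, β_r, τ_{r+1}` from the `(q-1)`-simplex `s`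
to the `q`-simplex `t`.  Here `γ i` denotes `τ_{i+1}` and `β i` denotes `β_i`. -/
structure CoTrajU (Δ : SComplex V) (Vf : Finset (Finset V × Finset V)) (q : ℕ)
    (s t : Finset V) where
  r : ℕ
  β : Fin (r + 1) → Finset V
  γ : Fin (r + 1) → Finset V
  βmem : ∀ i, β i ∈ Δ.faces
  γmem : ∀ i, γ i ∈ Δ.faces
  βcard : ∀ i, (β i).card = q
  γcard : ∀ i, (γ i).card = q + 1
  first : β 0 = s
  last : γ (Fin.last r) = t
  sub : ∀ i : Fin (r + 1), β i ⊂ γ i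
  vpair : ∀ i : Fin r, (β i.succ, γ i.castSucc) ∈ Vf
  βne : ∀ i : Fin r, β i.castSucc ≠ β i.succ
  γne : ∀ i : Fin r, γ i.succ ≠ γ i.castSucc

/-- The weight `w(P) = ∏ (-⟨β_{i-1}, α_i⟩⟨β_i, α_i⟩)` of a trajectory between
`q`-simplices. -/
noncomputable def wT {Δ : SComplex V} {Vf : Finset (Finset V × Finset V)} {q : ℕ}
    {s t : Finset V} (P : Traj Δ Vf q s t) : ℤ :=
  ∏ i : Fin P.r, -(incidence (P.β i.castSucc) (P.α i) * incidence (P.β i.succ) (P.α i))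

/-- The weight `w(P) = (∏ (-⟨β_{i-1}, α_i⟩⟨β_i, α_i⟩)) ⬝ ⟨β_r, α_{r+1}⟩` of a trajectory
from a `q`-simplex to a `(q-1)`-simplex. -/
noncomputable def wTD {Δ : SComplex V} {Vf : Finset (Finset V × Finset V)} {q : ℕ}
    {s t : Finset V} (P : TrajD Δ Vf q s t) : ℤ :=
  (∏ i : Fin P.r,
      -(incidence (P.β i.castSucc) (P.α i.castSucc) *
        incidence (P.β i.succ) (P.α i.castSucc))) *
    incidence (P.β (Fin.last P.r)) (P.α (Fin.last P.r))

/-- The weight `w(Q) = ∏ (-⟨τ_i, β_{i-1}⟩⟨τ_i, β_i⟩)` of a co-trajectory between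
`q`-simplices. -/
noncomputable def wCT {Δ : SComplex V} {Vf : Finset (Finset V × Finset V)} {q : ℕ}
    {s t : Finset V} (Q : CoTraj Δ Vf q s t) : ℤ :=
  ∏ i : Fin Q.r, -(incidence (Q.γ i) (Q.β i.castSucc) * incidence (Q.γ i) (Q.β i.succ))

/-- The weight `w(Q) = (∏ (-⟨τ_i, β_{i-1}⟩⟨τ_i, β_i⟩)) ⬝ ⟨τ_{r+1}, β_r⟩` of a co-trajectory
from a `(q-1)`-simplex to a `q`-simplex. -/
noncomputable def wCTU {Δ : SComplex V} {Vf : Finset (Finset V × Finset V)} {q : ℕ}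
    {s t : Finset V} (Q : CoTrajU Δ Vf q s t) : ℤ :=
  (∏ i : Fin Q.r,
      -(incidence (Q.γ i.castSucc) (Q.β i.castSucc) *
        incidence (Q.γ i.castSucc) (Q.β i.succ))) *
    incidence (Q.γ (Fin.last Q.r)) (Q.β (Fin.last Q.r))

/-- A gradient vector field: a discrete vector field admitting no nontrivial closed
trajectory. -/
def IsGVF (Δ : SComplex V) (Vf : Finset (Finset V × Finset V)) : Prop :=
  IsDVF Δ Vf ∧ ¬ ∃ (q : ℕ) (s : Finset V) (P : Traj Δ Vf q s s), 0 < P.r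

/-- `σ` is a critical simplex of `Δ` with respect to `Vf`: a nonempty simplex that either
belongs to no pair of `Vf`, or is a `0`-simplex paired with the empty simplex. -/
def IsCrit (Δ : SComplex V) (Vf : Finset (Finset V × Finset V)) (σ : Finset V) : Prop :=
  σ ∈ Δ.faces ∧ σ.Nonempty ∧
    ((∀ p ∈ Vf, σ ≠ p.1 ∧ σ ≠ p.2) ∨ (σ.card = 1 ∧ (∅, σ) ∈ Vf))

/-- The set of critical simplices of cardinality `c` (i.e. of dimension `c - 1`);
so `Crit_q = critC Δ Vf (q + 1)`. -/
noncomputable def critC (Δ : SComplex V) (Vf : Finset (Finset V × Finset V)) (c : ℕ) :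
    Finset (Finset V) :=
  Δ.faces.filter fun σ => σ.card = c ∧ IsCrit Δ Vf σ

/-- The coefficient of the `(q-1)`-simplex `τ` in `∂_q σ`: the sum of the weights of all
trajectories from `σ` to `τ`. -/
noncomputable def bCoeff (Δ : SComplex V) (Vf : Finset (Finset V × Finset V)) (q : ℕ)
    (σ τ : Finset V) : ℤ :=
  ∑ᶠ P : TrajD Δ Vf q σ τ, wTD P

/-- The `q`-th Morse boundary operator `∂_q`, as an endomorphism of the free abelian group
on all simplices; it sends a critical `q`-simplex `σ` to
`∑_{τ ∈ Crit_{q-1}} (∑_{P : σ ⇝ τ} w(P)) ⬝ τ` and non-critical generators to `0`. -/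
noncomputable def morseBoundary (Δ : SComplex V) (Vf : Finset (Finset V × Finset V))
    (q : ℕ) : (Finset V →₀ ℤ) →ₗ[ℤ] (Finset V →₀ ℤ) :=
  Finsupp.lsum ℤ fun σ => LinearMap.toSpanSingleton ℤ (Finset V →₀ ℤ)
    (if σ ∈ critC Δ Vf (q + 1) then
      ∑ τ ∈ critC Δ Vf q, bCoeff Δ Vf q σ τ • Finsupp.single τ (1 : ℤ)
    else 0)

/-- The coefficient of the `q`-simplex `τ` in `δ_q σ`: the sum of the weights of all
co-trajectories from `σ` to `τ`. -/
noncomputable def cbCoeff (Δ : SComplex V) (Vf : Finset (Finset V × Finset V)) (q : ℕ)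
    (σ τ : Finset V) : ℤ :=
  ∑ᶠ Q : CoTrajU Δ Vf q σ τ, wCTU Q

/-- The `q`-th Morse coboundary operator `δ_q`, as an endomorphism of the free abelian
group on all simplices; it sends a critical `(q-1)`-simplex `σ` to
`∑_{τ ∈ Crit_q} (∑_{Q : σ ⇝ τ} w(Q)) ⬝ τ` and non-critical generators to `0`. -/
noncomputable def morseCoboundary (Δ : SComplex V) (Vf : Finset (Finset V × Finset V))
    (q : ℕ) : (Finset V →₀ ℤ) →ₗ[ℤ] (Finset V →₀ ℤ) :=
  Finsupp.lsum ℤ fun σ => LinearMap.toSpanSingleton ℤ (Finset V →₀ ℤ)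
    (if σ ∈ critC Δ Vf q then
      ∑ τ ∈ critC Δ Vf (q + 1), cbCoeff Δ Vf q σ τ • Finsupp.single τ (1 : ℤ)
    else 0)

/-- The vector field `W = (V \ {(α_i, β_i) : 1 ≤ i ≤ r}) ∪ {(α_{i+1}, β_i) : 0 ≤ i ≤ r}`
obtained by cancelling a pair of critical simplices along the trajectory `P0`. -/
noncomputable def cancelPair {Δ : SComplex V} {Vf : Finset (Finset V × Finset V)} {k : ℕ}
    {σ0 τ0 : Finset V} (P0 : TrajD Δ Vf k σ0 τ0) : Finset (Finset V × Finset V) :=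
  (Vf \ Finset.image (fun i : Fin P0.r => (P0.α i.castSucc, P0.β i.succ)) Finset.univ) ∪
    Finset.image (fun i : Fin (P0.r + 1) => (P0.α i, P0.β i)) Finset.univ

/-- The set of simplices appearing in a trajectory. -/
noncomputable def TrajD.simps {Δ : SComplex V} {Vf : Finset (Finset V × Finset V)} {q : ℕ}
    {s t : Finset V} (P : TrajD Δ Vf q s t) : Finset (Finset V) :=
  Finset.image P.β Finset.univ ∪ Finset.image P.α Finset.univ

/-- The set of simplices appearing in a trajectory. -/
noncomputable def Traj.simps {Δ : SComplex V} {Vf : Finset (Finset V × Finset V)} {q : ℕ}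
    {s t : Finset V} (P : Traj Δ Vf q s t) : Finset (Finset V) :=
  Finset.image P.β Finset.univ ∪ Finset.image P.α Finset.univ

/-- The underlying sequence `β₀, α₁, β₁, …, α_r, β_r, α_{r+1}` of a trajectory. -/
noncomputable def TrajD.seq {Δ : SComplex V} {Vf : Finset (Finset V × Finset V)} {q : ℕ}
    {s t : Finset V} (P : TrajD Δ Vf q s t) : List (Finset V) :=
  (List.ofFn fun i : Fin (P.r + 1) => [P.β i, P.α i]).flatten

/-- The underlying sequence `β₀, α₁, β₁, …, α_r, β_r` of a trajectory. -/
noncomputable def Traj.seq {Δ : SComplex V} {Vf : Finset (Finset V × Finset V)} {q : ℕ}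
    {s t : Finset V} (P : Traj Δ Vf q s t) : List (Finset V) :=
  ((List.ofFn fun i : Fin P.r => [P.β i.castSucc, P.α i]).flatten) ++ [P.β (Fin.last P.r)]

/-- The underlying sequence `β₀, τ₁, β₁, …, β_r, τ_{r+1}` of a co-trajectory. -/
noncomputable def CoTrajU.seq {Δ : SComplex V} {Vf : Finset (Finset V × Finset V)} {q : ℕ}
    {s t : Finset V} (Q : CoTrajU Δ Vf q s t) : List (Finset V) :=
  (List.ofFn fun i : Fin (Q.r + 1) => [Q.β i, Q.γ i]).flatten

variable {Δ : SComplex V} {Vf : Finset (Finset V × Finset V)}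

lemma incidence_ne_zero_iff {σ τ : Finset V} :
    incidence σ τ ≠ 0 ↔ τ ⊆ σ ∧ (σ \ τ).card = 1 := by
  constructor
  · intro h
    by_contra hc
    simp only [incidence, if_neg hc] at h
    exact h rfl
  · intro h
    simp only [incidence, if_pos h]
    positivity

lemma incidence_erase {σ : Finset V} {x : V} (hx : x ∈ σ) :
    incidence σ (σ.erase x) = (-1) ^ ((σ.filter fun y => y < x).card) := by
  have hsd : σ \ σ.erase x = {x} := by
    ext z
    simp only [Finset.mem_sdiff, Finset.mem_erase, Finset.mem_singleton]
    constructor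
    · rintro ⟨hz, hz2⟩
      by_contra hne
      exact hz2 ⟨hne, hz⟩
    · rintro rfl
      exact ⟨hx, fun h => h.1 rfl⟩
  have hss : σ.erase x ⊆ σ := Finset.erase_subset _ _
  rw [incidence, if_pos ⟨hss, by rw [hsd]; rfl⟩]
  congr 2
  apply Finset.filter_congr
  intro y _
  rw [hsd]
  simp

lemma incidence_sq {α β : Finset V} (hsub : α ⊆ β) (hc : β.card = α.card + 1) :
    incidence β α * incidence β α = 1 := by
  have h1 : (β \ α).card = 1 := by
    rw [Finset.card_sdiff_of_subset hsub, hc]; omega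
  rw [incidence, if_pos ⟨hsub, h1⟩, ← pow_add]
  exact Even.neg_one_pow (Even.add_self _)

private lemma d2_aux {σ ρ : Finset V} {x y : V} (hxy : x < y)
    (hρ : ρ ⊆ σ) (hsd : σ \ ρ = {x, y}) :
    incidence σ (σ.erase x) * incidence (σ.erase x) ρ
      + incidence σ (σ.erase y) * incidence (σ.erase y) ρ = 0 := by
  have hx : x ∈ σ := by
    have : x ∈ σ \ ρ := by rw [hsd]; simp
    exact (Finset.mem_sdiff.mp this).1
  have hy : y ∈ σ := by
    have : y ∈ σ \ ρ := by rw [hsd]; simp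
    exact (Finset.mem_sdiff.mp this).1
  have hxρ : x ∉ ρ := by
    have : x ∈ σ \ ρ := by rw [hsd]; simp
    exact (Finset.mem_sdiff.mp this).2
  have hyρ : y ∉ ρ := by
    have : y ∈ σ \ ρ := by rw [hsd]; simp
    exact (Finset.mem_sdiff.mp this).2
  have hρx : ρ = (σ.erase x).erase y := by
    ext z
    simp only [Finset.mem_erase]
    constructor
    · intro hz
      exact ⟨fun h => hyρ (h ▸ hz), fun h => hxρ (h ▸ hz), hρ hz⟩
    · rintro ⟨hzy, hzx, hz⟩
      by_contra hzρ
      have : z ∈ σ \ ρ := Finset.mem_sdiff.mpr ⟨hz, hzρ⟩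
      rw [hsd] at this
      simp only [Finset.mem_insert, Finset.mem_singleton] at this
      tauto
  have hρy : ρ = (σ.erase y).erase x := by
    rw [hρx]; ext z; simp only [Finset.mem_erase]; tauto
  have hyx : y ∈ σ.erase x := Finset.mem_erase.mpr ⟨hxy.ne', hy⟩
  have hxy' : x ∈ σ.erase y := Finset.mem_erase.mpr ⟨hxy.ne, hx⟩
  have t1 : incidence (σ.erase x) ρ = (-1) ^ (((σ.erase x).filter (fun z => z < y)).card) := by
    rw [hρx, incidence_erase hyx]
  have t2 : incidence (σ.erase y) ρ = (-1) ^ (((σ.erase y).filter (fun z => z < x)).card) := by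
    rw [hρy, incidence_erase hxy']
  rw [incidence_erase hx, incidence_erase hy, t1, t2]
  have e1 : (σ.erase x).filter (fun z => z < y) = (σ.filter (fun z => z < y)).erase x := by
    ext z; simp only [Finset.mem_filter, Finset.mem_erase]; tauto
  have e2 : (σ.erase y).filter (fun z => z < x) = σ.filter (fun z => z < x) := by
    ext z
    simp only [Finset.mem_filter, Finset.mem_erase]
    constructor
    · tauto
    · intro ⟨h1, h2⟩
      exact ⟨⟨fun he => absurd (he ▸ h2) (not_lt.mpr hxy.le), h1⟩, h2⟩
  have hxmem : x ∈ σ.filter (fun z => z < y) := Finset.mem_filter.mpr ⟨hx, hxy⟩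
  rw [e1, e2, Finset.card_erase_of_mem hxmem]
  obtain ⟨k, hk⟩ : ∃ k, (σ.filter (fun z => z < y)).card = k + 1 :=
    ⟨_, (Nat.succ_pred_eq_of_pos (Finset.card_pos.mpr ⟨x, hxmem⟩)).symm⟩
  rw [hk]
  simp only [Nat.add_sub_cancel]
  ring

lemma d2_powerset (σ ρ : Finset V) :
    ∑ m ∈ σ.powerset, incidence σ m * incidence m ρ = 0 := by
  by_cases hgood : ρ ⊆ σ ∧ (σ \ ρ).card = 2
  · obtain ⟨hρσ, hcard⟩ := hgood
    obtain ⟨x, y, hxy, hsd⟩ := Finset.card_eq_two.mp hcard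
    -- every nonzero term is erase x or erase y
    have hzero : ∀ m ∈ σ.powerset, m ∉ ({σ.erase x, σ.erase y} : Finset (Finset V)) →
        incidence σ m * incidence m ρ = 0 := by
      intro m _ hm
      by_contra h
      have h1 := incidence_ne_zero_iff.mp (left_ne_zero_of_mul h)
      have h2 := incidence_ne_zero_iff.mp (right_ne_zero_of_mul h)
      obtain ⟨z, hz⟩ := Finset.card_eq_one.mp h1.2
      have hmz : m = σ.erase z := by
        have hzσ : z ∈ σ := by
          have : z ∈ σ \ m := by rw [hz]; simp
          exact (Finset.mem_sdiff.mp this).1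
        ext w
        simp only [Finset.mem_erase]
        constructor
        · intro hw
          refine ⟨fun he => ?_, h1.1 hw⟩
          have : z ∈ σ \ m := by rw [hz]; simp
          exact (Finset.mem_sdiff.mp this).2 (he ▸ hw)
        · rintro ⟨hwz, hwσ⟩
          by_contra hwm
          have : w ∈ σ \ m := Finset.mem_sdiff.mpr ⟨hwσ, hwm⟩
          rw [hz] at this
          exact hwz (Finset.mem_singleton.mp this)
      have hzsd : z ∈ σ \ ρ := by
        refine Finset.mem_sdiff.mpr ⟨?_, ?_⟩
        · have : z ∈ σ \ m := by rw [hz]; simp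
          exact (Finset.mem_sdiff.mp this).1
        · intro hzρ
          have := h2.1 hzρ
          rw [hmz] at this
          exact (Finset.mem_erase.mp this).1 rfl
      rw [hsd] at hzsd
      simp only [Finset.mem_insert, Finset.mem_singleton] at hzsd
      rcases hzsd with rfl | rfl
      · exact hm (by rw [hmz]; simp)
      · exact hm (by rw [hmz]; simp)
    have hsub : ({σ.erase x, σ.erase y} : Finset (Finset V)) ⊆ σ.powerset := by
      intro m hm
      simp only [Finset.mem_insert, Finset.mem_singleton] at hm
      rcases hm with rfl | rfl <;> exact Finset.mem_powerset.mpr (Finset.erase_subset _ _)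
    rw [← Finset.sum_subset hsub (fun m hm h2 => hzero m hm h2)]
    have hx : x ∈ σ := by
      have : x ∈ σ \ ρ := by rw [hsd]; simp
      exact (Finset.mem_sdiff.mp this).1
    have hy : y ∈ σ := by
      have : y ∈ σ \ ρ := by rw [hsd]; simp
      exact (Finset.mem_sdiff.mp this).1
    have hne : σ.erase x ≠ σ.erase y := by
      intro h
      have hxm : x ∈ σ.erase y := Finset.mem_erase.mpr ⟨hxy, hx⟩
      rw [← h] at hxm
      exact (Finset.mem_erase.mp hxm).1 rfl
    rw [Finset.sum_pair hne]
    rcases lt_or_gt_of_ne hxy with h | h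
    · exact d2_aux h hρσ hsd
    · rw [add_comm]
      exact d2_aux h hρσ (by rw [hsd]; exact Finset.pair_comm x y)
  · apply Finset.sum_eq_zero
    intro m _
    by_contra h
    have h1 := incidence_ne_zero_iff.mp (left_ne_zero_of_mul h)
    have h2 := incidence_ne_zero_iff.mp (right_ne_zero_of_mul h)
    apply hgood
    constructor
    · exact h2.1.trans h1.1
    · have c1 : m.card + 1 = σ.card := by
        have := Finset.card_sdiff_of_subset h1.1
        have hle := Finset.card_le_card h1.1
        omega
      have c2 : ρ.card + 1 = m.card := by
        have := Finset.card_sdiff_of_subset h2.1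
        have hle := Finset.card_le_card h2.1
        omega
      rw [Finset.card_sdiff_of_subset (h2.1.trans h1.1)]
      omega

lemma d2_faces {b : Finset V} (hb : b ∈ Δ.faces) (ρ : Finset V) :
    ∑ m ∈ Δ.faces, incidence b m * incidence m ρ = 0 := by
  rw [← d2_powerset b ρ]
  symm
  apply Finset.sum_subset
  · intro m hm
    exact Δ.downClosed b hb m (Finset.mem_powerset.mp hm)
  · intro m _ hm
    have : ¬ m ⊆ b := fun h => hm (Finset.mem_powerset.mpr h)
    rw [incidence, if_neg (fun hc => this hc.1), zero_mul]
lemma pair_eq_of_fst (hV : IsDVF Δ Vf) {p q' : Finset V × Finset V}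
    (hp : p ∈ Vf) (hq : q' ∈ Vf) (h : p.1 = q'.1) : p = q' := by
  by_contra hne
  exact (hV.2 p hp q' hq hne).1 h

lemma pair_eq_of_snd (hV : IsDVF Δ Vf) {p q' : Finset V × Finset V}
    (hp : p ∈ Vf) (hq : q' ∈ Vf) (h : p.2 = q'.2) : p = q' := by
  by_contra hne
  exact (hV.2 p hp q' hq hne).2.2.2 h

lemma fst_ne_snd (hV : IsDVF Δ Vf) {p q' : Finset V × Finset V}
    (hp : p ∈ Vf) (hq : q' ∈ Vf) : p.1 ≠ q'.2 := by
  rcases eq_or_ne p q' with rfl | hne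
  · exact ((hV.1 p hp).2.2.1.ne)
  · exact (hV.2 p hp q' hq hne).2.1

lemma crit_not_fst (hV : IsDVF Δ Vf) {τ : Finset V} (hτ : IsCrit Δ Vf τ)
    {p : Finset V × Finset V} (hp : p ∈ Vf) : τ ≠ p.1 := by
  rcases hτ.2.2 with h | ⟨_, hmem⟩
  · exact (h p hp).1
  · intro he
    exact fst_ne_snd hV hp hmem he.symm

def mkTraj (hV : IsDVF Δ Vf) {q k : ℕ} {s t : Finset V}
    (c : Fin (k + 1) → Finset V) (a : Fin k → Finset V)
    (hs : c 0 = s) (ht : c (Fin.last k) = t)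
    (hc0 : c 0 ∈ Δ.faces) (hcard : ∀ i, (c i).card = q + 1)
    (ha : ∀ i : Fin k, (a i, c i.succ) ∈ Vf) (hsub : ∀ i : Fin k, a i ⊂ c i.castSucc)
    (hne : ∀ i : Fin k, c i.succ ≠ c i.castSucc) : Traj Δ Vf q s t where
  r := k
  β := c
  α := a
  βmem := fun (i : Fin (k+1)) => Fin.cases hc0 (fun j => (hV.1 _ (ha j)).2.1) i
  αmem := fun (i : Fin k) => (hV.1 _ (ha i)).1
  βcard := hcard
  αcard := fun (i : Fin k) => by
    have h1 := (hV.1 _ (ha i)).2.2.2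
    have h2 := hcard i.succ
    simp only at h1
    omega
  first := hs
  last := ht
  sub := hsub
  vpair := ha
  βne := hne
  αne := fun (i : Fin k) h hEq => by
    have h1 := ha i
    have h2 := ha ⟨(i : ℕ) + 1, h⟩
    have h3 := pair_eq_of_fst hV h2 h1 hEq
    have h4 : c (⟨(i : ℕ) + 1, h⟩ : Fin k).succ = c i.succ := congrArg Prod.snd h3
    have h5 : (⟨(i : ℕ) + 1, h⟩ : Fin k).castSucc = i.succ := by
      apply Fin.ext; simp
    exact hne ⟨(i : ℕ) + 1, h⟩ (h4.trans (congrArg c h5).symm)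

lemma trajD_beta_ne (hV : IsGVF Δ Vf) {q : ℕ} {s t : Finset V} (P : TrajD Δ Vf q s t)
    {i j : Fin (P.r + 1)} (hlt : i < j) : P.β i ≠ P.β j := by
  intro hEq
  apply hV.2
  have hij : (i : ℕ) < (j : ℕ) := hlt
  have hj : (j : ℕ) ≤ P.r := Nat.lt_succ_iff.mp j.isLt
  refine ⟨q, P.β i, mkTraj hV.1 (k := (j : ℕ) - (i : ℕ))
    (fun (m : Fin ((j : ℕ) - (i : ℕ) + 1)) => P.β ⟨(i : ℕ) + (m : ℕ), by have := m.isLt; omega⟩)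
    (fun (m : Fin ((j : ℕ) - (i : ℕ))) => P.α ⟨(i : ℕ) + (m : ℕ), by have := m.isLt; omega⟩)
    ?_ ?_ ?_ ?_ ?_ ?_ ?_, Nat.sub_pos_of_lt hij⟩
  · exact congrArg P.β (Fin.ext (by simp))
  · have h6 : ((i : ℕ) + ((j : ℕ) - (i : ℕ))) = (j : ℕ) := by omega
    rw [hEq]
    exact congrArg P.β (Fin.ext (by simpa using h6))
  · exact P.βmem _
  · exact fun m => P.βcard _
  · intro m
    have hm : (i : ℕ) + (m : ℕ) < P.r := by have := m.isLt; omega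
    have := P.vpair ⟨(i : ℕ) + (m : ℕ), hm⟩
    convert this using 3 <;> apply Fin.ext <;> simp [Fin.succ, Fin.castSucc, Fin.castAdd, Fin.castLE] <;> omega
  · intro m
    have hm : (i : ℕ) + (m : ℕ) < P.r + 1 := by have := m.isLt; omega
    have := P.sub ⟨(i : ℕ) + (m : ℕ), hm⟩
    convert this using 2 <;> apply Fin.ext <;> simp [Fin.castSucc, Fin.castAdd, Fin.castLE]
  · intro m
    have hm : (i : ℕ) + (m : ℕ) < P.r := by have := m.isLt; omega
    have := P.βne ⟨(i : ℕ) + (m : ℕ), hm⟩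
    convert this using 2 <;> apply Fin.ext <;> simp [Fin.succ, Fin.castSucc, Fin.castAdd, Fin.castLE] <;> omega

lemma trajD_beta_inj (hV : IsGVF Δ Vf) {q : ℕ} {s t : Finset V} (P : TrajD Δ Vf q s t) :
    Function.Injective P.β := by
  intro i j hEq
  rcases lt_trichotomy i j with h | h | h
  · exact absurd hEq (trajD_beta_ne hV P h)
  · exact h
  · exact absurd hEq.symm (trajD_beta_ne hV P h)

lemma trajD_r_lt (hV : IsGVF Δ Vf) {q : ℕ} {s t : Finset V} (P : TrajD Δ Vf q s t) :
    P.r < Δ.faces.card := by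
  have : Fintype.card (Fin (P.r + 1)) ≤ Fintype.card {x // x ∈ Δ.faces} :=
    Fintype.card_le_of_injective (fun i => ⟨P.β i, P.βmem i⟩)
      (fun i j h => trajD_beta_inj hV P (congrArg Subtype.val h))
  simpa [Fintype.card_coe] using this

lemma TrajD.ext' {q : ℕ} {s t : Finset V} {P P' : TrajD Δ Vf q s t} (hr : P.r = P'.r)
    (hβ : ∀ n : ℕ, ∀ hn : n < P.r + 1, ∀ hn' : n < P'.r + 1, P.β ⟨n, hn⟩ = P'.β ⟨n, hn'⟩)
    (hα : ∀ n : ℕ, ∀ hn : n < P.r + 1, ∀ hn' : n < P'.r + 1, P.α ⟨n, hn⟩ = P'.α ⟨n, hn'⟩) :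
    P = P' := by
  cases P with | mk r β α βm αm βc αc fi la su vp an bn =>
  cases P' with | mk r' β' α' βm' αm' βc' αc' fi' la' su' vp' an' bn' =>
  simp only at hr hβ hα
  subst hr
  have hβf : β = β' := funext fun i => by
    have := hβ (i : ℕ) i.isLt i.isLt
    simpa using this
  have hαf : α = α' := funext fun i => by
    have := hα (i : ℕ) i.isLt i.isLt
    simpa using this
  subst hβf; subst hαf
  rfl

lemma trajD_finite (hV : IsGVF Δ Vf) (q : ℕ) (s t : Finset V) :
    Finite (TrajD Δ Vf q s t) := by
  apply Finite.of_injective (f := fun P : TrajD Δ Vf q s t =>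
    (⟨⟨P.r, trajD_r_lt hV P⟩, fun i => ⟨P.β i, P.βmem i⟩, fun i => ⟨P.α i, P.αmem i⟩⟩ :
      Σ r : Fin Δ.faces.card, (Fin ((r : ℕ) + 1) → {x // x ∈ Δ.faces}) ×
        (Fin ((r : ℕ) + 1) → {x // x ∈ Δ.faces})))
  intro P P' h
  have hr : P.r = P'.r := by simpa using congrArg (fun x => ((x.1 : ℕ))) h
  apply TrajD.ext' hr
  · intro n hn hn'
    have := congrArg (fun x : (Σ r : Fin Δ.faces.card,
        (Fin ((r : ℕ) + 1) → {x // x ∈ Δ.faces}) × (Fin ((r : ℕ) + 1) → {x // x ∈ Δ.faces})) =>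
      if h : n < (x.1 : ℕ) + 1 then ((x.2.1 ⟨n, h⟩ : {x // x ∈ Δ.faces}) : Finset V) else ∅) h
    simp only at this
    rwa [dif_pos hn, dif_pos hn'] at this
  · intro n hn hn'
    have := congrArg (fun x : (Σ r : Fin Δ.faces.card,
        (Fin ((r : ℕ) + 1) → {x // x ∈ Δ.faces}) × (Fin ((r : ℕ) + 1) → {x // x ∈ Δ.faces})) =>
      if h : n < (x.1 : ℕ) + 1 then ((x.2.2 ⟨n, h⟩ : {x // x ∈ Δ.faces}) : Finset V) else ∅) h
    simp only at this
    rwa [dif_pos hn, dif_pos hn'] at this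

lemma bCoeff_ne_zero {q : ℕ} {s t : Finset V} (h : bCoeff Δ Vf q s t ≠ 0) :
    s ∈ Δ.faces ∧ s.card = q + 1 := by
  by_contra hc
  apply h
  have : IsEmpty (TrajD Δ Vf q s t) :=
    ⟨fun P => hc ⟨P.first ▸ P.βmem 0, P.first ▸ P.βcard 0⟩⟩
  exact finsum_of_isEmpty _
noncomputable def gmat (Δ : SComplex V) (Vf : Finset (Finset V × Finset V))
    (b b' : Finset V) : ℤ :=
  if b' = b then 0
  else ∑ α ∈ b.powerset, if (α, b') ∈ Vf then -(incidence b α * incidence b' α) else 0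

lemma gmat_eval (hV : IsDVF Δ Vf) {α0 b b' : Finset V} (hp : (α0, b') ∈ Vf)
    (hne : b' ≠ b) : gmat Δ Vf b b' = -(incidence b α0 * incidence b' α0) := by
  rw [gmat, if_neg hne]
  rw [show -(incidence b α0 * incidence b' α0) =
    (if (α0, b') ∈ Vf then -(incidence b α0 * incidence b' α0) else 0) from (if_pos hp).symm]
  apply Finset.sum_eq_single
  · intro β _ hβ
    rw [if_neg]
    intro hβp
    exact hβ (congrArg Prod.fst (pair_eq_of_snd hV hβp hp rfl))
  · intro h0
    rw [if_pos hp]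
    have : ¬ α0 ⊆ b := fun hs => h0 (Finset.mem_powerset.mpr hs)
    rw [incidence, if_neg (fun hc => this hc.1)]
    ring

lemma gmat_ne_zero {b b' : Finset V} (h : gmat Δ Vf b b' ≠ 0) :
    b' ≠ b ∧ ∃ α, (α, b') ∈ Vf ∧ α ⊆ b ∧ incidence b α ≠ 0 ∧ incidence b' α ≠ 0 := by
  rw [gmat] at h
  split_ifs at h with he
  · exact absurd rfl h
  · refine ⟨he, ?_⟩
    obtain ⟨α, hα, hne⟩ := Finset.exists_ne_zero_of_sum_ne_zero h
    rw [Finset.mem_powerset] at hα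
    split_ifs at hne with hp
    · have h1 : incidence b α ≠ 0 := fun hz => hne (by rw [hz]; ring)
      have h2 : incidence b' α ≠ 0 := fun hz => hne (by rw [hz]; ring)
      exact ⟨α, hp, hα, h1, h2⟩
    · exact absurd rfl hne

lemma gmat_card (hV : IsDVF Δ Vf) {b b' : Finset V} (h : gmat Δ Vf b b' ≠ 0) :
    b' ∈ Δ.faces ∧ b'.card = b.card := by
  obtain ⟨hne, α, hp, hsub, h1, h2⟩ := gmat_ne_zero h
  have hd := (hV.1 _ hp).2.2.2
  have hc1 := (incidence_ne_zero_iff.mp h1).2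
  have hle := Finset.card_le_card hsub
  have := Finset.card_sdiff_of_subset hsub
  refine ⟨(hV.1 _ hp).2.1, ?_⟩
  simp only at hd
  omega

/-- The forward edge relation of the `gmat` digraph, on faces. -/
private def Erel (Δ : SComplex V) (Vf : Finset (Finset V × Finset V))
    (x y : {s // s ∈ Δ.faces}) : Prop := gmat Δ Vf x.1 y.1 ≠ 0

private lemma transGen_path {x y : {s // s ∈ Δ.faces}}
    (h : Relation.TransGen (Erel Δ Vf) x y) :
    ∃ k : ℕ, ∃ c : Fin (k + 2) → {s // s ∈ Δ.faces}, c 0 = x ∧ c (Fin.last (k + 1)) = y ∧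
      ∀ i : Fin (k + 1), Erel Δ Vf (c i.castSucc) (c i.succ) := by
  induction h with
  | @single b h =>
    refine ⟨0, Fin.cons x (fun _ => b), Fin.cons_zero _ _, ?_, ?_⟩
    · have hl : (Fin.last (0 + 1)) = (0 : Fin 1).succ := by apply Fin.ext; simp
      rw [hl, Fin.cons_succ]
    · intro i
      have hi : i = 0 := Fin.fin_one_eq_zero i
      subst hi
      simpa using h
  | @tail b c' h1 h2 ih =>
    obtain ⟨k, c, hc0, hclast, hedge⟩ := ih
    refine ⟨k + 1, Fin.snoc c c', ?_, ?_, ?_⟩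
    · rw [show (0 : Fin (k + 3)) = Fin.castSucc 0 by rfl, Fin.snoc_castSucc, hc0]
    · exact Fin.snoc_last _ _
    · intro i
      by_cases hik : (i : ℕ) < k + 1
      · have e1 : i.castSucc = Fin.castSucc ((⟨(i : ℕ), hik⟩ : Fin (k + 1)).castSucc) := by
          apply Fin.ext; simp
        have e2 : i.succ = Fin.castSucc ((⟨(i : ℕ), hik⟩ : Fin (k + 1)).succ) := by
          apply Fin.ext; simp
        rw [e1, e2, Fin.snoc_castSucc, Fin.snoc_castSucc]
        exact hedge _
      · have hik2 : (i : ℕ) = k + 1 := by have := i.isLt; omega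
        have e1 : i.castSucc = Fin.castSucc (Fin.last (k + 1)) := by
          apply Fin.ext; simp [hik2]
        have e2 : i.succ = Fin.last (k + 2) := by
          apply Fin.ext; simp [hik2]
        rw [e1, e2, Fin.snoc_castSucc, Fin.snoc_last, hclast]
        exact h2

private lemma no_cycle (hV : IsGVF Δ Vf) (x : {s // s ∈ Δ.faces}) :
    ¬ Relation.TransGen (Erel Δ Vf) x x := by
  intro h
  obtain ⟨k, c, hc0, hclast, hedge⟩ := transGen_path h
  -- choose the α's
  have hα : ∀ i : Fin (k + 1), ∃ α, (α, (c i.succ).1) ∈ Vf ∧ α ⊆ (c i.castSucc).1 ∧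
      incidence (c i.castSucc).1 α ≠ 0 ∧ incidence (c i.succ).1 α ≠ 0 :=
    fun i => (gmat_ne_zero (hedge i)).2
  choose a ha hasub hainc hainc' using hα
  -- cards are constant
  have hq : 1 ≤ ((c 0).1).card := by
    have h1 := (incidence_ne_zero_iff.mp (hainc 0)).2
    have h2 := Finset.card_sdiff_of_subset (hasub 0)
    have he : (Fin.castSucc (0 : Fin (k + 1))) = (0 : Fin (k + 2)) := rfl
    rw [he] at h1 h2
    have hle := Finset.card_le_card (hasub 0)
    rw [he] at hle
    omega
  set q : ℕ := ((c 0).1).card - 1 with hqdef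
  have hcard : ∀ i : Fin (k + 2), ((c i).1).card = q + 1 := by
    intro i
    induction i using Fin.induction with
    | zero => omega
    | succ j ih =>
      have h1 := (incidence_ne_zero_iff.mp (hainc j)).2
      have h2 := Finset.card_sdiff_of_subset (hasub j)
      have h3 := (hV.1.1 _ (ha j)).2.2.2
      have hle := Finset.card_le_card (hasub j)
      simp only at h3
      omega
  apply hV.2
  refine ⟨q, (c 0).1, mkTraj hV.1 (k := k + 1) (fun i => (c i).1) a rfl ?_ (c 0).2 hcard
    ha ?_ ?_, Nat.succ_pos k⟩
  · exact congrArg Subtype.val (hclast.trans hc0.symm)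
  · intro i
    have h1 := (incidence_ne_zero_iff.mp (hainc i)).2
    refine lt_of_le_of_ne (hasub i) ?_
    intro heq
    rw [heq] at h1
    simp at h1
  · intro i
    have := (gmat_ne_zero (hedge i)).1
    exact this

lemma gmat_fixed_zero (hV : IsGVF Δ Vf) (x : Finset V → ℤ)
    (hx : ∀ b ∈ Δ.faces, x b = ∑ b' ∈ Δ.faces, gmat Δ Vf b b' * x b') :
    ∀ b ∈ Δ.faces, x b = 0 := by
  have hirr : IsIrrefl {s // s ∈ Δ.faces}
      (Relation.TransGen (Function.swap (Erel Δ Vf))) := by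
    constructor
    intro a ha
    exact no_cycle hV a (by rwa [Relation.transGen_swap] at ha)
  have hwf : WellFounded (Function.swap (Erel Δ Vf)) :=
    Subrelation.wf (fun h => Relation.TransGen.single h)
      (Finite.wellFounded_of_trans_of_irrefl _)
  intro b hb
  refine hwf.induction (C := fun bF => x bF.1 = 0) (⟨b, hb⟩ : {s // s ∈ Δ.faces}) ?_
  intro bF ih
  rw [hx bF.1 bF.2]
  apply Finset.sum_eq_zero
  intro b' hb'
  by_cases hz : gmat Δ Vf bF.1 b' = 0
  · rw [hz, zero_mul]
  · rw [ih ⟨b', hb'⟩ hz, mul_zero]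
def zeroTrajD {q : ℕ} {σ τ : Finset V} (hσ : σ ∈ Δ.faces) (hσc : σ.card = q + 1)
    (hτc : τ.card = q) (h : τ ⊂ σ) : TrajD Δ Vf q σ τ where
  r := 0
  β := fun _ => σ
  α := fun _ => τ
  βmem := fun _ => hσ
  αmem := fun _ => Δ.downClosed σ hσ τ h.subset
  βcard := fun _ => hσc
  αcard := fun _ => hτc
  first := rfl
  last := rfl
  sub := fun _ => h
  vpair := fun i => i.elim0
  αne := fun i => i.elim0
  βne := fun i => i.elim0

def consTrajD (hV : IsDVF Δ Vf) {q : ℕ} {σ τ α0 β1 : Finset V} (hτ : IsCrit Δ Vf τ)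
    (hp : (α0, β1) ∈ Vf) (hsub : α0 ⊂ σ) (hne : β1 ≠ σ)
    (hσ : σ ∈ Δ.faces) (hσc : σ.card = q + 1)
    (P : TrajD Δ Vf q β1 τ) : TrajD Δ Vf q σ τ where
  r := P.r + 1
  β := Fin.cases σ P.β
  α := Fin.cases α0 P.α
  βmem := fun i => by
    induction i using Fin.cases with
    | zero => simpa using hσ
    | succ j => simpa using P.βmem j
  αmem := fun i => by
    induction i using Fin.cases with
    | zero => simpa using (hV.1 _ hp).1
    | succ j => simpa using P.αmem j
  βcard := fun i => by
    induction i using Fin.cases with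
    | zero => simpa using hσc
    | succ j => simpa using P.βcard j
  αcard := fun i => by
    induction i using Fin.cases with
    | zero =>
      have h1 := (hV.1 _ hp).2.2.2
      have h2 := P.βcard 0
      rw [P.first] at h2
      simp only at h1
      simpa using by omega
    | succ j => simpa using P.αcard j
  first := by simp
  last := by
    rw [← Fin.succ_last]
    rw [Fin.cases_succ]; exact P.last
  sub := fun i => by
    induction i using Fin.cases with
    | zero => simpa using hsub
    | succ j => simpa using P.sub j
  vpair := fun i => by
    induction i using Fin.cases with
    | zero =>
      simp only [Fin.castSucc_zero, Fin.cases_zero]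
      have h2 : ((0 : Fin (P.r + 1)).succ : Fin (P.r + 2)) = (0 : Fin (P.r + 1)).succ := rfl
      rw [show (Fin.cases σ P.β ((0 : Fin (P.r + 1)).succ) : Finset V) = P.β 0
        from Fin.cases_succ _, P.first]
      exact hp
    | succ j =>
      rw [← Fin.succ_castSucc]
      simpa using P.vpair j
  αne := fun i => by
    induction i using Fin.cases with
    | zero =>
      simp only [Fin.castSucc_zero, Fin.cases_zero, Fin.cases_succ]
      intro hEq
      by_cases hr : P.r = 0
      · have hl : Fin.last P.r = (0 : Fin (P.r + 1)) := Fin.ext (by simp [hr])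
        have hτ0 : P.α 0 = τ := by rw [← hl]; exact P.last
        exact crit_not_fst hV hτ hp (by rw [← hτ0, hEq])
      · have h0 : (0 : ℕ) < P.r := Nat.pos_of_ne_zero hr
        have hv := P.vpair ⟨0, h0⟩
        have hc : (⟨0, h0⟩ : Fin P.r).castSucc = (0 : Fin (P.r + 1)) := Fin.ext (by simp)
        rw [hc, hEq] at hv
        have := pair_eq_of_fst hV hv hp rfl
        have hb : P.β (⟨0, h0⟩ : Fin P.r).succ = β1 := congrArg Prod.snd this
        have hb0 : P.β (⟨0, h0⟩ : Fin P.r).castSucc = β1 := by rw [hc, P.first]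
        exact P.βne ⟨0, h0⟩ (hb.trans hb0.symm)
    | succ j =>
      rw [← Fin.succ_castSucc]
      simpa using P.αne j
  βne := fun i => by
    induction i using Fin.cases with
    | zero =>
      simp only [Fin.castSucc_zero, Fin.cases_zero]
      rw [show (Fin.cases σ P.β ((0 : Fin (P.r + 1)).succ) : Finset V) = P.β 0
        from Fin.cases_succ _, P.first]
      exact hne
    | succ j =>
      rw [← Fin.succ_castSucc]
      simpa using P.βne j

lemma wTD_zero {q : ℕ} {σ τ : Finset V} (hσ : σ ∈ Δ.faces) (hσc : σ.card = q + 1)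
    (hτc : τ.card = q) (h : τ ⊂ σ) :
    wTD (zeroTrajD (Vf := Vf) hσ hσc hτc h) = incidence σ τ := by
  rw [wTD]
  exact one_mul _

lemma wTD_cons (hV : IsDVF Δ Vf) {q : ℕ} {σ τ α0 β1 : Finset V} (hτ : IsCrit Δ Vf τ)
    (hp : (α0, β1) ∈ Vf) (hsub : α0 ⊂ σ) (hne : β1 ≠ σ)
    (hσ : σ ∈ Δ.faces) (hσc : σ.card = q + 1) (P : TrajD Δ Vf q β1 τ) :
    wTD (consTrajD hV hτ hp hsub hne hσ hσc P)
      = -(incidence σ α0 * incidence β1 α0) * wTD P := by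
  rw [wTD, wTD]
  show (∏ i : Fin (P.r + 1),
      -(incidence (Fin.cases σ P.β i.castSucc) (Fin.cases α0 P.α i.castSucc) *
        incidence (Fin.cases σ P.β i.succ) (Fin.cases α0 P.α i.castSucc))) *
      incidence (Fin.cases σ P.β (Fin.last (P.r + 1)))
        (Fin.cases α0 P.α (Fin.last (P.r + 1))) = _
  rw [Fin.prod_univ_succ, ← Fin.succ_last, Fin.cases_succ, Fin.cases_succ]
  simp only [Fin.castSucc_zero, Fin.cases_zero, ← Fin.succ_castSucc, Fin.cases_succ, P.first]
  ring
noncomputable def TrajD.βN {q : ℕ} {s t : Finset V} (P : TrajD Δ Vf q s t) (n : ℕ) :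
    Finset V := if h : n < P.r + 1 then P.β ⟨n, h⟩ else ∅

noncomputable def TrajD.αN {q : ℕ} {s t : Finset V} (P : TrajD Δ Vf q s t) (n : ℕ) :
    Finset V := if h : n < P.r + 1 then P.α ⟨n, h⟩ else ∅

lemma TrajD.ext_N {q : ℕ} {s t : Finset V} {P P' : TrajD Δ Vf q s t} (hr : P.r = P'.r)
    (hβ : ∀ n, P.βN n = P'.βN n) (hα : ∀ n, P.αN n = P'.αN n) : P = P' := by
  apply TrajD.ext' hr
  · intro n hn hn'
    have := hβ n
    unfold TrajD.βN at this
    rwa [dif_pos hn, dif_pos hn'] at this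
  · intro n hn hn'
    have := hα n
    unfold TrajD.αN at this
    rwa [dif_pos hn, dif_pos hn'] at this

lemma TrajD.βN_zero {q : ℕ} {s t : Finset V} (P : TrajD Δ Vf q s t) : P.βN 0 = s := by
  unfold TrajD.βN
  rw [dif_pos (Nat.succ_pos _), Fin.mk_zero]
  exact P.first

lemma consTrajD_r (hV : IsDVF Δ Vf) {q : ℕ} {σ τ α0 β1 : Finset V} (hτ : IsCrit Δ Vf τ)
    (hp : (α0, β1) ∈ Vf) (hsub : α0 ⊂ σ) (hne : β1 ≠ σ)
    (hσ : σ ∈ Δ.faces) (hσc : σ.card = q + 1) (P : TrajD Δ Vf q β1 τ) :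
    (consTrajD hV hτ hp hsub hne hσ hσc P).r = P.r + 1 := rfl

lemma consTrajD_βN_succ (hV : IsDVF Δ Vf) {q : ℕ} {σ τ α0 β1 : Finset V}
    (hτ : IsCrit Δ Vf τ) (hp : (α0, β1) ∈ Vf) (hsub : α0 ⊂ σ) (hne : β1 ≠ σ)
    (hσ : σ ∈ Δ.faces) (hσc : σ.card = q + 1) (P : TrajD Δ Vf q β1 τ) (n : ℕ) :
    (consTrajD hV hτ hp hsub hne hσ hσc P).βN (n + 1) = P.βN n := by
  unfold TrajD.βN
  show (if h : n + 1 < P.r + 1 + 1 then (Fin.cases σ P.β ⟨n + 1, h⟩ : Finset V) else ∅) = _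
  by_cases h : n < P.r + 1
  · rw [dif_pos (by omega : n + 1 < P.r + 1 + 1), dif_pos h]
    exact Fin.cases_succ' _
  · rw [dif_neg (by omega), dif_neg h]

lemma consTrajD_αN_succ (hV : IsDVF Δ Vf) {q : ℕ} {σ τ α0 β1 : Finset V}
    (hτ : IsCrit Δ Vf τ) (hp : (α0, β1) ∈ Vf) (hsub : α0 ⊂ σ) (hne : β1 ≠ σ)
    (hσ : σ ∈ Δ.faces) (hσc : σ.card = q + 1) (P : TrajD Δ Vf q β1 τ) (n : ℕ) :
    (consTrajD hV hτ hp hsub hne hσ hσc P).αN (n + 1) = P.αN n := by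
  unfold TrajD.αN
  show (if h : n + 1 < P.r + 1 + 1 then (Fin.cases α0 P.α ⟨n + 1, h⟩ : Finset V) else ∅) = _
  by_cases h : n < P.r + 1
  · rw [dif_pos (by omega : n + 1 < P.r + 1 + 1), dif_pos h]
    exact Fin.cases_succ' _
  · rw [dif_neg (by omega), dif_neg h]

lemma consTrajD_αN_zero (hV : IsDVF Δ Vf) {q : ℕ} {σ τ α0 β1 : Finset V}
    (hτ : IsCrit Δ Vf τ) (hp : (α0, β1) ∈ Vf) (hsub : α0 ⊂ σ) (hne : β1 ≠ σ)
    (hσ : σ ∈ Δ.faces) (hσc : σ.card = q + 1) (P : TrajD Δ Vf q β1 τ) :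
    (consTrajD hV hτ hp hsub hne hσ hσc P).αN 0 = α0 := by
  unfold TrajD.αN
  rw [dif_pos (Nat.succ_pos _), Fin.mk_zero]
  show (Fin.cases α0 P.α (0 : Fin (P.r + 1 + 1)) : Finset V) = α0
  exact Fin.cases_zero

lemma TrajD.βN_eq {q : ℕ} {s t : Finset V} (P : TrajD Δ Vf q s t) {n : ℕ}
    (hn : n < P.r + 1) : P.βN n = P.β ⟨n, hn⟩ := dif_pos hn

lemma TrajD.βN_neg {q : ℕ} {s t : Finset V} (P : TrajD Δ Vf q s t) {n : ℕ}
    (hn : ¬ n < P.r + 1) : P.βN n = ∅ := dif_neg hn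

lemma TrajD.αN_eq {q : ℕ} {s t : Finset V} (P : TrajD Δ Vf q s t) {n : ℕ}
    (hn : n < P.r + 1) : P.αN n = P.α ⟨n, hn⟩ := dif_pos hn

lemma TrajD.αN_neg {q : ℕ} {s t : Finset V} (P : TrajD Δ Vf q s t) {n : ℕ}
    (hn : ¬ n < P.r + 1) : P.αN n = ∅ := dif_neg hn
lemma incidence_ssubset {σ τ : Finset V} (h : incidence σ τ ≠ 0) : τ ⊂ σ := by
  obtain ⟨hss, hcd⟩ := incidence_ne_zero_iff.mp h
  refine lt_of_le_of_ne hss ?_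
  intro he
  rw [he] at hcd
  simp at hcd

lemma bCoeff_rec (hV : IsGVF Δ Vf) {q : ℕ} {σ τ : Finset V} (hσ : σ ∈ Δ.faces)
    (hτ : IsCrit Δ Vf τ) (hτc : τ.card = q) :
    bCoeff Δ Vf q σ τ = incidence σ τ + ∑ b ∈ Δ.faces, gmat Δ Vf σ b * bCoeff Δ Vf q b τ := by
  by_cases hσc : σ.card = q + 1
  case neg =>
    have h1 : bCoeff Δ Vf q σ τ = 0 := by
      by_contra h; exact hσc (bCoeff_ne_zero h).2
    have h2 : incidence σ τ = 0 := by
      by_contra h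
      obtain ⟨hss, hcd⟩ := incidence_ne_zero_iff.mp h
      have h3 := Finset.card_sdiff_of_subset hss
      have h4 := Finset.card_le_card hss
      omega
    rw [h1, h2, zero_add]
    symm
    apply Finset.sum_eq_zero
    intro b _
    by_cases hb : bCoeff Δ Vf q b τ = 0
    · rw [hb, mul_zero]
    · by_cases hg : gmat Δ Vf σ b = 0
      · rw [hg, zero_mul]
      · exfalso
        have hbc := (bCoeff_ne_zero hb).2
        have hc2 := (gmat_card hV.1 hg).2
        omega
  case pos =>
  letI : Fintype (TrajD Δ Vf q σ τ) := @Fintype.ofFinite _ (trajD_finite hV q σ τ)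
  set Vσ : Finset (Finset V × Finset V) := Vf.filter (fun P => P.1 ⊂ σ ∧ P.2 ≠ σ) with hVσ
  letI : ∀ s : {P // P ∈ Vσ}, Fintype (TrajD Δ Vf q s.1.2 τ) :=
    fun s => @Fintype.ofFinite _ (trajD_finite hV q _ τ)
  letI : Fintype (PLift (τ ⊂ σ)) := Fintype.ofFinite _
  have hVf : ∀ s : {P // P ∈ Vσ}, (s.1.1, s.1.2) ∈ Vf := fun s => by
    have h := (Finset.mem_filter.mp s.2).1
    rwa [Prod.mk.eta]
  have hVsub : ∀ s : {P // P ∈ Vσ}, s.1.1 ⊂ σ := fun s => (Finset.mem_filter.mp s.2).2.1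
  have hVne : ∀ s : {P // P ∈ Vσ}, s.1.2 ≠ σ := fun s => (Finset.mem_filter.mp s.2).2.2
  have main := Fintype.sum_bijective
    (e := Sum.elim (fun h : PLift (τ ⊂ σ) => zeroTrajD (Vf := Vf) hσ hσc hτc h.down)
      (fun y : Σ s : {P // P ∈ Vσ}, TrajD Δ Vf q s.1.2 τ =>
        consTrajD hV.1 hτ (hVf y.1) (hVsub y.1) (hVne y.1) hσ hσc y.2))
    ?bij
    (Sum.elim (fun _ => incidence σ τ)
      (fun y => -(incidence σ y.1.1.1 * incidence y.1.1.2 y.1.1.1) * wTD y.2))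
    wTD ?compat
  case compat =>
    rintro (h | ⟨s, P⟩)
    · simp only [Sum.elim_inl]
      exact (wTD_zero hσ hσc hτc h.down).symm
    · simp only [Sum.elim_inr]
      exact (wTD_cons hV.1 hτ (hVf s) (hVsub s) (hVne s) hσ hσc P).symm
  case bij =>
    constructor
    · -- injective
      rintro (h1 | ⟨s1, P1⟩) (h2 | ⟨s2, P2⟩) h <;>
        simp only [Sum.elim_inl, Sum.elim_inr] at h
      · exact congrArg Sum.inl (Subsingleton.elim _ _)
      · exfalso
        have hcr := congrArg TrajD.r h
        simp only [zeroTrajD, consTrajD] at hcr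
        omega
      · exfalso
        have hcr := congrArg TrajD.r h
        simp only [zeroTrajD, consTrajD] at hcr
        omega
      · have hs12 : s1.1.2 = s2.1.2 := by
          have h1 := congrArg (fun T => TrajD.βN T 1) h
          rw [consTrajD_βN_succ, consTrajD_βN_succ, TrajD.βN_zero, TrajD.βN_zero] at h1
          exact h1
        have hs11 : s1.1.1 = s2.1.1 := by
          have h1 := congrArg (fun T => TrajD.αN T 0) h
          rwa [consTrajD_αN_zero, consTrajD_αN_zero] at h1
        have hs : s1 = s2 := Subtype.ext (Prod.ext hs11 hs12)
        subst hs
        have hr : P1.r = P2.r := by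
          have h1 := congrArg TrajD.r h
          simp only [consTrajD] at h1
          omega
        have hβ : ∀ n, P1.βN n = P2.βN n := fun n => by
          have h1 := congrArg (fun T => TrajD.βN T (n + 1)) h
          rwa [consTrajD_βN_succ, consTrajD_βN_succ] at h1
        have hα : ∀ n, P1.αN n = P2.αN n := fun n => by
          have h1 := congrArg (fun T => TrajD.αN T (n + 1)) h
          rwa [consTrajD_αN_succ, consTrajD_αN_succ] at h1
        have hP : P1 = P2 := TrajD.ext_N hr hβ hα
        subst hP
        rfl
    · -- surjective
      intro P
      obtain ⟨r, β, α, βm, αm, βc, αc, fi, la, su, vp, an, bn⟩ := P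
      cases r with
      | zero =>
        have hla : α 0 = τ := by
          rw [← la]
          exact congrArg α (Fin.fin_one_eq_zero _).symm
        have hts : τ ⊂ σ := by
          have h1 := su 0
          rw [hla, fi] at h1
          exact h1
        refine ⟨Sum.inl ⟨hts⟩, ?_⟩
        simp only [Sum.elim_inl]
        apply TrajD.ext_N
        · rfl
        · intro n
          cases n with
          | zero => rw [TrajD.βN_zero, TrajD.βN_zero]
          | succ j =>
            rw [TrajD.βN_neg _ (by omega : ¬ j + 1 < 0 + 1),
              TrajD.βN_neg _ (by omega : ¬ j + 1 < 0 + 1)]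
        · intro n
          cases n with
          | zero =>
            rw [TrajD.αN_eq _ (by omega : 0 < 0 + 1), TrajD.αN_eq _ (by omega : 0 < 0 + 1)]
            rw [Fin.mk_zero]
            exact hla.symm
          | succ j =>
            rw [TrajD.αN_neg _ (by omega : ¬ j + 1 < 0 + 1),
              TrajD.αN_neg _ (by omega : ¬ j + 1 < 0 + 1)]
      | succ m =>
        have hv0' : (α 0, β 1) ∈ Vf := by
          have h1 := vp 0
          rwa [Fin.castSucc_zero, Fin.succ_zero_eq_one] at h1
        have hsu0 : α 0 ⊂ σ := by
          have h1 := su 0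
          rwa [fi] at h1
        have hbn0 : β 1 ≠ σ := by
          have h1 := bn 0
          rwa [Fin.castSucc_zero, Fin.succ_zero_eq_one, fi] at h1
        have hmem : (α 0, β 1) ∈ Vσ := Finset.mem_filter.mpr ⟨hv0', hsu0, hbn0⟩
        refine ⟨Sum.inr ⟨⟨(α 0, β 1), hmem⟩,
          ⟨m, fun i => β i.succ, fun i => α i.succ, fun i => βm i.succ, fun i => αm i.succ,
            fun i => βc i.succ, fun i => αc i.succ, ?_, ?_, fun i => su i.succ, ?_, ?_, ?_⟩⟩, ?_⟩
        · show β (Fin.succ 0) = β 1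
          rw [Fin.succ_zero_eq_one]
        · show α ((Fin.last m).succ) = τ
          rw [Fin.succ_last]; exact la
        · intro i
          have h1 := vp i.succ
          rwa [← Fin.succ_castSucc] at h1
        · intro i
          have h1 := an i.succ
          rwa [← Fin.succ_castSucc] at h1
        · intro i
          have h1 := bn i.succ
          rwa [← Fin.succ_castSucc] at h1
        · simp only [Sum.elim_inr]
          apply TrajD.ext_N
          · rfl
          · intro n
            cases n with
            | zero => rw [TrajD.βN_zero, TrajD.βN_zero]
            | succ j =>
              rw [consTrajD_βN_succ]
              by_cases hj : j < m + 1
              · rw [TrajD.βN_eq _ hj, TrajD.βN_eq _ (show j + 1 < m + 1 + 1 by omega)]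
                exact congrArg β (Fin.ext rfl)
              · rw [TrajD.βN_neg _ hj,
                  TrajD.βN_neg _ (show ¬ j + 1 < m + 1 + 1 by omega)]
          · intro n
            cases n with
            | zero =>
              rw [consTrajD_αN_zero, TrajD.αN_eq _ (show 0 < m + 1 + 1 by omega), Fin.mk_zero]
            | succ j =>
              rw [consTrajD_αN_succ]
              by_cases hj : j < m + 1
              · rw [TrajD.αN_eq _ hj, TrajD.αN_eq _ (show j + 1 < m + 1 + 1 by omega)]
                exact congrArg α (Fin.ext rfl)
              · rw [TrajD.αN_neg _ hj,
                  TrajD.αN_neg _ (show ¬ j + 1 < m + 1 + 1 by omega)]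
  -- now assemble the sums
  rw [bCoeff, finsum_eq_sum_of_fintype, ← main, Fintype.sum_sum_type]
  simp only [Sum.elim_inl, Sum.elim_inr]
  congr 1
  · -- left part
    by_cases hts : τ ⊂ σ
    · letI : Unique (PLift (τ ⊂ σ)) := ⟨⟨⟨hts⟩⟩, fun _ => Subsingleton.elim _ _⟩
      rw [Fintype.sum_unique]
    · haveI : IsEmpty (PLift (τ ⊂ σ)) := ⟨fun h => hts h.down⟩
      rw [Finset.univ_eq_empty, Finset.sum_empty]
      by_contra h
      exact hts (incidence_ssubset (fun hz => h hz.symm))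
  · -- right part
    rw [← Finset.univ_sigma_univ, Finset.sum_sigma]
    have hstep : ∀ s : {P // P ∈ Vσ},
        (∑ P : TrajD Δ Vf q s.1.2 τ,
          -(incidence σ s.1.1 * incidence s.1.2 s.1.1) * wTD P)
        = -(incidence σ s.1.1 * incidence s.1.2 s.1.1) * bCoeff Δ Vf q s.1.2 τ := by
      intro s
      rw [← Finset.mul_sum, bCoeff, finsum_eq_sum_of_fintype]
    rw [Finset.sum_congr rfl (fun s _ => hstep s)]
    rw [Finset.sum_coe_sort Vσ
      (fun p => -(incidence σ p.1 * incidence p.2 p.1) * bCoeff Δ Vf q p.2 τ)]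
    have himg : ∑ p ∈ Vσ, -(incidence σ p.1 * incidence p.2 p.1) * bCoeff Δ Vf q p.2 τ
        = ∑ b ∈ Vσ.image Prod.snd, gmat Δ Vf σ b * bCoeff Δ Vf q b τ := by
      rw [Finset.sum_image]
      · apply Finset.sum_congr rfl
        intro p hp
        have hpf : (p.1, p.2) ∈ Vf := by
          have h := (Finset.mem_filter.mp hp).1; rwa [Prod.mk.eta]
        have hpn : p.2 ≠ σ := (Finset.mem_filter.mp hp).2.2
        rw [gmat_eval hV.1 hpf hpn]
      · intro p hp p' hp' hpp
        have h1 : (p.1, p.2) ∈ Vf := by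
          have h := (Finset.mem_filter.mp hp).1; rwa [Prod.mk.eta]
        have h2 : (p'.1, p'.2) ∈ Vf := by
          have h := (Finset.mem_filter.mp hp').1; rwa [Prod.mk.eta]
        have := pair_eq_of_snd hV.1 h1 h2 hpp
        rw [Prod.mk.injEq] at this
        exact Prod.ext this.1 hpp
    rw [himg]
    apply Finset.sum_subset
    · intro b hb
      obtain ⟨p, hp, hpb⟩ := Finset.mem_image.mp hb
      exact hpb ▸ (hV.1.1 p (Finset.mem_filter.mp hp).1).2.1
    · intro b _ hbim
      by_cases hg : gmat Δ Vf σ b = 0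
      · rw [hg, zero_mul]
      · exfalso
        obtain ⟨hne, aa, hpair, hsub, hi1, hi2⟩ := gmat_ne_zero hg
        apply hbim
        refine Finset.mem_image.mpr ⟨(aa, b), ?_, rfl⟩
        exact Finset.mem_filter.mpr ⟨hpair, incidence_ssubset hi1, hne⟩
lemma gmat_self (b : Finset V) : gmat Δ Vf b b = 0 := by rw [gmat, if_pos rfl]

lemma gmat_no_pair {m m' : Finset V} (hno : ∀ P ∈ Vf, P.2 ≠ m') : gmat Δ Vf m m' = 0 := by
  rw [gmat]
  split_ifs with h
  · rfl
  · apply Finset.sum_eq_zero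
    intro a _
    rw [if_neg (fun hmem => hno _ hmem rfl)]

lemma sum_inc_gmat (hV : IsDVF Δ Vf) {b : Finset V} (hb : b ∈ Δ.faces)
    {α0 m' : Finset V} (hp : (α0, m') ∈ Vf) :
    ∑ m ∈ Δ.faces, incidence b m * gmat Δ Vf m m' = incidence b m' := by
  have hm'f : m' ∈ Δ.faces := (hV.1 _ hp).2.1
  have hsq : incidence m' α0 * incidence m' α0 = 1 :=
    incidence_sq (hV.1 _ hp).2.2.1.subset (hV.1 _ hp).2.2.2
  have hzero : ∑ m ∈ Δ.faces, incidence b m * (-(incidence m α0 * incidence m' α0)) = 0 := by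
    have hc : ∀ m ∈ Δ.faces, incidence b m * (-(incidence m α0 * incidence m' α0))
        = (-(incidence m' α0)) * (incidence b m * incidence m α0) := fun m _ => by ring
    rw [Finset.sum_congr rfl hc, ← Finset.mul_sum, d2_faces hb, mul_zero]
  have e1 : ∑ m ∈ Δ.faces, incidence b m * gmat Δ Vf m m'
      = incidence b m' * gmat Δ Vf m' m'
        + ∑ m ∈ Δ.faces.erase m', incidence b m * gmat Δ Vf m m' :=
    (Finset.add_sum_erase _ _ hm'f).symm
  have e2 : ∑ m ∈ Δ.faces, incidence b m * (-(incidence m α0 * incidence m' α0))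
      = incidence b m' * (-(incidence m' α0 * incidence m' α0))
        + ∑ m ∈ Δ.faces.erase m', incidence b m * (-(incidence m α0 * incidence m' α0)) :=
    (Finset.add_sum_erase _ _ hm'f).symm
  have e3 : ∑ m ∈ Δ.faces.erase m', incidence b m * gmat Δ Vf m m'
      = ∑ m ∈ Δ.faces.erase m', incidence b m * (-(incidence m α0 * incidence m' α0)) := by
    apply Finset.sum_congr rfl
    intro m hm
    rw [gmat_eval hV hp (fun h => (Finset.mem_erase.mp hm).1 h.symm)]
  rw [e1, gmat_self, mul_zero, zero_add, e3]
  rw [hzero, hsq] at e2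
  linarith

lemma sum_inc_gmat_zero {b m' : Finset V} (hno : ∀ P ∈ Vf, P.2 ≠ m') :
    ∑ m ∈ Δ.faces, incidence b m * gmat Δ Vf m m' = 0 := by
  apply Finset.sum_eq_zero
  intro m _
  rw [gmat_no_pair hno, mul_zero]

lemma star_identity (hV : IsGVF Δ Vf) {p : ℕ} (hp : 1 ≤ p) {σ0 ρ : Finset V}
    (hσ0 : IsCrit Δ Vf σ0) (hσ0c : σ0.card = p + 2) (hρ : IsCrit Δ Vf ρ) (hρc : ρ.card = p) :
    ∑ m ∈ critC Δ Vf (p + 1), bCoeff Δ Vf (p + 1) σ0 m * bCoeff Δ Vf p m ρ = 0 := by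
  classical
  set v : Finset V → ℤ := fun m => bCoeff Δ Vf p m ρ with hv
  set E : Finset V → ℤ :=
    fun b => ∑ m ∈ critC Δ Vf (p + 1), bCoeff Δ Vf (p + 1) b m * v m with hE
  set K : Finset V → ℤ :=
    fun b => ∑ P ∈ Vf, if P.2 = b then -(incidence b P.1 * v P.1) else 0 with hK
  set H : Finset V → ℤ :=
    fun b => ∑ m ∈ critC Δ Vf (p + 1), incidence b m * v m with hH
  have hcritmem : ∀ m ∈ critC Δ Vf (p + 1), m ∈ Δ.faces ∧ m.card = p + 1 ∧ IsCrit Δ Vf m := by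
    intro m hm
    have h := Finset.mem_filter.mp hm
    exact ⟨h.1, h.2.1, h.2.2⟩
  -- (a) recursion for E
  have hErec : ∀ b ∈ Δ.faces, E b = H b + ∑ b' ∈ Δ.faces, gmat Δ Vf b b' * E b' := by
    intro b hb
    have e1 : E b = ∑ m ∈ critC Δ Vf (p + 1),
        (incidence b m + ∑ b' ∈ Δ.faces, gmat Δ Vf b b' * bCoeff Δ Vf (p + 1) b' m) * v m := by
      apply Finset.sum_congr rfl
      intro m hm
      rw [bCoeff_rec hV hb (hcritmem m hm).2.2 (hcritmem m hm).2.1]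
    rw [e1]
    simp only [add_mul]
    rw [Finset.sum_add_distrib]
    congr 1
    calc ∑ m ∈ critC Δ Vf (p + 1),
          (∑ b' ∈ Δ.faces, gmat Δ Vf b b' * bCoeff Δ Vf (p + 1) b' m) * v m
        = ∑ m ∈ critC Δ Vf (p + 1), ∑ b' ∈ Δ.faces,
            gmat Δ Vf b b' * (bCoeff Δ Vf (p + 1) b' m * v m) := by
          apply Finset.sum_congr rfl
          intro m _
          rw [Finset.sum_mul]
          apply Finset.sum_congr rfl
          intro b' _
          ring
      _ = ∑ b' ∈ Δ.faces, ∑ m ∈ critC Δ Vf (p + 1),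
            gmat Δ Vf b b' * (bCoeff Δ Vf (p + 1) b' m * v m) := Finset.sum_comm
      _ = ∑ b' ∈ Δ.faces, gmat Δ Vf b b' * E b' := by
          apply Finset.sum_congr rfl
          intro b' _
          rw [← Finset.mul_sum]
  -- (b2) the A identity
  have hA : ∀ b ∈ Δ.faces, ∑ m ∈ Δ.faces, incidence b m * v m
      = ∑ m' ∈ Δ.faces, (if ∃ P ∈ Vf, P.2 = m' then incidence b m' else 0) * v m' := by
    intro b hb
    have e1 : ∑ m ∈ Δ.faces, incidence b m * v m
        = ∑ m ∈ Δ.faces, incidence b m *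
            (incidence m ρ + ∑ m' ∈ Δ.faces, gmat Δ Vf m m' * v m') := by
      apply Finset.sum_congr rfl
      intro m hm
      rw [hv]
      simp only
      rw [← bCoeff_rec hV hm hρ hρc]
    rw [e1]
    simp only [mul_add]
    rw [Finset.sum_add_distrib, d2_faces hb ρ, zero_add]
    calc ∑ m ∈ Δ.faces, incidence b m * ∑ m' ∈ Δ.faces, gmat Δ Vf m m' * v m'
        = ∑ m ∈ Δ.faces, ∑ m' ∈ Δ.faces,
            (incidence b m * gmat Δ Vf m m') * v m' := by
          apply Finset.sum_congr rfl
          intro m _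
          rw [Finset.mul_sum]
          apply Finset.sum_congr rfl
          intro m' _
          ring
      _ = ∑ m' ∈ Δ.faces, ∑ m ∈ Δ.faces,
            (incidence b m * gmat Δ Vf m m') * v m' := Finset.sum_comm
      _ = ∑ m' ∈ Δ.faces, (if ∃ P ∈ Vf, P.2 = m' then incidence b m' else 0) * v m' := by
          apply Finset.sum_congr rfl
          intro m' _
          rw [← Finset.sum_mul]
          congr 1
          by_cases hex : ∃ P ∈ Vf, P.2 = m'
          · obtain ⟨P, hP, hP2⟩ := hex
            have hpf : (P.1, m') ∈ Vf := by rw [← hP2, Prod.mk.eta]; exact hP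
            rw [if_pos ⟨P, hP, hP2⟩]
            exact sum_inc_gmat hV.1 hb hpf
          · push_neg at hex
            rw [if_neg (by push_neg; exact hex)]
            exact sum_inc_gmat_zero hex
  -- trichotomy
  have htri : ∀ b : Finset V, ∀ m ∈ Δ.faces, incidence b m * v m
      = (if m.card = p + 1 ∧ IsCrit Δ Vf m then incidence b m * v m else 0)
        + (if ∃ P ∈ Vf, P.2 = m then incidence b m else 0) * v m
        + (if ∃ P ∈ Vf, P.1 = m then incidence b m * v m else 0) := by
    intro b m hm
    by_cases hz : incidence b m * v m = 0
    · rcases mul_eq_zero.mp hz with h0 | h0 <;> rw [h0] <;> simp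
    · have hvm : v m ≠ 0 := right_ne_zero_of_mul hz
      have hmc : m.card = p + 1 := (bCoeff_ne_zero hvm).2
      have hmne : m.Nonempty := Finset.card_pos.mp (by omega)
      by_cases h2 : ∃ P ∈ Vf, P.2 = m
      · obtain ⟨P, hP, hP2⟩ := h2
        have hncrit : ¬ (m.card = p + 1 ∧ IsCrit Δ Vf m) := by
          rintro ⟨-, hcrit⟩
          rcases hcrit.2.2 with hcl | ⟨hc1, -⟩
          · exact (hcl P hP).2 hP2.symm
          · omega
        have hnsrc : ¬ ∃ Q ∈ Vf, Q.1 = m := by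
          rintro ⟨Q, hQ, hQ1⟩
          exact fst_ne_snd hV.1 hQ hP (hQ1.trans hP2.symm)
        rw [if_neg hncrit, if_pos ⟨P, hP, hP2⟩, if_neg hnsrc]
        ring
      · by_cases h3 : ∃ P ∈ Vf, P.1 = m
        · obtain ⟨P, hP, hP1⟩ := h3
          have hncrit : ¬ (m.card = p + 1 ∧ IsCrit Δ Vf m) := by
            rintro ⟨-, hcrit⟩
            rcases hcrit.2.2 with hcl | ⟨hc1, hmem⟩
            · exact (hcl P hP).1 hP1.symm
            · exact fst_ne_snd hV.1 hP hmem (by rw [hP1])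
          rw [if_neg hncrit, if_neg h2, if_pos ⟨P, hP, hP1⟩]
          ring
        · have hcrit : IsCrit Δ Vf m := by
            refine ⟨hm, hmne, Or.inl ?_⟩
            intro P hP
            constructor
            · exact fun he => h3 ⟨P, hP, he.symm⟩
            · exact fun he => h2 ⟨P, hP, he.symm⟩
          rw [if_pos ⟨hmc, hcrit⟩, if_neg h2, if_neg h3]
          ring
  -- source sum
  set S : Finset V → ℤ :=
    fun b => ∑ m ∈ Δ.faces, (if ∃ P ∈ Vf, P.1 = m then incidence b m * v m else 0) with hS
  have hHid : ∀ b ∈ Δ.faces, H b = - S b := by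
    intro b hb
    have e1 : ∑ m ∈ Δ.faces, incidence b m * v m
        = H b + (∑ m ∈ Δ.faces, incidence b m * v m) + S b := by
      calc ∑ m ∈ Δ.faces, incidence b m * v m
          = ∑ m ∈ Δ.faces,
              ((if m.card = p + 1 ∧ IsCrit Δ Vf m then incidence b m * v m else 0)
                + (if ∃ P ∈ Vf, P.2 = m then incidence b m else 0) * v m
                + (if ∃ P ∈ Vf, P.1 = m then incidence b m * v m else 0)) :=
            Finset.sum_congr rfl (htri b)
        _ = (∑ m ∈ Δ.faces, if m.card = p + 1 ∧ IsCrit Δ Vf m then incidence b m * v m else 0)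
            + (∑ m ∈ Δ.faces, (if ∃ P ∈ Vf, P.2 = m then incidence b m else 0) * v m)
            + S b := by
            rw [Finset.sum_add_distrib, Finset.sum_add_distrib]
        _ = H b + (∑ m ∈ Δ.faces, incidence b m * v m) + S b := by
            congr 1
            congr 1
            · rw [hH]
              simp only
              rw [critC, Finset.sum_filter]
            · exact (hA b hb).symm
    linarith
  have hSrc : ∀ b : Finset V, S b = ∑ P ∈ Vf, incidence b P.1 * v P.1 := by
    intro b
    rw [hS]
    simp only
    rw [← Finset.sum_filter]
    have himg : Δ.faces.filter (fun m => ∃ P ∈ Vf, P.1 = m) = Vf.image Prod.fst := by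
      ext m
      simp only [Finset.mem_filter, Finset.mem_image]
      constructor
      · rintro ⟨-, P, hP, hP1⟩
        exact ⟨P, hP, hP1⟩
      · rintro ⟨P, hP, hP1⟩
        exact ⟨hP1 ▸ (hV.1.1 P hP).1, P, hP, hP1⟩
    rw [himg, Finset.sum_image]
    intro P hP Q hQ hPQ
    exact pair_eq_of_fst hV.1 hP hQ hPQ
  -- (b5) K identity
  have hKG : ∀ b ∈ Δ.faces,
      K b - (∑ b' ∈ Δ.faces, gmat Δ Vf b b' * K b')
        = -(∑ P ∈ Vf, incidence b P.1 * v P.1) := by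
    intro b hb
    have hGK : ∑ b' ∈ Δ.faces, gmat Δ Vf b b' * K b'
        = ∑ P ∈ Vf, (if P.2 = b then 0 else incidence b P.1 * v P.1) := by
      calc ∑ b' ∈ Δ.faces, gmat Δ Vf b b' * K b'
          = ∑ b' ∈ Δ.faces, ∑ P ∈ Vf,
              (if P.2 = b' then gmat Δ Vf b b' * -(incidence b' P.1 * v P.1) else 0) := by
            apply Finset.sum_congr rfl
            intro b' _
            rw [hK]
            simp only
            rw [Finset.mul_sum]
            apply Finset.sum_congr rfl
            intro P _
            rw [mul_ite, mul_zero]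
        _ = ∑ P ∈ Vf, ∑ b' ∈ Δ.faces,
              (if P.2 = b' then gmat Δ Vf b b' * -(incidence b' P.1 * v P.1) else 0) :=
            Finset.sum_comm
        _ = ∑ P ∈ Vf, (if P.2 ∈ Δ.faces
              then gmat Δ Vf b P.2 * -(incidence P.2 P.1 * v P.1) else 0) := by
            apply Finset.sum_congr rfl
            intro P _
            rw [Finset.sum_ite_eq]
        _ = ∑ P ∈ Vf, (if P.2 = b then 0 else incidence b P.1 * v P.1) := by
            apply Finset.sum_congr rfl
            intro P hP
            rw [if_pos ((hV.1.1 P hP).2.1)]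
            by_cases hPb : P.2 = b
            · rw [hPb, gmat_self, if_pos rfl]
              ring
            · have hpf : (P.1, P.2) ∈ Vf := by rwa [Prod.mk.eta]
              rw [gmat_eval hV.1 hpf hPb, if_neg hPb]
              have hsq : incidence P.2 P.1 * incidence P.2 P.1 = 1 :=
                incidence_sq (hV.1.1 P hP).2.2.1.subset (hV.1.1 P hP).2.2.2
              linear_combination (incidence b P.1 * v P.1) * hsq
    rw [hGK, hK]
    simp only
    rw [← Finset.sum_sub_distrib, ← Finset.sum_neg_distrib]
    apply Finset.sum_congr rfl
    intro P _
    by_cases hPb : P.2 = b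
    · rw [if_pos hPb, if_pos hPb]
      ring
    · rw [if_neg hPb, if_neg hPb]
      ring
  -- (c) chain and nilpotence
  have hchain : ∀ b ∈ Δ.faces, (E b - K b) = ∑ b' ∈ Δ.faces, gmat Δ Vf b b' * (E b' - K b') := by
    intro b hb
    have e1 : ∑ b' ∈ Δ.faces, gmat Δ Vf b b' * (E b' - K b')
        = (∑ b' ∈ Δ.faces, gmat Δ Vf b b' * E b')
          - ∑ b' ∈ Δ.faces, gmat Δ Vf b b' * K b' := by
      rw [← Finset.sum_sub_distrib]
      apply Finset.sum_congr rfl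
      intro b' _
      ring
    have h2 := hErec b hb
    have h3 := hHid b hb
    have h4 := hKG b hb
    have h5 := hSrc b
    rw [e1]
    linarith
  have hzero := gmat_fixed_zero hV (fun b => E b - K b) hchain σ0 hσ0.1
  have hK0 : K σ0 = 0 := by
    rw [hK]
    simp only
    apply Finset.sum_eq_zero
    intro P hP
    rw [if_neg]
    intro hP2
    rcases hσ0.2.2 with hcl | ⟨hc1, -⟩
    · exact (hcl P hP).2 hP2.symm
    · omega
  have hfin : E σ0 = 0 := by
    linarith
  exact hfin
lemma critC_zero : critC Δ Vf 0 = ∅ := by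
  rw [critC]
  apply Finset.filter_false_of_mem
  rintro σ hσ ⟨hc, hcrit⟩
  rw [Finset.card_eq_zero] at hc
  subst hc
  exact Finset.not_nonempty_empty hcrit.2.1
/-- The composition of consecutive Morse boundary operators vanishes. -/
theorem statement_2 (Δ : SComplex V) (Vf : Finset (Finset V × Finset V))
    (hV : IsGVF Δ Vf) :
    ∀ q : ℕ, (morseBoundary Δ Vf (q - 1)).comp (morseBoundary Δ Vf q) = 0 := by
  intro q
  apply Finsupp.lhom_ext
  intro a b
  rw [LinearMap.comp_apply, LinearMap.zero_apply]
  have hinner : morseBoundary Δ Vf q (Finsupp.single a b)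
      = b • (if a ∈ critC Δ Vf (q + 1) then
          ∑ τ ∈ critC Δ Vf q, bCoeff Δ Vf q a τ • Finsupp.single τ (1 : ℤ) else 0) := by
    rw [morseBoundary, Finsupp.lsum_single, LinearMap.toSpanSingleton_apply]
  rw [hinner]
  by_cases ha : a ∈ critC Δ Vf (q + 1)
  case neg =>
    rw [if_neg ha, smul_zero, map_zero]
  case pos =>
  rw [if_pos ha]
  cases q with
  | zero =>
    rw [critC_zero, Finset.sum_empty, smul_zero, map_zero]
  | succ p =>
    rw [Nat.add_sub_cancel]
    have hper : ∀ τ ∈ critC Δ Vf (p + 1), morseBoundary Δ Vf p (Finsupp.single τ (1 : ℤ))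
        = ∑ ρ ∈ critC Δ Vf p, bCoeff Δ Vf p τ ρ • Finsupp.single ρ (1 : ℤ) := by
      intro τ hτ
      rw [morseBoundary, Finsupp.lsum_single, LinearMap.toSpanSingleton_apply,
        if_pos hτ, one_smul]
    rw [map_smul, map_sum]
    rw [Finset.sum_congr rfl (fun τ hτ => by rw [map_smul, hper τ hτ])]
    have hswap : ∑ τ ∈ critC Δ Vf (p + 1), bCoeff Δ Vf (p + 1) a τ •
          ∑ ρ ∈ critC Δ Vf p, bCoeff Δ Vf p τ ρ • Finsupp.single ρ (1 : ℤ)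
        = ∑ ρ ∈ critC Δ Vf p,
            (∑ τ ∈ critC Δ Vf (p + 1), bCoeff Δ Vf (p + 1) a τ * bCoeff Δ Vf p τ ρ) •
              Finsupp.single ρ (1 : ℤ) := by
      calc ∑ τ ∈ critC Δ Vf (p + 1), bCoeff Δ Vf (p + 1) a τ •
            ∑ ρ ∈ critC Δ Vf p, bCoeff Δ Vf p τ ρ • Finsupp.single ρ (1 : ℤ)
          = ∑ τ ∈ critC Δ Vf (p + 1), ∑ ρ ∈ critC Δ Vf p,
              (bCoeff Δ Vf (p + 1) a τ * bCoeff Δ Vf p τ ρ) • Finsupp.single ρ (1 : ℤ) := by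
            apply Finset.sum_congr rfl
            intro τ _
            rw [Finset.smul_sum]
            apply Finset.sum_congr rfl
            intro ρ _
            rw [smul_smul]
        _ = ∑ ρ ∈ critC Δ Vf p, ∑ τ ∈ critC Δ Vf (p + 1),
              (bCoeff Δ Vf (p + 1) a τ * bCoeff Δ Vf p τ ρ) • Finsupp.single ρ (1 : ℤ) :=
            Finset.sum_comm
        _ = _ := by
            apply Finset.sum_congr rfl
            intro ρ _
            rw [Finset.sum_smul]
    rw [hswap]
    cases p with
    | zero =>
      rw [critC_zero, Finset.sum_empty, smul_zero]
    | succ p' =>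
      have hmem := Finset.mem_filter.mp ha
      have hz : ∀ ρ ∈ critC Δ Vf (p' + 1),
          (∑ τ ∈ critC Δ Vf (p' + 1 + 1),
            bCoeff Δ Vf (p' + 1 + 1) a τ * bCoeff Δ Vf (p' + 1) τ ρ) = 0 := by
        intro ρ hρ
        have hρm := Finset.mem_filter.mp hρ
        exact star_identity hV (Nat.le_add_left 1 p') hmem.2.2
          (by omega) hρm.2.2 hρm.2.1
      rw [Finset.sum_congr rfl (fun ρ hρ => by rw [hz ρ hρ, zero_smul])]
      rw [Finset.sum_const_zero, smul_zero]
end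

section
/- Let Δ be a simplicial complex with a gradient vector field V. Then for all q ∈ ℕ, the composition of the Morse coboundary operators vanishes: δ_q^V ∘ δ_{q−1}^V = 0. -/
open scoped Classical

variable {V : Type*} [LinearOrder V]

namespace MorseAux

variable {V : Type*} [LinearOrder V]

theorem incidence_of_not {σ τ : Finset V} (h : ¬ (τ ⊆ σ ∧ (σ \ τ).card = 1)) :
    incidence σ τ = 0 := by
  rw [incidence, if_neg h]

theorem incidence_mul_self {σ τ : Finset V} (h1 : τ ⊆ σ) (h2 : (σ \ τ).card = 1) :
    incidence σ τ * incidence σ τ = 1 := by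
  rw [incidence, if_pos ⟨h1, h2⟩, ← pow_add]
  exact Even.neg_one_pow ⟨_, rfl⟩

theorem incidence_eq {σ τ : Finset V} {v : V} (h1 : τ ⊆ σ) (hv : σ \ τ = {v}) :
    incidence σ τ = (-1 : ℤ) ^ ((σ.filter fun y => y < v).card) := by
  rw [incidence, if_pos ⟨h1, by rw [hv]; rfl⟩]
  congr 1
  exact congrArg Finset.card (Finset.filter_congr (fun z _ => by simp [hv]))

/-- The key `∂∘∂ = 0` identity for incidence numbers, over the power set. -/
theorem dsq_powerset (g y : Finset V) :
    ∑ t ∈ g.powerset, incidence g t * incidence t y = 0 := by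
  by_cases hgood : y ⊆ g ∧ g.card = y.card + 2
  · obtain ⟨hyg, hcard⟩ := hgood
    have hcd : (g \ y).card = 2 := by rw [Finset.card_sdiff_of_subset hyg]; omega
    obtain ⟨a, b, hab, hsd⟩ := Finset.card_eq_two.1 hcd
    -- wlog a < b
    have main : ∀ a b : V, a < b → g \ y = {a, b} →
        ∑ t ∈ g.powerset, incidence g t * incidence t y = 0 := by
      clear hab hsd a b
      intro a b hab hsd
      have hmem : ∀ z, (z ∈ g ∧ z ∉ y) ↔ (z = a ∨ z = b) := by
        intro z
        rw [← Finset.mem_sdiff, hsd]; simp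
      have hay : a ∉ y := ((hmem a).2 (Or.inl rfl)).2
      have hby : b ∉ y := ((hmem b).2 (Or.inr rfl)).2
      have hag : a ∈ g := ((hmem a).2 (Or.inl rfl)).1
      have hbg : b ∈ g := ((hmem b).2 (Or.inr rfl)).1
      set t1 := insert a y with ht1
      set t2 := insert b y with ht2
      have ht1g : t1 ⊆ g := Finset.insert_subset hag hyg
      have ht2g : t2 ⊆ g := Finset.insert_subset hbg hyg
      have hgt1 : g \ t1 = {b} := by
        ext z
        simp only [Finset.mem_sdiff, ht1, Finset.mem_insert, Finset.mem_singleton]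
        constructor
        · rintro ⟨hz, hz2⟩
          push_neg at hz2
          rcases (hmem z).1 ⟨hz, hz2.2⟩ with h | h
          · exact absurd h hz2.1
          · exact h
        · rintro rfl
          exact ⟨hbg, by push_neg; exact ⟨hab.ne', hby⟩⟩
      have hgt2 : g \ t2 = {a} := by
        ext z
        simp only [Finset.mem_sdiff, ht2, Finset.mem_insert, Finset.mem_singleton]
        constructor
        · rintro ⟨hz, hz2⟩
          push_neg at hz2
          rcases (hmem z).1 ⟨hz, hz2.2⟩ with h | h
          · exact h
          · exact absurd h hz2.1
        · rintro rfl
          exact ⟨hag, by push_neg; exact ⟨hab.ne, hay⟩⟩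
      have ht1y : t1 \ y = {a} := by
        ext z; simp only [Finset.mem_sdiff, ht1, Finset.mem_insert, Finset.mem_singleton]
        constructor
        · rintro ⟨h | h, hz⟩
          · exact h
          · exact absurd h hz
        · rintro rfl; exact ⟨Or.inl rfl, hay⟩
      have ht2y : t2 \ y = {b} := by
        ext z; simp only [Finset.mem_sdiff, ht2, Finset.mem_insert, Finset.mem_singleton]
        constructor
        · rintro ⟨h | h, hz⟩
          · exact h
          · exact absurd h hz
        · rintro rfl; exact ⟨Or.inl rfl, hby⟩
      have hyt1 : y ⊆ t1 := Finset.subset_insert _ _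
      have hyt2 : y ⊆ t2 := Finset.subset_insert _ _
      have ht12 : t1 ≠ t2 := by
        intro h
        have : a ∈ t2 := h ▸ Finset.mem_insert_self a y
        rcases Finset.mem_insert.1 this with h' | h'
        · exact hab.ne h'
        · exact hay h'
      have hsub : ({t1, t2} : Finset (Finset V)) ⊆ g.powerset := by
        intro t ht
        rcases Finset.mem_insert.1 ht with rfl | ht
        · exact Finset.mem_powerset.2 ht1g
        · rw [Finset.mem_singleton.1 ht]
          exact Finset.mem_powerset.2 ht2g
      rw [← Finset.sum_subset hsub ?zero]
      case zero =>
        intro t ht hnt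
        simp only [Finset.mem_insert, Finset.mem_singleton, not_or] at hnt
        by_cases c1 : t ⊆ g ∧ (g \ t).card = 1
        swap
        · rw [incidence_of_not c1, zero_mul]
        by_cases c2 : y ⊆ t ∧ (t \ y).card = 1
        swap
        · rw [incidence_of_not c2, mul_zero]
        exfalso
        obtain ⟨c, hc⟩ := Finset.card_eq_one.1 c2.2
        have hcg : c ∈ g \ y := by
          have : c ∈ t \ y := hc ▸ Finset.mem_singleton_self c
          have h2 := Finset.mem_sdiff.1 this
          exact Finset.mem_sdiff.2 ⟨c1.1 h2.1, h2.2⟩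
        have htc : t = insert c y := by
          have := Finset.union_sdiff_of_subset c2.1
          rw [hc] at this
          rw [← this, Finset.insert_eq, Finset.union_comm]
        rw [hsd] at hcg
        rcases Finset.mem_insert.1 hcg with rfl | hcg
        · exact hnt.1 htc
        · rw [Finset.mem_singleton.1 hcg] at htc
          exact hnt.2 htc
      rw [Finset.sum_pair ht12]
      have hfil : ∀ (s : Finset V) (v : V), v ∉ s →
          ∀ w, (insert v s).filter (fun z => z < w) =
            if v < w then insert v (s.filter (fun z => z < w)) else s.filter (fun z => z < w) := by
        intro s v hv w
        rw [Finset.filter_insert]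
      have hg : g = insert a (insert b y) := by
        ext z
        simp only [Finset.mem_insert]
        constructor
        · intro hz
          by_cases hzy : z ∈ y
          · exact Or.inr (Or.inr hzy)
          · rcases (hmem z).1 ⟨hz, hzy⟩ with h | h
            · exact Or.inl h
            · exact Or.inr (Or.inl h)
        · rintro (rfl | rfl | hz)
          · exact hag
          · exact hbg
          · exact hyg hz
      have hanb : a ∉ insert b y := by
        simp only [Finset.mem_insert]
        push_neg
        exact ⟨hab.ne, hay⟩
      -- counts
      have cgb : (g.filter fun z => z < b).card = (y.filter fun z => z < b).card + 1 := by
        rw [hg, hfil _ _ hanb, if_pos hab, hfil _ _ hby, if_neg (lt_irrefl b),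
          Finset.card_insert_of_notMem]
        simp only [Finset.mem_filter]
        push_neg
        intro ha'
        exact absurd ha' hay
      have cga : (g.filter fun z => z < a).card = (y.filter fun z => z < a).card := by
        rw [hg, hfil _ _ hanb, if_neg (lt_irrefl a), hfil _ _ hby, if_neg (not_lt.2 hab.le)]
      have ct1a : (t1.filter fun z => z < a).card = (y.filter fun z => z < a).card := by
        rw [ht1, hfil _ _ hay, if_neg (lt_irrefl a)]
      have ct2b : (t2.filter fun z => z < b).card = (y.filter fun z => z < b).card := by
        rw [ht2, hfil _ _ hby, if_neg (lt_irrefl b)]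
      rw [incidence_eq ht1g hgt1, incidence_eq hyt1 ht1y, incidence_eq ht2g hgt2,
        incidence_eq hyt2 ht2y, cgb, cga, ct1a, ct2b]
      ring
    rcases lt_or_gt_of_ne hab with h | h
    · exact main a b h hsd
    · exact main b a h (by rw [hsd, Finset.pair_comm])
  · apply Finset.sum_eq_zero
    intro t ht
    rw [Finset.mem_powerset] at ht
    by_cases c1 : t ⊆ g ∧ (g \ t).card = 1
    swap
    · rw [incidence_of_not c1, zero_mul]
    by_cases c2 : y ⊆ t ∧ (t \ y).card = 1
    swap
    · rw [incidence_of_not c2, mul_zero]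
    exfalso
    apply hgood
    refine ⟨c2.1.trans c1.1, ?_⟩
    have e1 := Finset.card_sdiff_of_subset c1.1
    have e2 := Finset.card_sdiff_of_subset c2.1
    have l1 := Finset.card_le_card c1.1
    have l2 := Finset.card_le_card c2.1
    omega

end MorseAux
namespace MorseAux

variable {V : Type*} [LinearOrder V] {Δ : SComplex V} {Vf : Finset (Finset V × Finset V)}

/-- `∂∘∂ = 0` over the faces of the complex of a fixed cardinality. -/
theorem dsq_faces (hg : g ∈ Δ.faces) (y : Finset V) (c : ℕ) :
    ∑ t ∈ Δ.faces.filter (fun t => t.card = c), incidence g t * incidence t y = 0 := by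
  by_cases hc : c + 1 = g.card
  · have h1 : ∑ t ∈ g.powerset.filter (fun t => t.card = c), incidence g t * incidence t y
        = ∑ t ∈ Δ.faces.filter (fun t => t.card = c), incidence g t * incidence t y := by
      apply Finset.sum_subset
      · intro t ht
        simp only [Finset.mem_filter, Finset.mem_powerset] at ht ⊢
        exact ⟨Δ.downClosed g hg t ht.1, ht.2⟩
      · intro t ht hnt
        simp only [Finset.mem_filter, Finset.mem_powerset] at ht hnt
        have : ¬ t ⊆ g := fun h => hnt ⟨h, ht.2⟩
        rw [incidence_of_not (fun h' => this h'.1), zero_mul]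
    rw [← h1]
    have h2 : ∑ t ∈ g.powerset.filter (fun t => t.card = c), incidence g t * incidence t y
        = ∑ t ∈ g.powerset, incidence g t * incidence t y := by
      apply Finset.sum_subset (Finset.filter_subset _ _)
      intro t ht hnt
      simp only [Finset.mem_filter, Finset.mem_powerset] at ht hnt
      have hne : ¬ (t ⊆ g ∧ (g \ t).card = 1) := by
        rintro ⟨hsub, hcd⟩
        rw [Finset.card_sdiff_of_subset hsub] at hcd
        have := Finset.card_le_card hsub
        exact hnt ⟨ht, by omega⟩
      rw [incidence_of_not hne, zero_mul]
    rw [h2, dsq_powerset]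
  · apply Finset.sum_eq_zero
    intro t ht
    simp only [Finset.mem_filter] at ht
    have hne : ¬ (t ⊆ g ∧ (g \ t).card = 1) := by
      rintro ⟨hsub, hcd⟩
      rw [Finset.card_sdiff_of_subset hsub] at hcd
      have := Finset.card_le_card hsub
      omega
    rw [incidence_of_not hne, zero_mul]

/-- In a discrete vector field, pairs sharing a component are equal. -/
theorem pair_eq (hD : IsDVF Δ Vf) {p p' : Finset V × Finset V} (hp : p ∈ Vf) (hp' : p' ∈ Vf)
    (h : p.1 = p'.1 ∨ p.1 = p'.2 ∨ p.2 = p'.1 ∨ p.2 = p'.2) : p = p' := by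
  by_contra hne
  obtain ⟨h1, h2, h3, h4⟩ := hD.2 p hp p' hp' hne
  tauto

/-- A critical simplex of cardinality at least 2 belongs to no pair. -/
theorem crit_no_pair {c : ℕ} (hc : 2 ≤ c) (hσ : σ ∈ critC Δ Vf c) :
    ∀ p ∈ Vf, σ ≠ p.1 ∧ σ ≠ p.2 := by
  simp only [critC, Finset.mem_filter] at hσ
  obtain ⟨-, hcard, -, -, h | h⟩ := hσ
  · exact h
  · omega

/-- A critical simplex is never the first component of a pair. -/
theorem crit_not_fst (hD : IsDVF Δ Vf) {c : ℕ} (hσ : σ ∈ critC Δ Vf c) :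
    ∀ p ∈ Vf, p.1 ≠ σ := by
  simp only [critC, Finset.mem_filter] at hσ
  obtain ⟨-, hcard, hmem, hne, h | h⟩ := hσ
  · intro p hp he
    exact (h p hp).1 he.symm
  · intro p hp he
    obtain ⟨hc1, hpair⟩ := h
    by_cases hpe : p = (∅, σ)
    · rw [hpe] at he
      exact hne.ne_empty he.symm
    · obtain ⟨-, h2, -, -⟩ := hD.2 p hp (∅, σ) hpair hpe
      exact h2 he

end MorseAux
namespace MorseAux

variable {V : Type*} [LinearOrder V]

/-- `ℕ`-indexed, padded version of `CoTrajU`. -/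
structure UA (Δ : SComplex V) (Vf : Finset (Finset V × Finset V)) (q : ℕ)
    (s t : Finset V) where
  r : ℕ
  β : ℕ → Finset V
  γ : ℕ → Finset V
  βpad : ∀ n, r ≤ n → β n = β r
  γpad : ∀ n, r ≤ n → γ n = γ r
  βmem : ∀ n, β n ∈ Δ.faces
  γmem : ∀ n, γ n ∈ Δ.faces
  βcard : ∀ n, (β n).card = q
  γcard : ∀ n, (γ n).card = q + 1
  first : β 0 = s
  last : γ r = t
  sub : ∀ n, n ≤ r → β n ⊂ γ n
  vpair : ∀ n, n < r → (β (n + 1), γ n) ∈ Vf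
  βne : ∀ n, n < r → β n ≠ β (n + 1)
  γne : ∀ n, n < r → γ (n + 1) ≠ γ n

/-- `ℕ`-indexed, padded version of `CoTraj`. -/
structure TA (Δ : SComplex V) (Vf : Finset (Finset V × Finset V)) (k : ℕ)
    (s t : Finset V) where
  r : ℕ
  β : ℕ → Finset V
  γ : ℕ → Finset V
  βpad : ∀ n, r ≤ n → β n = β r
  γpad : ∀ n, r ≤ n → γ n = ∅
  βmem : ∀ n, β n ∈ Δ.faces
  γmem : ∀ n, n < r → γ n ∈ Δ.faces
  βcard : ∀ n, (β n).card = k + 1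
  γcard : ∀ n, n < r → (γ n).card = k + 2
  first : β 0 = s
  last : β r = t
  sub : ∀ n, n < r → β n ⊂ γ n
  vpair : ∀ n, n < r → (β (n + 1), γ n) ∈ Vf
  βne : ∀ n, n < r → β n ≠ β (n + 1)

noncomputable def wUA {Δ : SComplex V} {Vf : Finset (Finset V × Finset V)} {q : ℕ}
    {s t : Finset V} (A : UA Δ Vf q s t) : ℤ :=
  (∏ n ∈ Finset.range A.r,
    -(incidence (A.γ n) (A.β n) * incidence (A.γ n) (A.β (n + 1)))) *
    incidence (A.γ A.r) (A.β A.r)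

noncomputable def wTA {Δ : SComplex V} {Vf : Finset (Finset V × Finset V)} {k : ℕ}
    {s t : Finset V} (P : TA Δ Vf k s t) : ℤ :=
  ∏ n ∈ Finset.range P.r,
    -(incidence (P.γ n) (P.β n) * incidence (P.γ n) (P.β (n + 1)))

theorem UA.ext' {Δ : SComplex V} {Vf : Finset (Finset V × Finset V)} {q : ℕ}
    {s t : Finset V} {A B : UA Δ Vf q s t} (hr : A.r = B.r) (hβ : A.β = B.β)
    (hγ : A.γ = B.γ) : A = B := by
  cases A; cases B
  dsimp at hr hβ hγ
  subst hr hβ hγ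
  rfl

theorem TA.ext' {Δ : SComplex V} {Vf : Finset (Finset V × Finset V)} {k : ℕ}
    {s t : Finset V} {A B : TA Δ Vf k s t} (hr : A.r = B.r) (hβ : A.β = B.β)
    (hγ : A.γ = B.γ) : A = B := by
  cases A; cases B
  dsimp at hr hβ hγ
  subst hr hβ hγ
  rfl

theorem UA.heq' {Δ : SComplex V} {Vf : Finset (Finset V × Finset V)} {q : ℕ}
    {s t s' t' : Finset V} (hs : s = s') (ht : t = t') {A : UA Δ Vf q s t}
    {B : UA Δ Vf q s' t'} (hr : A.r = B.r) (hβ : A.β = B.β) (hγ : A.γ = B.γ) :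
    HEq A B := by
  subst hs ht
  exact heq_of_eq (UA.ext' hr hβ hγ)

theorem TA.heq' {Δ : SComplex V} {Vf : Finset (Finset V × Finset V)} {k : ℕ}
    {s t s' t' : Finset V} (hs : s = s') (ht : t = t') {A : TA Δ Vf k s t}
    {B : TA Δ Vf k s' t'} (hr : A.r = B.r) (hβ : A.β = B.β) (hγ : A.γ = B.γ) :
    HEq A B := by
  subst hs ht
  exact heq_of_eq (TA.ext' hr hβ hγ)

variable {Δ : SComplex V} {Vf : Finset (Finset V × Finset V)} {q k : ℕ} {s t : Finset V}

theorem CoTrajU.ext' {Q1 Q2 : CoTrajU Δ Vf q s t} (hr : Q1.r = Q2.r)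
    (hβ : ∀ n (h1 : n < Q1.r + 1) (h2 : n < Q2.r + 1), Q1.β ⟨n, h1⟩ = Q2.β ⟨n, h2⟩)
    (hγ : ∀ n (h1 : n < Q1.r + 1) (h2 : n < Q2.r + 1), Q1.γ ⟨n, h1⟩ = Q2.γ ⟨n, h2⟩) :
    Q1 = Q2 := by
  obtain ⟨r1, β1, γ1, a1, a2, a3, a4, a5, a6, a7, a8, a9, a10⟩ := Q1
  obtain ⟨r2, β2, γ2, b1, b2, b3, b4, b5, b6, b7, b8, b9, b10⟩ := Q2
  dsimp at hr
  subst hr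
  dsimp at hβ hγ
  have hβ' : β1 = β2 := funext fun i => by
    have := hβ i i.isLt i.isLt
    simpa using this
  have hγ' : γ1 = γ2 := funext fun i => by
    have := hγ i i.isLt i.isLt
    simpa using this
  subst hβ' hγ'
  rfl

/-- From a `CoTrajU` to its padded `ℕ`-indexed version. -/
noncomputable def toUA (Q : CoTrajU Δ Vf q s t) : UA Δ Vf q s t where
  r := Q.r
  β n := Q.β ⟨min n Q.r, by omega⟩
  γ n := Q.γ ⟨min n Q.r, by omega⟩
  βpad n h := by
    show Q.β ⟨min n Q.r, by omega⟩ = Q.β ⟨min Q.r Q.r, by omega⟩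
    congr 1
    exact Fin.ext (show min n Q.r = min Q.r Q.r by omega)
  γpad n h := by
    show Q.γ ⟨min n Q.r, by omega⟩ = Q.γ ⟨min Q.r Q.r, by omega⟩
    congr 1
    exact Fin.ext (show min n Q.r = min Q.r Q.r by omega)
  βmem n := Q.βmem _
  γmem n := Q.γmem _
  βcard n := Q.βcard _
  γcard n := Q.γcard _
  first := by
    show Q.β ⟨min 0 Q.r, by omega⟩ = s
    exact (congrArg Q.β (Fin.ext (show min 0 Q.r = (0 : Fin (Q.r + 1)).val by simp))).trans
      Q.first
  last := by
    show Q.γ ⟨min Q.r Q.r, by omega⟩ = t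
    exact (congrArg Q.γ (Fin.ext (show min Q.r Q.r = (Fin.last Q.r).val by simp))).trans
      Q.last
  sub n _ := Q.sub _
  vpair n h := by
    have e1 : (⟨min (n + 1) Q.r, by omega⟩ : Fin (Q.r + 1)) = (⟨n, h⟩ : Fin Q.r).succ :=
      Fin.ext (show min (n + 1) Q.r = n + 1 by omega)
    have e2 : (⟨min n Q.r, by omega⟩ : Fin (Q.r + 1)) = (⟨n, h⟩ : Fin Q.r).castSucc :=
      Fin.ext (show min n Q.r = n by omega)
    show (Q.β ⟨min (n + 1) Q.r, by omega⟩, Q.γ ⟨min n Q.r, by omega⟩) ∈ Vf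
    rw [e1, e2]
    exact Q.vpair ⟨n, h⟩
  βne n h := by
    have e1 : (⟨min (n + 1) Q.r, by omega⟩ : Fin (Q.r + 1)) = (⟨n, h⟩ : Fin Q.r).succ :=
      Fin.ext (show min (n + 1) Q.r = n + 1 by omega)
    have e2 : (⟨min n Q.r, by omega⟩ : Fin (Q.r + 1)) = (⟨n, h⟩ : Fin Q.r).castSucc :=
      Fin.ext (show min n Q.r = n by omega)
    show Q.β ⟨min n Q.r, by omega⟩ ≠ Q.β ⟨min (n + 1) Q.r, by omega⟩
    rw [e1, e2]
    exact Q.βne ⟨n, h⟩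
  γne n h := by
    have e1 : (⟨min (n + 1) Q.r, by omega⟩ : Fin (Q.r + 1)) = (⟨n, h⟩ : Fin Q.r).succ :=
      Fin.ext (show min (n + 1) Q.r = n + 1 by omega)
    have e2 : (⟨min n Q.r, by omega⟩ : Fin (Q.r + 1)) = (⟨n, h⟩ : Fin Q.r).castSucc :=
      Fin.ext (show min n Q.r = n by omega)
    show Q.γ ⟨min (n + 1) Q.r, by omega⟩ ≠ Q.γ ⟨min n Q.r, by omega⟩
    rw [e1, e2]
    exact Q.γne ⟨n, h⟩

/-- From the padded `ℕ`-indexed version back to a `CoTrajU`. -/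
noncomputable def ofUA (A : UA Δ Vf q s t) : CoTrajU Δ Vf q s t where
  r := A.r
  β i := A.β i
  γ i := A.γ i
  βmem i := A.βmem _
  γmem i := A.γmem _
  βcard i := A.βcard _
  γcard i := A.γcard _
  first := A.first
  last := A.last
  sub i := A.sub _ (by omega)
  vpair i := A.vpair _ i.isLt
  βne i := A.βne _ i.isLt
  γne i := A.γne _ i.isLt

theorem ofUA_toUA (Q : CoTrajU Δ Vf q s t) : ofUA (toUA Q) = Q := by
  refine CoTrajU.ext' rfl (fun n h1 h2 => ?_) (fun n h1 h2 => ?_)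
  · show Q.β ⟨min n Q.r, by omega⟩ = Q.β ⟨n, h2⟩
    congr 1
    exact Fin.ext (show min n Q.r = n by omega)
  · show Q.γ ⟨min n Q.r, by omega⟩ = Q.γ ⟨n, h2⟩
    congr 1
    exact Fin.ext (show min n Q.r = n by omega)

theorem toUA_ofUA (A : UA Δ Vf q s t) : toUA (ofUA A) = A := by
  refine UA.ext' rfl ?_ ?_
  · funext n
    show A.β (min n A.r) = A.β n
    rcases le_or_gt n A.r with h | h
    · rw [min_eq_left h]
    · rw [min_eq_right h.le, A.βpad n h.le]
  · funext n
    show A.γ (min n A.r) = A.γ n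
    rcases le_or_gt n A.r with h | h
    · rw [min_eq_left h]
    · rw [min_eq_right h.le, A.γpad n h.le]

theorem wCTU_ofUA (A : UA Δ Vf q s t) : wCTU (ofUA A) = wUA A := by
  unfold wCTU wUA ofUA
  dsimp
  congr 1
  rw [← Fin.prod_univ_eq_prod_range
    (fun n => -(incidence (A.γ n) (A.β n) * incidence (A.γ n) (A.β (n + 1)))) A.r]

theorem cbCoeff_eq_UA (s t : Finset V) :
    cbCoeff Δ Vf q s t = ∑ᶠ A : UA Δ Vf q s t, wUA A := by
  rw [cbCoeff]
  exact (finsum_eq_of_bijective ofUA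
    ⟨fun A B h => by rw [← toUA_ofUA A, h, toUA_ofUA], fun Q => ⟨toUA Q, ofUA_toUA Q⟩⟩
    (fun A => (wCTU_ofUA A).symm)).symm

/-- The sum of the weights of all open co-trajectories from `s` to `x`. -/
noncomputable def ATsum (Δ : SComplex V) (Vf : Finset (Finset V × Finset V)) (k : ℕ)
    (s x : Finset V) : ℤ :=
  ∑ᶠ P : TA Δ Vf k s x, wTA P

end MorseAux
namespace MorseAux

variable {V : Type*} [LinearOrder V] {Δ : SComplex V} {Vf : Finset (Finset V × Finset V)}
  {q k : ℕ} {s t : Finset V}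

/-- Along a co-trajectory-like sequence, the upper simplices never repeat
(otherwise we could reverse it into a nontrivial closed trajectory). -/
theorem no_gamma_rep (hV : IsGVF Δ Vf) {c m : ℕ} {b g : ℕ → Finset V}
    (hbmem : ∀ n, n ≤ m → b n ∈ Δ.faces) (hgmem : ∀ n, n < m → g n ∈ Δ.faces)
    (hbcard : ∀ n, n ≤ m → (b n).card = c) (hgcard : ∀ n, n < m → (g n).card = c + 1)
    (hsub : ∀ n, n < m → b n ⊂ g n) (hvp : ∀ n, n < m → (b (n + 1), g n) ∈ Vf)
    (hbne : ∀ n, n < m → b n ≠ b (n + 1)) :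
    ∀ i j, i < j → j < m → g i ≠ g j := by
  intro i j hij hjm heq
  have hgne : ∀ n, n + 1 < m → g n ≠ g (n + 1) := by
    intro n hn hg
    have h1 := hvp n (by omega)
    have h2 := hvp (n + 1) hn
    have : (b (n + 1), g n) = (b (n + 2), g (n + 1)) := by
      apply pair_eq hV.1 h1 h2
      right; right; right; exact hg
    exact hbne (n + 1) hn (congrArg Prod.fst this)
  have hc' : c = c - 1 + 1 ∨ c = 0 := by omega
  -- build a closed trajectory at level `c`
  refine hV.2 ⟨c, g j, ?_, ?_⟩
  · exact
    { r := j - i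
      β := fun m' => g (j - (m' : ℕ))
      α := fun m' => b (j - (m' : ℕ))
      βmem := fun m' => hgmem _ (by omega)
      αmem := fun m' => hbmem _ (by omega)
      βcard := fun m' => hgcard _ (by omega)
      αcard := fun m' => hbcard _ (by omega)
      first := by show g (j - 0) = g j; rw [Nat.sub_zero]
      last := by
        show g (j - (Fin.last (j - i)).val) = g j
        rw [Fin.val_last, show j - (j - i) = i by omega, heq]
      sub := fun m' => by
        show b (j - ((Fin.castSucc m') : Fin (j - i + 1)).val) ⊂ g (j - (Fin.castSucc m').val)
        rw [Fin.coe_castSucc]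
        exact hsub _ (by omega)
      vpair := fun m' => by
        show (b (j - (m' : ℕ)), g (j - ((Fin.succ m') : Fin (j - i + 1)).val)) ∈ Vf
        rw [Fin.val_succ, show j - ((m' : ℕ) + 1) = j - (m' : ℕ) - 1 by omega,
          show j - (m' : ℕ) = (j - (m' : ℕ) - 1) + 1 by omega]
        have := hvp (j - (m' : ℕ) - 1) (by omega)
        convert this using 3 <;> omega
      αne := fun m' h => by
        show b (j - ((m' : ℕ) + 1)) ≠ b (j - (m' : ℕ))
        rw [show j - ((m' : ℕ) + 1) = j - (m' : ℕ) - 1 by omega]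
        have h2 : j - (m' : ℕ) = (j - (m' : ℕ) - 1) + 1 := by omega
        rw [h2]
        exact hbne _ (by omega)
      βne := fun m' => by
        show g (j - ((Fin.succ m') : Fin (j - i + 1)).val) ≠
          g (j - ((Fin.castSucc m') : Fin (j - i + 1)).val)
        rw [Fin.val_succ, Fin.coe_castSucc,
          show j - ((m' : ℕ) + 1) = j - (m' : ℕ) - 1 by omega]
        have h2 : j - (m' : ℕ) = (j - (m' : ℕ) - 1) + 1 := by omega
        intro hgg
        exact hgne (j - (m' : ℕ) - 1) (by omega) (hgg.trans (congrArg g h2)) }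
  · show 0 < j - i
    omega

theorem UA.r_le (hV : IsGVF Δ Vf) (A : UA Δ Vf q s t) : A.r ≤ Δ.faces.card := by
  by_contra h
  push_neg at h
  have hcard : Fintype.card {x // x ∈ Δ.faces} < Fintype.card (Fin A.r) := by
    simp only [Fintype.card_coe, Fintype.card_fin]
    omega
  obtain ⟨i, j, hne, he⟩ := Fintype.exists_ne_map_eq_of_card_lt
    (fun i : Fin A.r => (⟨A.γ i, A.γmem i⟩ : {x // x ∈ Δ.faces})) hcard
  have he' : A.γ i = A.γ j := congrArg Subtype.val he
  have key := no_gamma_rep hV (c := q) (m := A.r) (b := A.β) (g := A.γ)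
    (fun n _ => A.βmem n) (fun n _ => A.γmem n) (fun n _ => A.βcard n)
    (fun n _ => A.γcard n) (fun n hn => A.sub n (by omega)) A.vpair A.βne
  rcases Ne.lt_or_gt (fun hij : (i : ℕ) = (j : ℕ) => hne (Fin.ext hij)) with hij | hij
  · exact key i j hij j.isLt he'
  · exact key j i hij i.isLt he'.symm

theorem TA.r_le (hV : IsGVF Δ Vf) (P : TA Δ Vf k s t) : P.r ≤ Δ.faces.card := by
  by_contra h
  push_neg at h
  have hcard : Fintype.card {x // x ∈ Δ.faces} < Fintype.card (Fin P.r) := by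
    simp only [Fintype.card_coe, Fintype.card_fin]
    omega
  obtain ⟨i, j, hne, he⟩ := Fintype.exists_ne_map_eq_of_card_lt
    (fun i : Fin P.r => (⟨P.γ i, P.γmem i i.isLt⟩ : {x // x ∈ Δ.faces})) hcard
  have he' : P.γ i = P.γ j := congrArg Subtype.val he
  have key := no_gamma_rep hV (c := k + 1) (m := P.r) (b := P.β) (g := P.γ)
    (fun n _ => P.βmem n) P.γmem (fun n _ => P.βcard n) P.γcard P.sub P.vpair P.βne
  rcases Ne.lt_or_gt (fun hij : (i : ℕ) = (j : ℕ) => hne (Fin.ext hij)) with hij | hij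
  · exact key i j hij j.isLt he'
  · exact key j i hij i.isLt he'.symm

theorem UA.finite (hV : IsGVF Δ Vf) (s t : Finset V) : Finite (UA Δ Vf q s t) := by
  set N := Δ.faces.card with hN
  apply Finite.of_injective (fun A : UA Δ Vf q s t =>
    ((⟨A.r, by have := A.r_le hV; omega⟩ : Fin (N + 1)),
      fun i : Fin (N + 1) => (⟨A.β (min (i : ℕ) A.r), A.βmem _⟩ : {x // x ∈ Δ.faces}),
      fun i : Fin (N + 1) => (⟨A.γ (min (i : ℕ) A.r), A.γmem _⟩ : {x // x ∈ Δ.faces})))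
  intro A B h
  have h1 := congrArg Prod.fst h
  have h2 := congrArg (fun z => z.2.1) h
  have h3 := congrArg (fun z => z.2.2) h
  dsimp at h1 h2 h3
  have hr : A.r = B.r := by
    have := congrArg Fin.val h1
    simpa using this
  have hrN : A.r ≤ N := A.r_le hV
  refine UA.ext' hr ?_ ?_
  · funext n
    have hA : A.β n = A.β (min n A.r) := by
      rcases le_or_gt n A.r with hh | hh
      · rw [min_eq_left hh]
      · rw [min_eq_right hh.le, A.βpad n hh.le]
    have hB : B.β n = B.β (min n B.r) := by
      rcases le_or_gt n B.r with hh | hh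
      · rw [min_eq_left hh]
      · rw [min_eq_right hh.le, B.βpad n hh.le]
    have := congrArg (fun f => (f (⟨min n A.r, by omega⟩ : Fin (N + 1))).val) h2
    dsimp at this
    rw [hA, hB, ← hr]
    rw [← hr, show min (min n A.r) A.r = min n A.r by omega] at this
    exact this
  · funext n
    have hA : A.γ n = A.γ (min n A.r) := by
      rcases le_or_gt n A.r with hh | hh
      · rw [min_eq_left hh]
      · rw [min_eq_right hh.le, A.γpad n hh.le]
    have hB : B.γ n = B.γ (min n B.r) := by
      rcases le_or_gt n B.r with hh | hh
      · rw [min_eq_left hh]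
      · rw [min_eq_right hh.le, B.γpad n hh.le]
    have := congrArg (fun f => (f (⟨min n A.r, by omega⟩ : Fin (N + 1))).val) h3
    dsimp at this
    rw [hA, hB, ← hr]
    rw [← hr, show min (min n A.r) A.r = min n A.r by omega] at this
    exact this

theorem TA.finite (hV : IsGVF Δ Vf) (s t : Finset V) : Finite (TA Δ Vf k s t) := by
  set N := Δ.faces.card with hN
  apply Finite.of_injective (fun A : TA Δ Vf k s t =>
    ((⟨A.r, by have := A.r_le hV; omega⟩ : Fin (N + 1)),
      fun i : Fin (N + 1) => (⟨A.β (min (i : ℕ) A.r), A.βmem _⟩ : {x // x ∈ Δ.faces}),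
      fun i : Fin (N + 1) =>
        if h : (i : ℕ) < A.r then some (⟨A.γ i, A.γmem _ h⟩ : {x // x ∈ Δ.faces}) else none))
  intro A B h
  have h1 := congrArg Prod.fst h
  have h2 := congrArg (fun z => z.2.1) h
  have h3 := congrArg (fun z => z.2.2) h
  dsimp at h1 h2 h3
  have hr : A.r = B.r := by
    have := congrArg Fin.val h1
    simpa using this
  have hrN : A.r ≤ N := A.r_le hV
  refine TA.ext' hr ?_ ?_
  · funext n
    have hA : A.β n = A.β (min n A.r) := by
      rcases le_or_gt n A.r with hh | hh
      · rw [min_eq_left hh]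
      · rw [min_eq_right hh.le, A.βpad n hh.le]
    have hB : B.β n = B.β (min n B.r) := by
      rcases le_or_gt n B.r with hh | hh
      · rw [min_eq_left hh]
      · rw [min_eq_right hh.le, B.βpad n hh.le]
    have := congrArg (fun f => (f (⟨min n A.r, by omega⟩ : Fin (N + 1))).val) h2
    dsimp at this
    rw [hA, hB, ← hr]
    rw [← hr, show min (min n A.r) A.r = min n A.r by omega] at this
    exact this
  · funext n
    rcases lt_or_ge n A.r with hh | hh
    · have := congrArg (fun f => f (⟨n, by omega⟩ : Fin (N + 1))) h3
      dsimp at this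
      rw [dif_pos hh, dif_pos (hr ▸ hh)] at this
      exact congrArg Subtype.val (Option.some.injEq .. ▸ this)
    · rw [A.γpad n hh, B.γpad n (hr ▸ hh)]

end MorseAux
namespace MorseAux

variable {V : Type*} [LinearOrder V] {Δ : SComplex V} {Vf : Finset (Finset V × Finset V)}
  {q k : ℕ} {s t : Finset V}

/-- The tail of a nontrivial `UA`. -/
noncomputable def UA.tail (A : UA Δ Vf q s t) (h : A.r ≠ 0) : UA Δ Vf q (A.β 1) t where
  r := A.r - 1
  β n := A.β (n + 1)
  γ n := A.γ (n + 1)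
  βpad n hn := by
    show A.β (n + 1) = A.β (A.r - 1 + 1)
    rw [show A.r - 1 + 1 = A.r by omega]
    exact A.βpad (n + 1) (by omega)
  γpad n hn := by
    show A.γ (n + 1) = A.γ (A.r - 1 + 1)
    rw [show A.r - 1 + 1 = A.r by omega]
    exact A.γpad (n + 1) (by omega)
  βmem n := A.βmem _
  γmem n := A.γmem _
  βcard n := A.βcard _
  γcard n := A.γcard _
  first := rfl
  last := by
    show A.γ (A.r - 1 + 1) = t
    rw [show A.r - 1 + 1 = A.r by omega]
    exact A.last
  sub n hn := A.sub _ (by omega)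
  vpair n hn := A.vpair _ (by omega)
  βne n hn := A.βne _ (by omega)
  γne n hn := A.γne _ (by omega)

theorem wUA_tail (A : UA Δ Vf q s t) (h : A.r ≠ 0) :
    wUA A = -(incidence (A.γ 0) (A.β 0) * incidence (A.γ 0) (A.β 1)) * wUA (A.tail h) := by
  unfold wUA UA.tail
  dsimp
  rw [show A.r = A.r - 1 + 1 by omega, Finset.prod_range_succ']
  rw [show A.r - 1 + 1 - 1 = A.r - 1 by omega]
  ring_nf

/-- Extending a `UA` by one step at the beginning. -/
noncomputable def UA.cons (p : Finset V × Finset V) (A' : UA Δ Vf q p.1 t)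
    (hp : p ∈ Vf) (hsmem : s ∈ Δ.faces) (hscard : s.card = q) (hssub : s ⊂ p.2)
    (hp2mem : p.2 ∈ Δ.faces) (hp2card : p.2.card = q + 1) (hne : p.1 ≠ s)
    (hj : A'.γ 0 ≠ p.2) : UA Δ Vf q s t where
  r := A'.r + 1
  β n := match n with
    | 0 => s
    | Nat.succ m => A'.β m
  γ n := match n with
    | 0 => p.2
    | Nat.succ m => A'.γ m
  βpad n hn := by
    match n, hn with
    | Nat.succ m, hn => exact A'.βpad m (by omega)
  γpad n hn := by
    match n, hn with
    | Nat.succ m, hn => exact A'.γpad m (by omega)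
  βmem n := by
    match n with
    | 0 => exact hsmem
    | Nat.succ m => exact A'.βmem m
  γmem n := by
    match n with
    | 0 => exact hp2mem
    | Nat.succ m => exact A'.γmem m
  βcard n := by
    match n with
    | 0 => exact hscard
    | Nat.succ m => exact A'.βcard m
  γcard n := by
    match n with
    | 0 => exact hp2card
    | Nat.succ m => exact A'.γcard m
  first := rfl
  last := A'.last
  sub n hn := by
    match n with
    | 0 => exact hssub
    | Nat.succ m => exact A'.sub m (by omega)
  vpair n hn := by
    match n with
    | 0 => show (A'.β 0, p.2) ∈ Vf; rw [A'.first]; exact hp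
    | Nat.succ m => exact A'.vpair m (by omega)
  βne n hn := by
    match n with
    | 0 => show s ≠ A'.β 0; rw [A'.first]; exact fun he => hne he.symm
    | Nat.succ m => exact A'.βne m (by omega)
  γne n hn := by
    match n with
    | 0 => exact hj
    | Nat.succ m => exact A'.γne m (by omega)

theorem wUA_cons (p : Finset V × Finset V) (A' : UA Δ Vf q p.1 t)
    (hp : p ∈ Vf) (hsmem : s ∈ Δ.faces) (hscard : s.card = q) (hssub : s ⊂ p.2)
    (hp2mem : p.2 ∈ Δ.faces) (hp2card : p.2.card = q + 1) (hne : p.1 ≠ s)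
    (hj : A'.γ 0 ≠ p.2) :
    wUA (UA.cons (s := s) p A' hp hsmem hscard hssub hp2mem hp2card hne hj) =
      -(incidence p.2 s * incidence p.2 (A'.β 0)) * wUA A' := by
  unfold wUA UA.cons
  dsimp
  rw [Finset.prod_range_succ']
  ring

/-- The recursion for the co-boundary coefficient, by splitting off the first step of a
co-trajectory. -/
theorem cb_rec (hV : IsGVF Δ Vf) {q : ℕ} {t υ : Finset V}
    (hυmem : υ ∈ Δ.faces) (hυcard : υ.card = q + 1)
    (hυnp : ∀ p ∈ Vf, υ ≠ p.1 ∧ υ ≠ p.2)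
    (ht : t ∈ Δ.faces) (htc : t.card = q) :
    cbCoeff Δ Vf q t υ = incidence υ t +
      ∑ p ∈ Vf.filter (fun p => p.1.card = q ∧ t ⊆ p.2 ∧ p.1 ≠ t),
        (-(incidence p.2 t * incidence p.2 p.1)) * cbCoeff Δ Vf q p.1 υ := by
  letI : ∀ s : Finset V, Fintype (UA Δ Vf q s υ) := fun s =>
    @Fintype.ofFinite _ (UA.finite hV s υ)
  have hrw : ∀ s : Finset V, cbCoeff Δ Vf q s υ = ∑ A : UA Δ Vf q s υ, wUA A := by
    intro s
    rw [cbCoeff_eq_UA, finsum_eq_sum_of_fintype]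
  rw [hrw]
  have hsplit := Finset.sum_filter_add_sum_filter_not
    (Finset.univ : Finset (UA Δ Vf q t υ)) (fun A => A.r = 0) wUA
  rw [← hsplit]
  congr 1
  · -- trivial co-trajectories
    by_cases hsub : t ⊆ υ
    · have hts : t ⊂ υ := hsub.ssubset_of_ne (fun he => by rw [he] at htc; omega)
      let A0 : UA Δ Vf q t υ :=
        { r := 0, β := fun _ => t, γ := fun _ => υ
          βpad := fun _ _ => rfl, γpad := fun _ _ => rfl
          βmem := fun _ => ht, γmem := fun _ => hυmem
          βcard := fun _ => htc, γcard := fun _ => hυcard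
          first := rfl, last := rfl
          sub := fun _ _ => hts
          vpair := fun n hn => absurd hn (by omega)
          βne := fun n hn => absurd hn (by omega)
          γne := fun n hn => absurd hn (by omega) }
      have hset : Finset.univ.filter (fun A : UA Δ Vf q t υ => A.r = 0) = {A0} := by
        ext A
        simp only [Finset.mem_filter, Finset.mem_univ, true_and, Finset.mem_singleton]
        constructor
        · intro hr
          refine UA.ext' (by exact hr) ?_ ?_
          · funext n
            show A.β n = t
            rw [A.βpad n (by omega), show A.r = 0 from hr]
            exact A.first
          · funext n
            show A.γ n = υ
            rw [A.γpad n (by omega)]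
            exact A.last
        · rintro rfl
          rfl
      rw [hset, Finset.sum_singleton]
      show (∏ n ∈ Finset.range 0, _) * incidence υ t = incidence υ t
      rw [Finset.range_zero, Finset.prod_empty, one_mul]
    · have hset : Finset.univ.filter (fun A : UA Δ Vf q t υ => A.r = 0) = ∅ := by
        ext A
        simp only [Finset.mem_filter, Finset.mem_univ, true_and, Finset.notMem_empty,
          iff_false]
        intro hr
        apply hsub
        have h1 := A.sub 0 (by omega)
        have h2 : A.γ 0 = υ := (congrArg A.γ hr.symm).trans A.last
        rw [A.first, h2] at h1
        exact h1.subset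
      rw [hset, Finset.sum_empty, incidence_of_not (fun hc => hsub hc.1)]
  · -- nontrivial co-trajectories
    have hrw2 : ∀ p ∈ Vf.filter (fun p => p.1.card = q ∧ t ⊆ p.2 ∧ p.1 ≠ t),
        (-(incidence p.2 t * incidence p.2 p.1)) * cbCoeff Δ Vf q p.1 υ =
        ∑ A' : UA Δ Vf q p.1 υ, (-(incidence p.2 t * incidence p.2 p.1)) * wUA A' := by
      intro p _
      rw [hrw, Finset.mul_sum]
    rw [Finset.sum_congr rfl hrw2]
    rw [Finset.sum_sigma' (Vf.filter (fun p => p.1.card = q ∧ t ⊆ p.2 ∧ p.1 ≠ t))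
      (fun p => (Finset.univ : Finset (UA Δ Vf q p.1 υ)))
      (fun p A' => (-(incidence p.2 t * incidence p.2 p.1)) * wUA A')]
    refine Finset.sum_bij'
      (fun (A : UA Δ Vf q t υ) (hA : A ∈ Finset.univ.filter (fun A => ¬ A.r = 0)) =>
        (⟨(A.β 1, A.γ 0), A.tail (by
          simp only [Finset.mem_filter, Finset.mem_univ, true_and] at hA
          exact hA)⟩ :
          Σ p : Finset V × Finset V, UA Δ Vf q p.1 υ))
      (fun z hz => UA.cons z.1 z.2
        (by
          simp only [Finset.mem_sigma, Finset.mem_filter, Finset.mem_univ, true_and,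
            and_true] at hz
          exact hz.1)
        ht htc
        (by
          simp only [Finset.mem_sigma, Finset.mem_filter, Finset.mem_univ, true_and,
            and_true] at hz
          refine hz.2.2.1.ssubset_of_ne (fun he => ?_)
          have := (hV.1.1 z.1 hz.1).2.2.2
          rw [← he] at this
          omega)
        ((hV.1.1 z.1 (by
          simp only [Finset.mem_sigma, Finset.mem_filter, Finset.mem_univ, true_and,
            and_true] at hz
          exact hz.1)).2.1)
        (by
          simp only [Finset.mem_sigma, Finset.mem_filter, Finset.mem_univ, true_and,
            and_true] at hz
          rw [(hV.1.1 z.1 hz.1).2.2.2, hz.2.1])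
        (by
          simp only [Finset.mem_sigma, Finset.mem_filter, Finset.mem_univ, true_and,
            and_true] at hz
          exact hz.2.2.2)
        (by
          simp only [Finset.mem_sigma, Finset.mem_filter, Finset.mem_univ, true_and,
            and_true] at hz
          rcases Nat.eq_zero_or_pos z.2.r with h0 | h0
          · have hlast : z.2.γ 0 = υ := (congrArg z.2.γ h0.symm).trans z.2.last
            rw [hlast]
            exact fun he => (hυnp z.1 hz.1).2 he
          · intro he
            have hp' := z.2.vpair 0 h0
            have heq2 : (z.2.β 1, z.2.γ 0) = z.1 := pair_eq hV.1 hp' hz.1 (by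
              right; right; right; exact he)
            have hb := congrArg Prod.fst heq2
            dsimp at hb
            exact z.2.βne 0 h0 (by rw [z.2.first, hb])))
      ?_ ?_ ?_ ?_ ?_
    · -- hi : i maps into the sigma finset
      intro A hA
      simp only [Finset.mem_filter, Finset.mem_univ, true_and] at hA
      simp only [Finset.mem_sigma, Finset.mem_filter, Finset.mem_univ, true_and, and_true]
      refine ⟨A.vpair 0 (by omega), A.βcard 1, ?_, ?_⟩
      · have h1 := A.sub 0 (by omega)
        rw [A.first] at h1
        exact h1.subset
      · have h1 := A.βne 0 (by omega)
        rw [A.first] at h1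
        exact fun he => h1 (by rw [he])
    · -- hj : j maps into the filter
      intro z hz
      simp only [Finset.mem_filter, Finset.mem_univ, true_and]
      show ¬ (z.2.r + 1 = 0)
      omega
    · -- left inverse
      intro A hA
      simp only [Finset.mem_filter, Finset.mem_univ, true_and] at hA
      refine UA.ext' ?_ ?_ ?_
      · show A.r - 1 + 1 = A.r
        omega
      · funext n
        cases n with
        | zero => exact A.first.symm
        | succ m => rfl
      · funext n
        cases n with
        | zero => rfl
        | succ m => rfl
    · -- right inverse
      intro z hz
      rcases z with ⟨p, A'⟩
      refine Sigma.ext ?_ ?_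
      · show (A'.β 0, p.2) = p
        rw [A'.first]
      · show HEq _ A'
        exact UA.heq' A'.first rfl rfl rfl rfl
    · -- weights
      intro A hA
      simp only [Finset.mem_filter, Finset.mem_univ, true_and] at hA
      rw [wUA_tail A hA]
      rw [A.first]

end MorseAux
namespace MorseAux

variable {V : Type*} [LinearOrder V] {Δ : SComplex V} {Vf : Finset (Finset V × Finset V)}
  {q k : ℕ} {s t : Finset V}

/-- Forgetting the last upper simplex of a `UA` gives a `TA`. -/
noncomputable def UA.toTA {σ τ : Finset V} (A : UA Δ Vf (k + 1) σ τ) :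
    TA Δ Vf k σ (A.β A.r) where
  r := A.r
  β := A.β
  γ n := if n < A.r then A.γ n else ∅
  βpad := A.βpad
  γpad n hn := by
    show (if n < A.r then A.γ n else ∅) = ∅
    rw [if_neg (by omega)]
  βmem := A.βmem
  γmem n hn := by
    show (if n < A.r then A.γ n else ∅) ∈ Δ.faces
    rw [if_pos hn]; exact A.γmem n
  βcard := A.βcard
  γcard n hn := by
    show (if n < A.r then A.γ n else ∅).card = k + 2
    rw [if_pos hn]; exact A.γcard n
  first := A.first
  last := rfl
  sub n hn := by
    show A.β n ⊂ (if n < A.r then A.γ n else ∅)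
    rw [if_pos hn]; exact A.sub n (by omega)
  vpair n hn := by
    show (A.β (n + 1), if n < A.r then A.γ n else ∅) ∈ Vf
    rw [if_pos hn]; exact A.vpair n hn
  βne := A.βne

/-- Appending the final upper simplex `τ` to a `TA` gives a `UA`. -/
noncomputable def TA.toUA {σ τ x : Finset V} (P : TA Δ Vf k σ x)
    (hD : IsDVF Δ Vf) (hτmem : τ ∈ Δ.faces) (hτcard : τ.card = k + 2)
    (hτnp : ∀ p ∈ Vf, τ ≠ p.1 ∧ τ ≠ p.2) (hx : x ⊆ τ) : UA Δ Vf (k + 1) σ τ where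
  r := P.r
  β := P.β
  γ n := if n < P.r then P.γ n else τ
  βpad := P.βpad
  γpad n hn := by
    show (if n < P.r then P.γ n else τ) = (if P.r < P.r then P.γ P.r else τ)
    rw [if_neg (by omega), if_neg (by omega)]
  βmem := P.βmem
  γmem n := by
    show (if n < P.r then P.γ n else τ) ∈ Δ.faces
    split
    · exact P.γmem n (by assumption)
    · exact hτmem
  βcard := P.βcard
  γcard n := by
    show (if n < P.r then P.γ n else τ).card = k + 1 + 1
    split
    · exact P.γcard n (by assumption)
    · exact hτcard
  first := P.first
  last := by
    show (if P.r < P.r then P.γ P.r else τ) = τ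
    rw [if_neg (by omega)]
  sub n hn := by
    show P.β n ⊂ (if n < P.r then P.γ n else τ)
    rcases lt_or_eq_of_le hn with hlt | heq
    · rw [if_pos hlt]; exact P.sub n hlt
    · rw [heq, if_neg (by omega)]
      have hc := P.βcard P.r
      have : P.β P.r ⊆ τ := by rw [P.last]; exact hx
      exact this.ssubset_of_ne (fun he => by rw [he] at hc; omega)
  vpair n hn := by
    show (P.β (n + 1), if n < P.r then P.γ n else τ) ∈ Vf
    rw [if_pos hn]; exact P.vpair n hn
  βne := P.βne
  γne n hn := by
    show (if n + 1 < P.r then P.γ (n + 1) else τ) ≠ (if n < P.r then P.γ n else τ)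
    rw [if_pos hn]
    rcases lt_or_ge (n + 1) P.r with hlt | hge
    · rw [if_pos hlt]
      intro he
      have h1 := P.vpair n hn
      have h2 := P.vpair (n + 1) hlt
      have := pair_eq hD h1 h2 (by right; right; right; exact he.symm)
      exact P.βne (n + 1) hlt (congrArg Prod.fst this)
    · rw [if_neg (by omega)]
      intro he
      exact (hτnp _ (P.vpair n hn)).2 he

theorem wUA_toUA {σ τ x : Finset V} (P : TA Δ Vf k σ x)
    (hD : IsDVF Δ Vf) (hτmem : τ ∈ Δ.faces) (hτcard : τ.card = k + 2)
    (hτnp : ∀ p ∈ Vf, τ ≠ p.1 ∧ τ ≠ p.2) (hx : x ⊆ τ) :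
    wUA (P.toUA hD hτmem hτcard hτnp hx) = wTA P * incidence τ x := by
  unfold wUA wTA TA.toUA
  dsimp
  rw [if_neg (lt_irrefl P.r), P.last]
  congr 1
  apply Finset.prod_congr rfl
  intro n hn
  rw [Finset.mem_range] at hn
  rw [if_pos hn]

/-- Splitting a co-trajectory ending at a critical simplex `τ` at its final step. -/
theorem cb_eq_mu (hV : IsGVF Δ Vf) {k : ℕ} {σ τ : Finset V}
    (hτmem : τ ∈ Δ.faces) (hτcard : τ.card = k + 2)
    (hτnp : ∀ p ∈ Vf, τ ≠ p.1 ∧ τ ≠ p.2) :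
    cbCoeff Δ Vf (k + 1) σ τ =
      ∑ x ∈ Δ.faces.filter (fun x => x.card = k + 1 ∧ x ⊆ τ),
        ATsum Δ Vf k σ x * incidence τ x := by
  letI : ∀ s t : Finset V, Fintype (UA Δ Vf (k + 1) s t) := fun s t =>
    @Fintype.ofFinite _ (UA.finite hV s t)
  letI : ∀ s t : Finset V, Fintype (TA Δ Vf k s t) := fun s t =>
    @Fintype.ofFinite _ (TA.finite hV s t)
  rw [cbCoeff_eq_UA, finsum_eq_sum_of_fintype]
  have hrw : ∀ x ∈ Δ.faces.filter (fun x => x.card = k + 1 ∧ x ⊆ τ),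
      ATsum Δ Vf k σ x * incidence τ x =
      ∑ P : TA Δ Vf k σ x, wTA P * incidence τ x := by
    intro x _
    rw [ATsum, finsum_eq_sum_of_fintype, Finset.sum_mul]
  rw [Finset.sum_congr rfl hrw]
  rw [Finset.sum_sigma' (Δ.faces.filter (fun x => x.card = k + 1 ∧ x ⊆ τ))
    (fun x => (Finset.univ : Finset (TA Δ Vf k σ x)))
    (fun x P => wTA P * incidence τ x)]
  refine Finset.sum_bij'
    (fun (A : UA Δ Vf (k + 1) σ τ) (_ : A ∈ Finset.univ) =>
      (⟨A.β A.r, A.toTA⟩ : Σ x : Finset V, TA Δ Vf k σ x))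
    (fun z hz => TA.toUA z.2 hV.1 hτmem hτcard hτnp (by
      simp only [Finset.mem_sigma, Finset.mem_filter, Finset.mem_univ, true_and,
        and_true] at hz
      exact hz.2.2))
    ?_ ?_ ?_ ?_ ?_
  · -- membership forward
    intro A _
    simp only [Finset.mem_sigma, Finset.mem_filter, Finset.mem_univ, true_and, and_true]
    refine ⟨A.βmem A.r, A.βcard A.r, ?_⟩
    have h1 := A.sub A.r (le_refl _)
    rw [A.last] at h1
    exact h1.subset
  · intro z hz
    exact Finset.mem_univ _
  · -- left inverse
    intro A _
    refine UA.ext' rfl rfl ?_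
    funext n
    show (if n < A.r then (if n < A.r then A.γ n else ∅) else τ) = A.γ n
    rcases lt_or_ge n A.r with hlt | hge
    · rw [if_pos hlt, if_pos hlt]
    · rw [if_neg (by omega), A.γpad n hge, A.last]
  · -- right inverse
    intro z hz
    rcases z with ⟨x, P⟩
    refine Sigma.ext P.last ?_
    refine TA.heq' rfl P.last rfl rfl ?_
    funext n
    show (if n < P.r then (if n < P.r then P.γ n else τ) else ∅) = P.γ n
    rcases lt_or_ge n P.r with hlt | hge
    · rw [if_pos hlt, if_pos hlt]
    · rw [if_neg (by omega), P.γpad n hge]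
  · -- weights
    intro A _
    show wUA A = wTA A.toTA * incidence τ (A.β A.r)
    unfold wUA wTA UA.toTA
    dsimp
    have hlast : A.γ A.r = τ := A.last
    rw [hlast]
    congr 1
    apply Finset.prod_congr rfl
    intro n hn
    rw [Finset.mem_range] at hn
    rw [if_pos hn]

end MorseAux
namespace MorseAux

variable {V : Type*} [LinearOrder V] {Δ : SComplex V} {Vf : Finset (Finset V × Finset V)}
  {q k : ℕ} {s t : Finset V}

/-- Dropping the last step of a `TA`. -/
noncomputable def TA.init {σ x : Finset V} (P : TA Δ Vf k σ x) (h : P.r ≠ 0) :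
    TA Δ Vf k σ (P.β (P.r - 1)) where
  r := P.r - 1
  β n := P.β (min n (P.r - 1))
  γ n := if n < P.r - 1 then P.γ n else ∅
  βpad n hn := by
    show P.β (min n (P.r - 1)) = P.β (min (P.r - 1) (P.r - 1))
    rw [min_eq_right hn, min_self]
  γpad n hn := by
    show (if n < P.r - 1 then P.γ n else ∅) = ∅
    rw [if_neg (by omega)]
  βmem n := P.βmem _
  γmem n hn := by
    show (if n < P.r - 1 then P.γ n else ∅) ∈ Δ.faces
    rw [if_pos hn]; exact P.γmem n (by omega)
  βcard n := P.βcard _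
  γcard n hn := by
    show (if n < P.r - 1 then P.γ n else ∅).card = k + 2
    rw [if_pos hn]; exact P.γcard n (by omega)
  first := by
    show P.β (min 0 (P.r - 1)) = σ
    rw [Nat.zero_min]; exact P.first
  last := by
    show P.β (min (P.r - 1) (P.r - 1)) = P.β (P.r - 1)
    rw [min_self]
  sub n hn := by
    show P.β (min n (P.r - 1)) ⊂ (if n < P.r - 1 then P.γ n else ∅)
    rw [if_pos hn, min_eq_left (by omega)]
    exact P.sub n (by omega)
  vpair n hn := by
    show (P.β (min (n + 1) (P.r - 1)), if n < P.r - 1 then P.γ n else ∅) ∈ Vf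
    rw [if_pos hn, min_eq_left (by omega)]
    exact P.vpair n (by omega)
  βne n hn := by
    show P.β (min n (P.r - 1)) ≠ P.β (min (n + 1) (P.r - 1))
    rw [min_eq_left (by omega), min_eq_left (by omega)]
    exact P.βne n (by omega)

theorem wTA_init {σ x : Finset V} (P : TA Δ Vf k σ x) (h : P.r ≠ 0) :
    wTA P = wTA (P.init h) *
      -(incidence (P.γ (P.r - 1)) (P.β (P.r - 1)) * incidence (P.γ (P.r - 1)) (P.β P.r)) := by
  have hr : P.r = (P.r - 1) + 1 := by omega
  have h1 : wTA P = (∏ n ∈ Finset.range (P.r - 1),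
      -(incidence (P.γ n) (P.β n) * incidence (P.γ n) (P.β (n + 1)))) *
      -(incidence (P.γ (P.r - 1)) (P.β (P.r - 1)) * incidence (P.γ (P.r - 1)) (P.β P.r)) := by
    rw [wTA, hr, Finset.prod_range_succ, ← hr]
  rw [h1]
  congr 1
  unfold wTA TA.init
  dsimp
  apply Finset.prod_congr rfl
  intro n hn
  rw [Finset.mem_range] at hn
  rw [if_pos hn, min_eq_left (by omega), min_eq_left (by omega)]

/-- Appending a final step to a `TA`. -/
noncomputable def TA.snoc {σ y : Finset V} (P' : TA Δ Vf k σ y) (p : Finset V × Finset V)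
    (hp : p ∈ Vf) (hxmem : p.1 ∈ Δ.faces) (hxcard : p.1.card = k + 1)
    (hp2mem : p.2 ∈ Δ.faces) (hp2card : p.2.card = k + 2)
    (hysub : y ⊂ p.2) (hyne : y ≠ p.1) : TA Δ Vf k σ p.1 where
  r := P'.r + 1
  β n := if n ≤ P'.r then P'.β n else p.1
  γ n := if n < P'.r then P'.γ n else if n = P'.r then p.2 else ∅
  βpad n hn := by
    show (if n ≤ P'.r then P'.β n else p.1) = (if P'.r + 1 ≤ P'.r then P'.β (P'.r + 1) else p.1)
    rw [if_neg (by omega), if_neg (by omega)]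
  γpad n hn := by
    show (if n < P'.r then P'.γ n else if n = P'.r then p.2 else ∅) = ∅
    rw [if_neg (by omega), if_neg (by omega)]
  βmem n := by
    show (if n ≤ P'.r then P'.β n else p.1) ∈ Δ.faces
    split
    · exact P'.βmem n
    · exact hxmem
  γmem n hn := by
    show (if n < P'.r then P'.γ n else if n = P'.r then p.2 else ∅) ∈ Δ.faces
    rcases lt_or_ge n P'.r with hlt | hge
    · rw [if_pos hlt]; exact P'.γmem n hlt
    · rw [if_neg (by omega), if_pos (by omega)]; exact hp2mem
  βcard n := by
    show (if n ≤ P'.r then P'.β n else p.1).card = k + 1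
    split
    · exact P'.βcard n
    · exact hxcard
  γcard n hn := by
    show (if n < P'.r then P'.γ n else if n = P'.r then p.2 else ∅).card = k + 2
    rcases lt_or_ge n P'.r with hlt | hge
    · rw [if_pos hlt]; exact P'.γcard n hlt
    · rw [if_neg (by omega), if_pos (by omega)]; exact hp2card
  first := by
    show (if 0 ≤ P'.r then P'.β 0 else p.1) = σ
    rw [if_pos (by omega)]; exact P'.first
  last := by
    show (if P'.r + 1 ≤ P'.r then P'.β (P'.r + 1) else p.1) = p.1
    rw [if_neg (by omega)]
  sub n hn := by
    show (if n ≤ P'.r then P'.β n else p.1) ⊂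
      (if n < P'.r then P'.γ n else if n = P'.r then p.2 else ∅)
    rcases lt_or_ge n P'.r with hlt | hge
    · rw [if_pos (by omega : n ≤ P'.r), if_pos hlt]; exact P'.sub n hlt
    · have hn' : n = P'.r := by omega
      rw [if_pos (by omega : n ≤ P'.r), if_neg (by omega), if_pos hn', hn']
      rw [P'.last]
      exact hysub
  vpair n hn := by
    show (if n + 1 ≤ P'.r then P'.β (n + 1) else p.1,
      if n < P'.r then P'.γ n else if n = P'.r then p.2 else ∅) ∈ Vf
    rcases lt_or_ge n P'.r with hlt | hge
    · rw [if_pos (by omega : n + 1 ≤ P'.r), if_pos hlt]; exact P'.vpair n hlt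
    · have hn' : n = P'.r := by omega
      rw [if_neg (by omega), if_neg (by omega), if_pos hn']
      exact hp
  βne n hn := by
    show (if n ≤ P'.r then P'.β n else p.1) ≠ (if n + 1 ≤ P'.r then P'.β (n + 1) else p.1)
    rcases lt_or_ge n P'.r with hlt | hge
    · rw [if_pos (by omega : n ≤ P'.r), if_pos (by omega : n + 1 ≤ P'.r)]
      exact P'.βne n hlt
    · have hn' : n = P'.r := by omega
      rw [if_pos (by omega : n ≤ P'.r), if_neg (by omega : ¬ n + 1 ≤ P'.r), hn', P'.last]
      exact hyne

theorem wTA_snoc {σ y : Finset V} (P' : TA Δ Vf k σ y) (p : Finset V × Finset V)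
    (hp : p ∈ Vf) (hxmem : p.1 ∈ Δ.faces) (hxcard : p.1.card = k + 1)
    (hp2mem : p.2 ∈ Δ.faces) (hp2card : p.2.card = k + 2)
    (hysub : y ⊂ p.2) (hyne : y ≠ p.1) :
    wTA (P'.snoc p hp hxmem hxcard hp2mem hp2card hysub hyne) =
      -(incidence p.2 y * incidence p.2 p.1) * wTA P' := by
  unfold wTA TA.snoc
  dsimp
  rw [Finset.prod_range_succ]
  rw [if_neg (lt_irrefl P'.r), if_pos rfl, if_pos (le_refl P'.r), if_neg (by omega),
    P'.last]
  rw [mul_comm]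
  congr 1
  apply Finset.prod_congr rfl
  intro n hn
  rw [Finset.mem_range] at hn
  rw [if_pos hn, if_pos (by omega : n ≤ P'.r), if_pos (by omega : n + 1 ≤ P'.r)]

/-- The weighted sums of open co-trajectories satisfy: the "column" of any simplex that is
the second component of a vector-field pair vanishes. -/
theorem mu_zero (hV : IsGVF Δ Vf) {k : ℕ} {σ : Finset V} (hσ : σ ∈ critC Δ Vf (k + 1))
    {p : Finset V × Finset V} (hp : p ∈ Vf) (hpc : p.1.card = k + 1) :
    ∑ x ∈ Δ.faces.filter (fun x => x.card = k + 1), ATsum Δ Vf k σ x * incidence p.2 x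
      = 0 := by
  letI : ∀ s t : Finset V, Fintype (TA Δ Vf k s t) := fun s t =>
    @Fintype.ofFinite _ (TA.finite hV s t)
  have hxmem : p.1 ∈ Δ.faces := (hV.1.1 p hp).1
  have hp2mem : p.2 ∈ Δ.faces := (hV.1.1 p hp).2.1
  have hp2card : p.2.card = k + 2 := by rw [(hV.1.1 p hp).2.2.2, hpc]
  have hpsub : p.1 ⊂ p.2 := (hV.1.1 p hp).2.2.1
  have hne : p.1 ≠ σ := crit_not_fst hV.1 hσ p hp
  have hrpos : ∀ P : TA Δ Vf k σ p.1, P.r ≠ 0 := by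
    intro P h0
    exact hne (P.last.symm.trans ((congrArg P.β h0).trans P.first))
  -- the pair partner of the last step of any `P : TA Δ Vf k σ p.1` is `p` itself
  have hlastpair : ∀ P : TA Δ Vf k σ p.1, P.γ (P.r - 1) = p.2 := by
    intro P
    have h0 := hrpos P
    have h1 := P.vpair (P.r - 1) (by omega)
    rw [show P.r - 1 + 1 = P.r by omega, P.last] at h1
    have := pair_eq hV.1 h1 hp (Or.inl rfl)
    exact congrArg Prod.snd this
  -- recursion for `ATsum Δ Vf k σ p.1`
  have hrec : ATsum Δ Vf k σ p.1 =
      ∑ y ∈ Δ.faces.filter (fun y => y.card = k + 1 ∧ y ⊆ p.2 ∧ y ≠ p.1),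
        -(incidence p.2 y * incidence p.2 p.1) * ATsum Δ Vf k σ y := by
    rw [ATsum, finsum_eq_sum_of_fintype]
    have hrw : ∀ y ∈ Δ.faces.filter (fun y => y.card = k + 1 ∧ y ⊆ p.2 ∧ y ≠ p.1),
        -(incidence p.2 y * incidence p.2 p.1) * ATsum Δ Vf k σ y =
        ∑ P' : TA Δ Vf k σ y, -(incidence p.2 y * incidence p.2 p.1) * wTA P' := by
      intro y _
      rw [ATsum, finsum_eq_sum_of_fintype, Finset.mul_sum]
    rw [Finset.sum_congr rfl hrw]
    rw [Finset.sum_sigma' (Δ.faces.filter (fun y => y.card = k + 1 ∧ y ⊆ p.2 ∧ y ≠ p.1))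
      (fun y => (Finset.univ : Finset (TA Δ Vf k σ y)))
      (fun y P' => -(incidence p.2 y * incidence p.2 p.1) * wTA P')]
    refine Finset.sum_bij'
      (fun (P : TA Δ Vf k σ p.1) (_ : P ∈ Finset.univ) =>
        (⟨P.β (P.r - 1), P.init (hrpos P)⟩ : Σ y : Finset V, TA Δ Vf k σ y))
      (fun z hz => TA.snoc z.2 p hp hxmem hpc hp2mem hp2card
        (by
          simp only [Finset.mem_sigma, Finset.mem_filter, Finset.mem_univ, true_and,
            and_true] at hz
          refine hz.2.2.1.ssubset_of_ne (fun he => ?_)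
          have h1 := hz.2.1
          rw [he, hp2card] at h1
          omega)
        (by
          simp only [Finset.mem_sigma, Finset.mem_filter, Finset.mem_univ, true_and,
            and_true] at hz
          exact hz.2.2.2))
      ?_ ?_ ?_ ?_ ?_
    · -- forward membership
      intro P _
      have h0 := hrpos P
      simp only [Finset.mem_sigma, Finset.mem_filter, Finset.mem_univ, true_and, and_true]
      refine ⟨P.βmem _, P.βcard _, ?_, ?_⟩
      · have h1 := (P.sub (P.r - 1) (by omega)).subset
        rw [hlastpair P] at h1
        exact h1
      · have h1 := P.βne (P.r - 1) (by omega)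
        rw [show P.r - 1 + 1 = P.r by omega, P.last] at h1
        exact h1
    · intro z hz
      exact Finset.mem_univ _
    · -- left inverse
      intro P _
      have h0 := hrpos P
      refine TA.ext' (by show P.r - 1 + 1 = P.r; omega) ?_ ?_
      · funext n
        show (if n ≤ P.r - 1 then P.β (min n (P.r - 1)) else p.1) = P.β n
        rcases le_or_gt n (P.r - 1) with hle | hgt
        · rw [if_pos hle, min_eq_left hle]
        · rw [if_neg (by omega), P.βpad n (by omega), P.last]
      · funext n
        show (if n < P.r - 1 then (if n < P.r - 1 then P.γ n else ∅)
            else if n = P.r - 1 then p.2 else ∅) = P.γ n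
        rcases lt_or_ge n (P.r - 1) with hlt | hge
        · rw [if_pos hlt, if_pos hlt]
        · rcases eq_or_lt_of_le hge with heq | hgt
          · rw [if_neg (by omega), if_pos heq.symm, ← heq, hlastpair P]
          · rw [if_neg (by omega), if_neg (by omega), P.γpad n (by omega)]
    · -- right inverse
      intro z hz
      rcases z with ⟨y, P'⟩
      have hfst : (if P'.r + 1 - 1 ≤ P'.r then P'.β (P'.r + 1 - 1) else p.1) = y := by
        rw [if_pos (by omega)]
        exact P'.last
      refine Sigma.ext hfst ?_
      refine TA.heq' rfl hfst rfl ?_ ?_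
      · funext n
        show (if min n (P'.r + 1 - 1) ≤ P'.r then P'.β (min n (P'.r + 1 - 1)) else p.1)
          = P'.β n
        rw [if_pos (by omega)]
        rcases le_or_gt n P'.r with hle | hgt
        · rw [min_eq_left (by omega)]
        · rw [min_eq_right (by omega)]
          exact (P'.βpad n (by omega)).symm.trans (congrArg P'.β (by omega))
      · funext n
        show (if n < P'.r + 1 - 1 then
            (if n < P'.r then P'.γ n else if n = P'.r then p.2 else ∅) else ∅) = P'.γ n
        rcases lt_or_ge n P'.r with hlt | hge
        · rw [if_pos (by omega), if_pos hlt]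
        · rw [if_neg (by omega), P'.γpad n hge]
    · -- weights
      intro P _
      have h0 := hrpos P
      rw [wTA_init P h0, hlastpair P, P.last]
      ring
  -- now the algebraic cancellation
  have hmem : p.1 ∈ Δ.faces.filter (fun x => x.card = k + 1) := by
    simp only [Finset.mem_filter]
    exact ⟨hxmem, hpc⟩
  rw [← Finset.sum_erase_add _ _ hmem]
  have hrec2 : ATsum Δ Vf k σ p.1 =
      ∑ y ∈ (Δ.faces.filter (fun x => x.card = k + 1)).erase p.1,
        -(incidence p.2 y * incidence p.2 p.1) * ATsum Δ Vf k σ y := by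
    rw [hrec]
    apply Finset.sum_subset
    · intro y hy
      simp only [Finset.mem_filter, Finset.mem_erase] at hy ⊢
      tauto
    · intro y hy hny
      simp only [Finset.mem_filter, Finset.mem_erase] at hy hny
      have : ¬ y ⊆ p.2 := by tauto
      rw [incidence_of_not (fun hc => this hc.1)]
      ring
  rw [hrec2, Finset.sum_mul, ← Finset.sum_add_distrib]
  apply Finset.sum_eq_zero
  intro y hy
  have hsd : (p.2 \ p.1).card = 1 := by
    rw [Finset.card_sdiff_of_subset hpsub.subset]
    omega
  have hcx := incidence_mul_self hpsub.subset hsd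
  linear_combination (-(ATsum Δ Vf k σ y * incidence p.2 y)) * hcx

end MorseAux
namespace MorseAux

variable {V : Type*} [LinearOrder V] {Δ : SComplex V} {Vf : Finset (Finset V × Finset V)}

/-- The key orthogonality: composing two Morse coboundary coefficients vanishes. -/
theorem key (hV : IsGVF Δ Vf) (k : ℕ) {σ υ : Finset V} (hσ : σ ∈ critC Δ Vf (k + 1))
    (hυ : υ ∈ critC Δ Vf (k + 3)) :
    ∑ τ ∈ critC Δ Vf (k + 2), cbCoeff Δ Vf (k + 1) σ τ * cbCoeff Δ Vf (k + 2) τ υ = 0 := by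
  have hυmem : υ ∈ Δ.faces := (Finset.mem_filter.1 hυ).1
  have hυcard : υ.card = k + 3 := (Finset.mem_filter.1 hυ).2.1
  have hυnp : ∀ p ∈ Vf, υ ≠ p.1 ∧ υ ≠ p.2 := crit_no_pair (by omega) hυ
  -- abbreviations (written out everywhere)
  -- Fc1 = Δ.faces.filter (card = k+1), Fc2 = Δ.faces.filter (card = k+2)
  -- μ t = ∑ x ∈ Fc1, ATsum Δ Vf k σ x * incidence t x
  -- HU t = cbCoeff Δ Vf (k+2) t υ
  -- G t = incidence υ t + ∑ p ∈ E, -(incidence p.2 t * incidence p.2 p.1) * HU p.1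
  --   where E = Vf.filter (p.1.card = k+2)
  have hBig : ∀ g : Finset V, g ∈ Δ.faces →
      ∑ t ∈ Δ.faces.filter (fun t => t.card = k + 2),
        (∑ x ∈ Δ.faces.filter (fun x => x.card = k + 1),
          ATsum Δ Vf k σ x * incidence t x) * incidence g t = 0 := by
    intro g hg
    have h1 : ∀ t ∈ Δ.faces.filter (fun t => t.card = k + 2),
        (∑ x ∈ Δ.faces.filter (fun x => x.card = k + 1),
          ATsum Δ Vf k σ x * incidence t x) * incidence g t
        = ∑ x ∈ Δ.faces.filter (fun x => x.card = k + 1),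
            ATsum Δ Vf k σ x * (incidence g t * incidence t x) := by
      intro t _
      rw [Finset.sum_mul]
      apply Finset.sum_congr rfl
      intro x _
      ring
    rw [Finset.sum_congr rfl h1, Finset.sum_comm]
    apply Finset.sum_eq_zero
    intro x _
    rw [← Finset.mul_sum, dsq_faces hg x (k + 2), mul_zero]
  -- the recursion, reorganized: G t versus HU t
  have hGrel : ∀ t ∈ Δ.faces.filter (fun t => t.card = k + 2),
      incidence υ t + ∑ p ∈ Vf.filter (fun p => p.1.card = k + 2),
          -(incidence p.2 t * incidence p.2 p.1) * cbCoeff Δ Vf (k + 2) p.1 υ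
      = cbCoeff Δ Vf (k + 2) t υ +
        ∑ p ∈ (Vf.filter (fun p => p.1.card = k + 2)).filter (fun p => p.1 = t),
          -(incidence p.2 t * incidence p.2 p.1) * cbCoeff Δ Vf (k + 2) p.1 υ := by
    intro t ht
    simp only [Finset.mem_filter] at ht
    have hrec := cb_rec hV (q := k + 2) hυmem (by omega) hυnp ht.1 ht.2
    rw [← Finset.sum_filter_add_sum_filter_not
      (Vf.filter (fun p => p.1.card = k + 2)) (fun p => p.1 = t)
      (fun p => -(incidence p.2 t * incidence p.2 p.1) * cbCoeff Δ Vf (k + 2) p.1 υ)]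
    have hS1 : ∑ p ∈ (Vf.filter (fun p => p.1.card = k + 2)).filter (fun p => ¬ p.1 = t),
        -(incidence p.2 t * incidence p.2 p.1) * cbCoeff Δ Vf (k + 2) p.1 υ
        = ∑ p ∈ Vf.filter (fun p => p.1.card = k + 2 ∧ t ⊆ p.2 ∧ p.1 ≠ t),
          -(incidence p.2 t * incidence p.2 p.1) * cbCoeff Δ Vf (k + 2) p.1 υ := by
      symm
      apply Finset.sum_subset
      · intro p hp
        simp only [Finset.mem_filter] at hp ⊢
        tauto
      · intro p hp hnp
        simp only [Finset.mem_filter] at hp hnp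
        have : ¬ t ⊆ p.2 := by tauto
        rw [incidence_of_not (fun hc => this hc.1)]
        ring
    rw [hS1, hrec]
    ring
  -- step A : pointwise identification
  have hstepA : ∀ t ∈ Δ.faces.filter (fun t => t.card = k + 2),
      (∑ x ∈ Δ.faces.filter (fun x => x.card = k + 1),
        ATsum Δ Vf k σ x * incidence t x) *
      (incidence υ t + ∑ p ∈ Vf.filter (fun p => p.1.card = k + 2),
          -(incidence p.2 t * incidence p.2 p.1) * cbCoeff Δ Vf (k + 2) p.1 υ)
      = if IsCrit Δ Vf t then
          cbCoeff Δ Vf (k + 1) σ t * cbCoeff Δ Vf (k + 2) t υ else 0 := by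
    intro t ht
    have ht' := ht
    simp only [Finset.mem_filter] at ht'
    by_cases hcrit : IsCrit Δ Vf t
    · rw [if_pos hcrit]
      have hnp : ∀ p ∈ Vf, t ≠ p.1 ∧ t ≠ p.2 := by
        obtain ⟨-, -, h | h⟩ := hcrit
        · exact h
        · exfalso
          have := h.1
          omega
      -- G t = HU t
      have hG : incidence υ t + ∑ p ∈ Vf.filter (fun p => p.1.card = k + 2),
          -(incidence p.2 t * incidence p.2 p.1) * cbCoeff Δ Vf (k + 2) p.1 υ
          = cbCoeff Δ Vf (k + 2) t υ := by
        rw [hGrel t ht]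
        have hempty : (Vf.filter (fun p => p.1.card = k + 2)).filter (fun p => p.1 = t)
            = ∅ := by
          ext p
          simp only [Finset.mem_filter, Finset.notMem_empty, iff_false]
          rintro ⟨⟨hp, -⟩, he⟩
          exact (hnp p hp).1 he.symm
        rw [hempty, Finset.sum_empty, add_zero]
      -- μ t = cbCoeff (k+1) σ t
      have hμ : ∑ x ∈ Δ.faces.filter (fun x => x.card = k + 1),
          ATsum Δ Vf k σ x * incidence t x = cbCoeff Δ Vf (k + 1) σ t := by
        rw [cb_eq_mu hV ht'.1 ht'.2 hnp]
        symm
        apply Finset.sum_subset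
        · intro x hx
          simp only [Finset.mem_filter] at hx ⊢
          tauto
        · intro x hx hnx
          simp only [Finset.mem_filter] at hx hnx
          have : ¬ x ⊆ t := by tauto
          rw [incidence_of_not (fun hc => this hc.1), mul_zero]
      rw [hG, hμ]
    · rw [if_neg hcrit]
      have hne : t.Nonempty := by
        rw [← Finset.card_pos, ht'.2]
        omega
      have hpair : ∃ p ∈ Vf, t = p.1 ∨ t = p.2 := by
        by_contra hno
        push_neg at hno
        exact hcrit ⟨ht'.1, hne, Or.inl (fun p hp => by
          have := hno p hp
          tauto)⟩
      obtain ⟨p, hp, hcase⟩ := hpair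
      rcases hcase with hc1 | hc2
      · -- t is the first component : G t = 0
        have hfil : (Vf.filter (fun p => p.1.card = k + 2)).filter (fun p' => p'.1 = t)
            = {p} := by
          ext p'
          simp only [Finset.mem_filter, Finset.mem_singleton]
          constructor
          · rintro ⟨⟨hp', -⟩, he⟩
            exact pair_eq hV.1 hp' hp (Or.inl (by rw [he, hc1]))
          · rintro rfl
            exact ⟨⟨hp, by rw [← hc1, ht'.2]⟩, hc1.symm⟩
        have hsub : t ⊂ p.2 := hc1 ▸ (hV.1.1 p hp).2.2.1
        have hsd : (p.2 \ t).card = 1 := by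
          rw [Finset.card_sdiff_of_subset hsub.subset, (hV.1.1 p hp).2.2.2, ← hc1]
          omega
        have hG : incidence υ t + ∑ p ∈ Vf.filter (fun p => p.1.card = k + 2),
            -(incidence p.2 t * incidence p.2 p.1) * cbCoeff Δ Vf (k + 2) p.1 υ = 0 := by
          rw [hGrel t ht, hfil, Finset.sum_singleton, ← hc1]
          have := incidence_mul_self hsub.subset hsd
          linear_combination (-(cbCoeff Δ Vf (k + 2) t υ)) * this
        rw [hG, mul_zero]
      · -- t is the second component : μ t = 0
        have hpc : p.1.card = k + 1 := by
          have := (hV.1.1 p hp).2.2.2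
          rw [← hc2] at this
          omega
        have hμ0 := mu_zero hV hσ hp hpc
        rw [hc2, hμ0, zero_mul]
  -- step B : the total sum vanishes
  have hT0 : ∑ t ∈ Δ.faces.filter (fun t => t.card = k + 2),
      (∑ x ∈ Δ.faces.filter (fun x => x.card = k + 1),
        ATsum Δ Vf k σ x * incidence t x) *
      (incidence υ t + ∑ p ∈ Vf.filter (fun p => p.1.card = k + 2),
          -(incidence p.2 t * incidence p.2 p.1) * cbCoeff Δ Vf (k + 2) p.1 υ) = 0 := by
    have hexp : ∀ t ∈ Δ.faces.filter (fun t => t.card = k + 2),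
        (∑ x ∈ Δ.faces.filter (fun x => x.card = k + 1),
          ATsum Δ Vf k σ x * incidence t x) *
        (incidence υ t + ∑ p ∈ Vf.filter (fun p => p.1.card = k + 2),
            -(incidence p.2 t * incidence p.2 p.1) * cbCoeff Δ Vf (k + 2) p.1 υ)
        = (∑ x ∈ Δ.faces.filter (fun x => x.card = k + 1),
            ATsum Δ Vf k σ x * incidence t x) * incidence υ t +
          ∑ p ∈ Vf.filter (fun p => p.1.card = k + 2),
            (-(incidence p.2 p.1) * cbCoeff Δ Vf (k + 2) p.1 υ) *
            ((∑ x ∈ Δ.faces.filter (fun x => x.card = k + 1),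
              ATsum Δ Vf k σ x * incidence t x) * incidence p.2 t) := by
      intro t _
      rw [mul_add, Finset.mul_sum]
      congr 1
      apply Finset.sum_congr rfl
      intro p _
      ring
    rw [Finset.sum_congr rfl hexp, Finset.sum_add_distrib, hBig υ hυmem, zero_add,
      Finset.sum_comm]
    apply Finset.sum_eq_zero
    intro p hp
    simp only [Finset.mem_filter] at hp
    rw [← Finset.mul_sum, hBig p.2 ((hV.1.1 p hp.1).2.1), mul_zero]
  -- conclusion
  rw [Finset.sum_congr rfl hstepA] at hT0
  rw [show critC Δ Vf (k + 2) =
    (Δ.faces.filter (fun t => t.card = k + 2)).filter (fun t => IsCrit Δ Vf t) from by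
      rw [critC, Finset.filter_filter]]
  rw [Finset.sum_filter]
  exact hT0

end MorseAux
namespace MorseAux

variable {V : Type*} [LinearOrder V] {Δ : SComplex V} {Vf : Finset (Finset V × Finset V)}

theorem critC_zero : critC Δ Vf 0 = ∅ := by
  ext σ
  simp only [critC, Finset.mem_filter, Finset.notMem_empty, iff_false]
  rintro ⟨-, hc, -, hne, -⟩
  rw [Finset.card_eq_zero] at hc
  exact hne.ne_empty hc

theorem mcb_zero : morseCoboundary Δ Vf 0 = 0 := by
  apply Finsupp.lhom_ext
  intro a b
  rw [morseCoboundary, Finsupp.lsum_single, LinearMap.toSpanSingleton_apply,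
    if_neg (by rw [critC_zero]; exact Finset.notMem_empty a), smul_zero,
    LinearMap.zero_apply]

theorem mcb_single (n : ℕ) (a : Finset V) (b : ℤ) :
    morseCoboundary Δ Vf n (Finsupp.single a b) =
      b • (if a ∈ critC Δ Vf n then
        ∑ τ ∈ critC Δ Vf (n + 1), cbCoeff Δ Vf n a τ • Finsupp.single τ (1 : ℤ)
      else 0) := by
  rw [morseCoboundary, Finsupp.lsum_single, LinearMap.toSpanSingleton_apply]

theorem main (hV : IsGVF Δ Vf) :
    ∀ q : ℕ, (morseCoboundary Δ Vf q).comp (morseCoboundary Δ Vf (q - 1)) = 0 := by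
  intro q
  match q with
  | 0 => rw [show (0 : ℕ) - 1 = 0 from rfl, mcb_zero, LinearMap.comp_zero]
  | 1 => rw [show (1 : ℕ) - 1 = 0 from rfl, mcb_zero, LinearMap.comp_zero]
  | (k + 2) =>
    rw [show (k + 2 : ℕ) - 1 = k + 1 from rfl]
    apply Finsupp.lhom_ext
    intro a b
    rw [LinearMap.comp_apply, LinearMap.zero_apply]
    rw [mcb_single]
    by_cases ha : a ∈ critC Δ Vf (k + 1)
    · rw [if_pos ha]
      rw [map_smul]
      have hinner : (morseCoboundary Δ Vf (k + 2))
          (∑ τ ∈ critC Δ Vf (k + 1 + 1),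
            cbCoeff Δ Vf (k + 1) a τ • Finsupp.single τ (1 : ℤ)) = 0 := by
        rw [map_sum]
        have hterm : ∀ τ ∈ critC Δ Vf (k + 1 + 1),
            (morseCoboundary Δ Vf (k + 2))
              (cbCoeff Δ Vf (k + 1) a τ • Finsupp.single τ (1 : ℤ))
            = ∑ υ ∈ critC Δ Vf (k + 3),
                (cbCoeff Δ Vf (k + 1) a τ * cbCoeff Δ Vf (k + 2) τ υ) •
                  Finsupp.single υ (1 : ℤ) := by
          intro τ hτ
          rw [map_smul, mcb_single, one_smul, if_pos hτ, Finset.smul_sum]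
          apply Finset.sum_congr rfl
          intro υ _
          rw [smul_smul]
        rw [Finset.sum_congr rfl hterm, Finset.sum_comm]
        apply Finset.sum_eq_zero
        intro υ hυ
        rw [← Finset.sum_smul, key hV k ha hυ, zero_smul]
      rw [hinner, smul_zero]
    · rw [if_neg ha, smul_zero, map_zero]

end MorseAux

/-- The composition of consecutive Morse coboundary operators vanishes. -/
theorem statement_3 (Δ : SComplex V) (Vf : Finset (Finset V × Finset V))
    (hV : IsGVF Δ Vf) :
    ∀ q : ℕ, (morseCoboundary Δ Vf q).comp (morseCoboundary Δ Vf (q - 1)) = 0 :=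
  MorseAux.main hV
end

section
/- Let V be a discrete vector field on a simplicial complex Δ. Then there exists no nontrivial closed V-trajectory if and only if there exists no nontrivial closed co-V-trajectory. -/
open scoped Classical

variable {V : Type*} [LinearOrder V]

section Aux

variable {Δ : SComplex V} {Vf : Finset (Finset V × Finset V)}

private lemma fcongr {n : ℕ} {X : Sort*} (f : Fin n → X) {i j : Fin n} (h : i.1 = j.1) :
    f i = f j := congrArg f (Fin.ext h)

private lemma hmodPos {r j : ℕ} (hr : 0 < r) (hj : j < r) :
    (2 * r - 1 - j) % r = r - 1 - j := by
  have h1 : 2 * r - 1 - j = (r - 1 - j) + r := by omega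
  rw [h1, Nat.add_mod_right]; exact Nat.mod_eq_of_lt (by omega)

private lemma hmodLast {r : ℕ} (hr : 0 < r) :
    (2 * r - 1 - r) % r = r - 1 := by
  have h1 : 2 * r - 1 - r = r - 1 := by omega
  rw [h1]; exact Nat.mod_eq_of_lt (by omega)

private lemma coToTraj (hV : IsDVF Δ Vf) {q : ℕ} {s : Finset V}
    (Q : CoTraj Δ Vf q s s) (hr : 0 < Q.r) :
    ∃ (q' : ℕ) (s' : Finset V) (P : Traj Δ Vf q' s' s'), 0 < P.r := by
  have hγinj : ∀ i j : Fin Q.r, Q.γ i = Q.γ j → Q.β i.succ = Q.β j.succ := by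
    intro i j h
    by_cases hpq : ((Q.β i.succ, Q.γ i) : Finset V × Finset V) = (Q.β j.succ, Q.γ j)
    · exact congrArg Prod.fst hpq
    · exact absurd h (hV.2 _ (Q.vpair i) _ (Q.vpair j) hpq).2.2.2
  refine ⟨q + 1, Q.γ ⟨Q.r - 1, by omega⟩,
    { r := Q.r
      β := fun j => Q.γ ⟨(2 * Q.r - 1 - (j : ℕ)) % Q.r, Nat.mod_lt _ hr⟩
      α := fun j => Q.β ⟨Q.r - 1 - (j : ℕ), by omega⟩
      βmem := fun j => Q.γmem _
      αmem := fun j => Q.βmem _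
      βcard := fun j => Q.γcard _
      αcard := fun j => Q.βcard _
      first := ?_
      last := ?_
      sub := ?_
      vpair := ?_
      αne := ?_
      βne := ?_ }, hr⟩
  · refine fcongr Q.γ ?_
    show (2 * Q.r - 1 - ((0 : Fin (Q.r + 1)) : ℕ)) % Q.r = Q.r - 1
    rw [Fin.val_zero, hmodPos hr (by omega)]
    omega
  · refine fcongr Q.γ ?_
    show (2 * Q.r - 1 - ((Fin.last Q.r : Fin (Q.r + 1)) : ℕ)) % Q.r = Q.r - 1
    rw [Fin.val_last, hmodLast hr]
  · intro j
    beta_reduce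
    have h := Q.sub (⟨Q.r - 1 - (j : ℕ), by omega⟩ : Fin Q.r)
    have e : Q.β (Fin.castSucc (⟨Q.r - 1 - (j : ℕ), by omega⟩ : Fin Q.r))
        = Q.β (⟨Q.r - 1 - (j : ℕ), by omega⟩ : Fin (Q.r + 1)) := fcongr Q.β (by simp)
    rw [e] at h
    have e2 : Q.γ (⟨(2 * Q.r - 1 - ((Fin.castSucc j : Fin (Q.r + 1)) : ℕ)) % Q.r,
        Nat.mod_lt _ hr⟩ : Fin Q.r) = Q.γ (⟨Q.r - 1 - (j : ℕ), by omega⟩ : Fin Q.r) := by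
      refine fcongr Q.γ ?_
      show (2 * Q.r - 1 - ((Fin.castSucc j : Fin (Q.r + 1)) : ℕ)) % Q.r = Q.r - 1 - (j : ℕ)
      rw [Fin.coe_castSucc, hmodPos hr (by omega)]
    rw [e2]
    exact h
  · intro j
    beta_reduce
    by_cases hc : (j : ℕ) + 1 < Q.r
    · have h := Q.vpair (⟨Q.r - 2 - (j : ℕ), by omega⟩ : Fin Q.r)
      have e1 : Q.β (Fin.succ (⟨Q.r - 2 - (j : ℕ), by omega⟩ : Fin Q.r))
          = Q.β (⟨Q.r - 1 - (j : ℕ), by omega⟩ : Fin (Q.r + 1)) :=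
        fcongr Q.β (by show Q.r - 2 - (j : ℕ) + 1 = Q.r - 1 - (j : ℕ); omega)
      have e2 : Q.γ (⟨(2 * Q.r - 1 - ((Fin.succ j : Fin (Q.r + 1)) : ℕ)) % Q.r,
          Nat.mod_lt _ hr⟩ : Fin Q.r) = Q.γ (⟨Q.r - 2 - (j : ℕ), by omega⟩ : Fin Q.r) := by
        refine fcongr Q.γ ?_
        show (2 * Q.r - 1 - ((Fin.succ j : Fin (Q.r + 1)) : ℕ)) % Q.r = Q.r - 2 - (j : ℕ)
        rw [Fin.val_succ, hmodPos hr (by omega)]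
        omega
      rw [e1] at h; rw [e2]
      exact h
    · have hj : (j : ℕ) = Q.r - 1 := by omega
      have h := Q.vpair (⟨Q.r - 1, by omega⟩ : Fin Q.r)
      have e1 : Q.β (Fin.succ (⟨Q.r - 1, by omega⟩ : Fin Q.r))
          = Q.β (⟨Q.r - 1 - (j : ℕ), by omega⟩ : Fin (Q.r + 1)) := by
        have ea : Q.β (Fin.succ (⟨Q.r - 1, by omega⟩ : Fin Q.r)) = Q.β (Fin.last Q.r) :=
          fcongr Q.β (by show Q.r - 1 + 1 = Q.r; omega)
        have eb : Q.β (⟨Q.r - 1 - (j : ℕ), by omega⟩ : Fin (Q.r + 1)) = Q.β 0 := by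
          refine fcongr Q.β ?_
          show Q.r - 1 - (j : ℕ) = ((0 : Fin (Q.r + 1)) : ℕ)
          rw [Fin.val_zero]; omega
        rw [ea, eb, Q.first, Q.last]
      have e2 : Q.γ (⟨(2 * Q.r - 1 - ((Fin.succ j : Fin (Q.r + 1)) : ℕ)) % Q.r,
          Nat.mod_lt _ hr⟩ : Fin Q.r) = Q.γ (⟨Q.r - 1, by omega⟩ : Fin Q.r) := by
        refine fcongr Q.γ ?_
        show (2 * Q.r - 1 - ((Fin.succ j : Fin (Q.r + 1)) : ℕ)) % Q.r = Q.r - 1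
        rw [Fin.val_succ, hj]
        have h5 : Q.r - 1 + 1 = Q.r := by omega
        rw [h5, hmodLast hr]
      rw [e1] at h; rw [e2]
      exact h
  · intro j hlt
    beta_reduce
    have h : Q.β (⟨Q.r - 1 - (((⟨(j : ℕ) + 1, hlt⟩ : Fin Q.r) : Fin Q.r) : ℕ), by omega⟩ : Fin (Q.r + 1))
        ≠ Q.β (⟨Q.r - 1 - (j : ℕ), by omega⟩ : Fin (Q.r + 1)) := by
      have h0 := Q.βne (⟨Q.r - 2 - (j : ℕ), by omega⟩ : Fin Q.r)
      have e1 : Q.β (Fin.castSucc (⟨Q.r - 2 - (j : ℕ), by omega⟩ : Fin Q.r))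
          = Q.β (⟨Q.r - 1 - (((⟨(j : ℕ) + 1, hlt⟩ : Fin Q.r) : Fin Q.r) : ℕ), by omega⟩ : Fin (Q.r + 1)) := by
        refine fcongr Q.β ?_
        show Q.r - 2 - (j : ℕ) = Q.r - 1 - ((j : ℕ) + 1)
        omega
      have e2 : Q.β (Fin.succ (⟨Q.r - 2 - (j : ℕ), by omega⟩ : Fin Q.r))
          = Q.β (⟨Q.r - 1 - (j : ℕ), by omega⟩ : Fin (Q.r + 1)) :=
        fcongr Q.β (by show Q.r - 2 - (j : ℕ) + 1 = Q.r - 1 - (j : ℕ); omega)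
      rw [e1, e2] at h0
      exact h0
    exact h
  · intro j he
    beta_reduce at he
    by_cases hc : (j : ℕ) + 1 < Q.r
    · have h2 := hγinj (⟨Q.r - 2 - (j : ℕ), by omega⟩ : Fin Q.r) (⟨Q.r - 1 - (j : ℕ), by omega⟩ : Fin Q.r) (by
        have e1 : Q.γ (⟨Q.r - 2 - (j : ℕ), by omega⟩ : Fin Q.r)
            = Q.γ (⟨(2 * Q.r - 1 - ((Fin.succ j : Fin (Q.r + 1)) : ℕ)) % Q.r, Nat.mod_lt _ hr⟩ : Fin Q.r) := by
          refine fcongr Q.γ ?_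
          show Q.r - 2 - (j : ℕ) = (2 * Q.r - 1 - ((Fin.succ j : Fin (Q.r + 1)) : ℕ)) % Q.r
          rw [Fin.val_succ, hmodPos hr (by omega)]; omega
        have e2 : Q.γ (⟨Q.r - 1 - (j : ℕ), by omega⟩ : Fin Q.r)
            = Q.γ (⟨(2 * Q.r - 1 - ((Fin.castSucc j : Fin (Q.r + 1)) : ℕ)) % Q.r, Nat.mod_lt _ hr⟩ : Fin Q.r) := by
          refine fcongr Q.γ ?_
          show Q.r - 1 - (j : ℕ) = (2 * Q.r - 1 - ((Fin.castSucc j : Fin (Q.r + 1)) : ℕ)) % Q.r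
          rw [Fin.coe_castSucc, hmodPos hr (by omega)]
        rw [e1, e2]; exact he)
      have h3 := Q.βne (⟨Q.r - 1 - (j : ℕ), by omega⟩ : Fin Q.r)
      apply h3
      have e3 : Q.β (Fin.castSucc (⟨Q.r - 1 - (j : ℕ), by omega⟩ : Fin Q.r))
          = Q.β (Fin.succ (⟨Q.r - 2 - (j : ℕ), by omega⟩ : Fin Q.r)) :=
        fcongr Q.β (by show Q.r - 1 - (j : ℕ) = Q.r - 2 - (j : ℕ) + 1; omega)
      rw [e3, h2]
    · have hj : (j : ℕ) = Q.r - 1 := by omega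
      have h2 := hγinj (⟨Q.r - 1, by omega⟩ : Fin Q.r) (⟨Q.r - 1 - (j : ℕ), by omega⟩ : Fin Q.r) (by
        have e1 : Q.γ (⟨Q.r - 1, by omega⟩ : Fin Q.r)
            = Q.γ (⟨(2 * Q.r - 1 - ((Fin.succ j : Fin (Q.r + 1)) : ℕ)) % Q.r, Nat.mod_lt _ hr⟩ : Fin Q.r) := by
          refine fcongr Q.γ ?_
          show Q.r - 1 = (2 * Q.r - 1 - ((Fin.succ j : Fin (Q.r + 1)) : ℕ)) % Q.r
          rw [Fin.val_succ, hj]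
          have h5 : Q.r - 1 + 1 = Q.r := by omega
          rw [h5, hmodLast hr]
        have e2 : Q.γ (⟨Q.r - 1 - (j : ℕ), by omega⟩ : Fin Q.r)
            = Q.γ (⟨(2 * Q.r - 1 - ((Fin.castSucc j : Fin (Q.r + 1)) : ℕ)) % Q.r, Nat.mod_lt _ hr⟩ : Fin Q.r) := by
          refine fcongr Q.γ ?_
          show Q.r - 1 - (j : ℕ) = (2 * Q.r - 1 - ((Fin.castSucc j : Fin (Q.r + 1)) : ℕ)) % Q.r
          rw [Fin.coe_castSucc, hmodPos hr (by omega)]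
        rw [e1, e2]; exact he)
      have h3 := Q.βne (⟨0, hr⟩ : Fin Q.r)
      apply h3
      have e3 : Q.β (Fin.castSucc (⟨0, hr⟩ : Fin Q.r)) = Q.β (Fin.succ (⟨Q.r - 1, by omega⟩ : Fin Q.r)) := by
        have ea : Q.β (Fin.castSucc (⟨0, hr⟩ : Fin Q.r)) = Q.β 0 := fcongr Q.β (by simp)
        have eb : Q.β (Fin.succ (⟨Q.r - 1, by omega⟩ : Fin Q.r)) = Q.β (Fin.last Q.r) :=
          fcongr Q.β (by show Q.r - 1 + 1 = Q.r; omega)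
        rw [ea, eb, Q.first, Q.last]
      have e4 : Q.β (Fin.succ (⟨0, hr⟩ : Fin Q.r)) = Q.β (Fin.succ (⟨Q.r - 1 - (j : ℕ), by omega⟩ : Fin Q.r)) :=
        fcongr Q.β (by show 0 + 1 = Q.r - 1 - (j : ℕ) + 1; omega)
      rw [e3, h2, e4]

private lemma trajToCo (hV : IsDVF Δ Vf) {q : ℕ} {s : Finset V}
    (P : Traj Δ Vf q s s) (hr : 0 < P.r) :
    ∃ (q' : ℕ) (s' : Finset V) (Q : CoTraj Δ Vf q' s' s'), 0 < Q.r := by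
  have hr2 : 2 ≤ P.r := by
    by_contra hc
    have hr1 : P.r = 1 := by omega
    have h := P.βne (⟨0, hr⟩ : Fin P.r)
    apply h
    have ea : P.β (Fin.succ (⟨0, hr⟩ : Fin P.r)) = P.β (Fin.last P.r) :=
      fcongr P.β (by show 0 + 1 = P.r; omega)
    have eb : P.β (Fin.castSucc (⟨0, hr⟩ : Fin P.r)) = P.β 0 := fcongr P.β (by simp)
    rw [ea, eb, P.first, P.last]
  have hq : q ≠ 0 := by
    intro hq0
    have h : P.α ⟨(((⟨0, hr⟩ : Fin P.r) : Fin P.r) : ℕ) + 1, by show 0 + 1 < P.r; omega⟩ ≠ P.α ⟨0, hr⟩ :=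
      P.αne (⟨0, hr⟩ : Fin P.r) (by show 0 + 1 < P.r; omega)
    apply h
    have h1 : (P.α ⟨(((⟨0, hr⟩ : Fin P.r) : Fin P.r) : ℕ) + 1, by show 0 + 1 < P.r; omega⟩) = ∅ :=
      Finset.card_eq_zero.mp (by rw [P.αcard]; omega)
    have h2 : (P.α ⟨0, hr⟩) = ∅ := Finset.card_eq_zero.mp (by rw [P.αcard]; omega)
    rw [h1, h2]
  obtain ⟨q', rfl⟩ : ∃ q', q = q' + 1 := ⟨q - 1, by omega⟩
  have hαinj : ∀ i j : Fin P.r, P.α i = P.α j → P.β i.succ = P.β j.succ := by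
    intro i j h
    by_cases hpq : ((P.α i, P.β i.succ) : Finset V × Finset V) = (P.α j, P.β j.succ)
    · exact congrArg Prod.snd hpq
    · exact absurd h (hV.2 _ (P.vpair i) _ (P.vpair j) hpq).1
  refine ⟨q', P.α ⟨P.r - 1, by omega⟩,
    { r := P.r
      β := fun j => P.α ⟨(2 * P.r - 1 - (j : ℕ)) % P.r, Nat.mod_lt _ hr⟩
      γ := fun j => P.β ⟨P.r - 1 - (j : ℕ), by omega⟩
      βmem := fun j => P.αmem _
      γmem := fun j => P.βmem _
      βcard := fun j => P.αcard _
      γcard := fun j => P.βcard _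
      first := ?_
      last := ?_
      sub := ?_
      vpair := ?_
      βne := ?_ }, hr⟩
  · refine fcongr P.α ?_
    show (2 * P.r - 1 - ((0 : Fin (P.r + 1)) : ℕ)) % P.r = P.r - 1
    rw [Fin.val_zero, hmodPos hr (by omega)]
    omega
  · refine fcongr P.α ?_
    show (2 * P.r - 1 - ((Fin.last P.r : Fin (P.r + 1)) : ℕ)) % P.r = P.r - 1
    rw [Fin.val_last, hmodLast hr]
  · intro j
    beta_reduce
    have h := P.sub (⟨P.r - 1 - (((Fin.castSucc j : Fin (P.r + 1)) : ℕ)), by omega⟩ : Fin P.r)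
    have e : P.β (Fin.castSucc (⟨P.r - 1 - (((Fin.castSucc j : Fin (P.r + 1)) : ℕ)), by omega⟩ : Fin P.r))
        = P.β (⟨P.r - 1 - (j : ℕ), by omega⟩ : Fin (P.r + 1)) := by
      refine fcongr P.β ?_
      show P.r - 1 - (((Fin.castSucc j : Fin (P.r + 1)) : ℕ)) = P.r - 1 - (j : ℕ)
      rw [Fin.coe_castSucc]
    rw [e] at h
    have e2 : P.α (⟨(2 * P.r - 1 - ((Fin.castSucc j : Fin (P.r + 1)) : ℕ)) % P.r,
        Nat.mod_lt _ hr⟩ : Fin P.r)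
        = P.α (⟨P.r - 1 - (((Fin.castSucc j : Fin (P.r + 1)) : ℕ)), by omega⟩ : Fin P.r) := by
      refine fcongr P.α ?_
      show (2 * P.r - 1 - ((Fin.castSucc j : Fin (P.r + 1)) : ℕ)) % P.r
          = P.r - 1 - (((Fin.castSucc j : Fin (P.r + 1)) : ℕ))
      rw [Fin.coe_castSucc, hmodPos hr (by omega)]
    rw [e2]
    exact h
  · intro j
    beta_reduce
    by_cases hc : (j : ℕ) + 1 < P.r
    · have h := P.vpair (⟨P.r - 2 - (j : ℕ), by omega⟩ : Fin P.r)
      have e1 : P.β (Fin.succ (⟨P.r - 2 - (j : ℕ), by omega⟩ : Fin P.r))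
          = P.β (⟨P.r - 1 - (j : ℕ), by omega⟩ : Fin (P.r + 1)) :=
        fcongr P.β (by show P.r - 2 - (j : ℕ) + 1 = P.r - 1 - (j : ℕ); omega)
      have e2 : P.α (⟨(2 * P.r - 1 - ((Fin.succ j : Fin (P.r + 1)) : ℕ)) % P.r,
          Nat.mod_lt _ hr⟩ : Fin P.r) = P.α (⟨P.r - 2 - (j : ℕ), by omega⟩ : Fin P.r) := by
        refine fcongr P.α ?_
        show (2 * P.r - 1 - ((Fin.succ j : Fin (P.r + 1)) : ℕ)) % P.r = P.r - 2 - (j : ℕ)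
        rw [Fin.val_succ, hmodPos hr (by omega)]
        omega
      rw [e1] at h; rw [e2]
      exact h
    · have hj : (j : ℕ) = P.r - 1 := by omega
      have h := P.vpair (⟨P.r - 1, by omega⟩ : Fin P.r)
      have e1 : P.β (Fin.succ (⟨P.r - 1, by omega⟩ : Fin P.r))
          = P.β (⟨P.r - 1 - (j : ℕ), by omega⟩ : Fin (P.r + 1)) := by
        have ea : P.β (Fin.succ (⟨P.r - 1, by omega⟩ : Fin P.r)) = P.β (Fin.last P.r) :=
          fcongr P.β (by show P.r - 1 + 1 = P.r; omega)
        have eb : P.β (⟨P.r - 1 - (j : ℕ), by omega⟩ : Fin (P.r + 1)) = P.β 0 := by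
          refine fcongr P.β ?_
          show P.r - 1 - (j : ℕ) = ((0 : Fin (P.r + 1)) : ℕ)
          rw [Fin.val_zero]; omega
        rw [ea, eb, P.first, P.last]
      have e2 : P.α (⟨(2 * P.r - 1 - ((Fin.succ j : Fin (P.r + 1)) : ℕ)) % P.r,
          Nat.mod_lt _ hr⟩ : Fin P.r) = P.α (⟨P.r - 1, by omega⟩ : Fin P.r) := by
        refine fcongr P.α ?_
        show (2 * P.r - 1 - ((Fin.succ j : Fin (P.r + 1)) : ℕ)) % P.r = P.r - 1
        rw [Fin.val_succ, hj]
        have h5 : P.r - 1 + 1 = P.r := by omega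
        rw [h5, hmodLast hr]
      rw [e1] at h; rw [e2]
      exact h
  · intro j he
    beta_reduce at he
    by_cases hc : (j : ℕ) + 1 < P.r
    · have h : P.α (⟨P.r - 2 - (j : ℕ) + 1, by omega⟩ : Fin P.r)
          ≠ P.α (⟨P.r - 2 - (j : ℕ), by omega⟩ : Fin P.r) := by
        have h0 : P.α ⟨(((⟨P.r - 2 - (j : ℕ), by omega⟩ : Fin P.r) : Fin P.r) : ℕ) + 1,
              by show P.r - 2 - (j : ℕ) + 1 < P.r; omega⟩
            ≠ P.α (⟨P.r - 2 - (j : ℕ), by omega⟩ : Fin P.r) :=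
          P.αne (⟨P.r - 2 - (j : ℕ), by omega⟩ : Fin P.r) (by show P.r - 2 - (j : ℕ) + 1 < P.r; omega)
        exact h0
      apply h
      have e1 : P.α (⟨P.r - 2 - (j : ℕ) + 1, by omega⟩ : Fin P.r)
          = P.α (⟨(2 * P.r - 1 - ((Fin.castSucc j : Fin (P.r + 1)) : ℕ)) % P.r, Nat.mod_lt _ hr⟩ : Fin P.r) := by
        refine fcongr P.α ?_
        show P.r - 2 - (j : ℕ) + 1 = (2 * P.r - 1 - ((Fin.castSucc j : Fin (P.r + 1)) : ℕ)) % P.r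
        rw [Fin.coe_castSucc, hmodPos hr (by omega)]; omega
      have e2 : P.α (⟨P.r - 2 - (j : ℕ), by omega⟩ : Fin P.r)
          = P.α (⟨(2 * P.r - 1 - ((Fin.succ j : Fin (P.r + 1)) : ℕ)) % P.r, Nat.mod_lt _ hr⟩ : Fin P.r) := by
        refine fcongr P.α ?_
        show P.r - 2 - (j : ℕ) = (2 * P.r - 1 - ((Fin.succ j : Fin (P.r + 1)) : ℕ)) % P.r
        rw [Fin.val_succ, hmodPos hr (by omega)]; omega
      rw [e1, e2]
      exact he
    · have hj : (j : ℕ) = P.r - 1 := by omega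
      have h2 := hαinj (⟨0, hr⟩ : Fin P.r) (⟨P.r - 1, by omega⟩ : Fin P.r) (by
        have e1 : P.α (⟨0, hr⟩ : Fin P.r)
            = P.α (⟨(2 * P.r - 1 - ((Fin.castSucc j : Fin (P.r + 1)) : ℕ)) % P.r, Nat.mod_lt _ hr⟩ : Fin P.r) := by
          refine fcongr P.α ?_
          show (0 : ℕ) = (2 * P.r - 1 - ((Fin.castSucc j : Fin (P.r + 1)) : ℕ)) % P.r
          rw [Fin.coe_castSucc, hmodPos hr (by omega)]; omega
        have e2 : P.α (⟨P.r - 1, by omega⟩ : Fin P.r)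
            = P.α (⟨(2 * P.r - 1 - ((Fin.succ j : Fin (P.r + 1)) : ℕ)) % P.r, Nat.mod_lt _ hr⟩ : Fin P.r) := by
          refine fcongr P.α ?_
          show P.r - 1 = (2 * P.r - 1 - ((Fin.succ j : Fin (P.r + 1)) : ℕ)) % P.r
          rw [Fin.val_succ, hj]
          have h5 : P.r - 1 + 1 = P.r := by omega
          rw [h5, hmodLast hr]
        rw [e1, e2]
        exact he)
      have h3 := P.βne (⟨0, hr⟩ : Fin P.r)
      apply h3
      have ea : P.β (Fin.succ (⟨P.r - 1, by omega⟩ : Fin P.r)) = P.β (Fin.last P.r) :=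
        fcongr P.β (by show P.r - 1 + 1 = P.r; omega)
      have eb : P.β (Fin.castSucc (⟨0, hr⟩ : Fin P.r)) = P.β 0 := fcongr P.β (by simp)
      rw [h2, ea, eb, P.first, P.last]

end Aux


/-- There is no nontrivial closed trajectory iff there is no nontrivial closed
co-trajectory. -/
theorem statement_4 (Δ : SComplex V) (Vf : Finset (Finset V × Finset V))
    (hV : IsDVF Δ Vf) :
    (¬ ∃ (q : ℕ) (s : Finset V) (P : Traj Δ Vf q s s), 0 < P.r) ↔
      ¬ ∃ (q : ℕ) (s : Finset V) (Q : CoTraj Δ Vf q s s), 0 < Q.r := by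
  constructor
  · intro h
    rintro ⟨q, s, Q, hQ⟩
    exact h (coToTraj hV Q hQ)
  · intro h
    rintro ⟨q, s, P, hP⟩
    exact h (trajToCo hV P hP)
end
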